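/- arXiv:2402.16583 — 9 statements merged into one kernel-verified Lean document; each statement's English description precedes it below -/
import Mathlib

section
/- Let S = K[x_1,…,x_n] be a standard graded polynomial ring over a field K and I ⊂ S a proper nonzero graded ideal. Then v(I) ≥ α(I) − c(I), where c(I) := max{α(p) : p ∈ Ass(I)}. -/
open MvPolynomial

/-- A graded (homogeneous) ideal: one generated by homogeneous polynomials. -/
def IsHomogeneousIdeal {K : Type*} [Field K] {n : ℕ}
    (I : Ideal (MvPolynomial (Fin n) K)) : Prop :=
  ∃ G : Set (MvPolynomial (Fin n) K),
    (∀ f ∈ G, ∃ d, f.IsHomogeneous d) ∧ I = Ideal.span G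

/-- `Ass(I)`: the associated primes of `S/I`. -/
def Ass {K : Type*} [Field K] {n : ℕ} (I : Ideal (MvPolynomial (Fin n) K)) :
    Set (Ideal (MvPolynomial (Fin n) K)) :=
  associatedPrimes (MvPolynomial (Fin n) K) (MvPolynomial (Fin n) K ⧸ I)

/-- The local v-number `v_p(I)`. -/
noncomputable def vNumberAt {K : Type*} [Field K] {n : ℕ}
    (I p : Ideal (MvPolynomial (Fin n) K)) : ℕ :=
  sInf {d | ∃ f : MvPolynomial (Fin n) K, f.IsHomogeneous d ∧
    I.colon (Ideal.span {f}) = p}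

/-- The v-number `v(I)`. -/
noncomputable def vNumber {K : Type*} [Field K] {n : ℕ}
    (I : Ideal (MvPolynomial (Fin n) K)) : ℕ :=
  sInf {d | ∃ f : MvPolynomial (Fin n) K, ∃ p ∈ Ass I, f.IsHomogeneous d ∧
    I.colon (Ideal.span {f}) = p}

/-- `α(J)`: the least degree of a nonzero element of `J`. -/
noncomputable def alphaNum {K : Type*} [Field K] {n : ℕ}
    (J : Ideal (MvPolynomial (Fin n) K)) : ℕ :=
  sInf {d | ∃ f ∈ J, f ≠ 0 ∧ f.totalDegree = d}

/-- `c(I) = max{α(p) : p ∈ Ass(I)}`. -/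
noncomputable def cNum {K : Type*} [Field K] {n : ℕ}
    (I : Ideal (MvPolynomial (Fin n) K)) : ℕ :=
  sSup (alphaNum '' Ass I)

attribute [local instance] MvPolynomial.gradedAlgebra

/-- Key existence lemma: a proper graded ideal has a homogeneous witness for an
associated prime. -/
lemma exists_homog_witness {K : Type*} [Field K] {n : ℕ}
    (I : Ideal (MvPolynomial (Fin n) K))
    (hhom : IsHomogeneousIdeal I) (hproper : I ≠ ⊤) :
    ∃ (d : ℕ) (f : MvPolynomial (Fin n) K), f.IsHomogeneous d ∧
      I.colon (Ideal.span {f}) ∈ Ass I := by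
  classical
  have hI : Ideal.IsHomogeneous (homogeneousSubmodule (Fin n) K) I := by
    obtain ⟨G, hG, rfl⟩ := hhom
    exact Ideal.homogeneous_span _ G (fun x hx => by
      obtain ⟨d, hd⟩ := hG x hx
      exact ⟨d, (mem_homogeneousSubmodule d x).2 hd⟩)
  set S : Set (Ideal (MvPolynomial (Fin n) K)) :=
    {J | ∃ (f : MvPolynomial (Fin n) K) (d : ℕ), f.IsHomogeneous d ∧ f ∉ I ∧
      J = I.colon (Ideal.span {f})} with hS
  have hSne : S.Nonempty :=
    ⟨I.colon (Ideal.span {(1 : MvPolynomial (Fin n) K)}), 1, 0, isHomogeneous_one _ _,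
      fun h => hproper ((Ideal.eq_top_iff_one I).2 h), by rfl⟩
  obtain ⟨J, hJS, hmax⟩ :=
    set_has_maximal_iff_noetherian.mpr (by infer_instance) S hSne
  obtain ⟨f, d, hf, hfI, rfl⟩ := hJS
  have hfmem : f ∈ homogeneousSubmodule (Fin n) K d := (mem_homogeneousSubmodule d f).2 hf
  have hJtop : I.colon (Ideal.span {f}) ≠ ⊤ := by
    intro h
    apply hfI
    have : (1 : MvPolynomial (Fin n) K) ∈ I.colon (Ideal.span {f}) := h ▸ Submodule.mem_top
    simpa using Ideal.mem_colon_span_singleton.1 this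
  have hJhom : Ideal.IsHomogeneous (homogeneousSubmodule (Fin n) K)
      (I.colon (Ideal.span {f})) := by
    intro i r hr
    rw [Ideal.mem_colon_span_singleton] at hr ⊢
    have key : (DirectSum.decompose (homogeneousSubmodule (Fin n) K) (r * f) (i + d) :
        MvPolynomial (Fin n) K) =
        (DirectSum.decompose (homogeneousSubmodule (Fin n) K) r i : MvPolynomial (Fin n) K) * f :=
      DirectSum.coe_decompose_mul_add_of_right_mem _ hfmem
    rw [← key]
    exact hI _ hr
  have hJprime : (I.colon (Ideal.span {f})).IsPrime := by
    refine hJhom.isPrime_of_homogeneous_mem_or_mem hJtop ?_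
    intro x y hx hy hxy
    by_contra hcon
    push_neg at hcon
    obtain ⟨hxJ, hyJ⟩ := hcon
    obtain ⟨dy, hdy⟩ := hy
    have hyfI : y * f ∉ I := fun h => hyJ (Ideal.mem_colon_span_singleton.2 h)
    have hmem : I.colon (Ideal.span {y * f}) ∈ S :=
      ⟨y * f, dy + d, ((mem_homogeneousSubmodule _ _).1 hdy).mul hf, hyfI, rfl⟩
    have hle : I.colon (Ideal.span {f}) ≤ I.colon (Ideal.span {y * f}) := by
      intro r hr
      rw [Ideal.mem_colon_span_singleton] at hr ⊢
      rw [show r * (y * f) = y * (r * f) by ring]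
      exact Ideal.mul_mem_left _ _ hr
    have heq : I.colon (Ideal.span {y * f}) = I.colon (Ideal.span {f}) := by
      by_contra hneq
      exact hmax _ hmem (lt_of_le_of_ne hle (Ne.symm hneq))
    apply hxJ
    rw [← heq, Ideal.mem_colon_span_singleton, show x * (y * f) = (x * y) * f by ring]
    exact Ideal.mem_colon_span_singleton.1 hxy
  refine ⟨d, f, hf, isAssociatedPrime_iff.2 ⟨hJprime, Ideal.Quotient.mk I f, ?_⟩⟩
  ext r
  rw [Ideal.mem_colon_span_singleton, Submodule.mem_colon_singleton, Submodule.mem_bot,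
    show r • Ideal.Quotient.mk I f = Ideal.Quotient.mk I (r * f) from rfl,
    Ideal.Quotient.eq_zero_iff_mem]

/-- Any associated prime of `S/I` contains `I`. -/
lemma le_of_mem_Ass {K : Type*} [Field K] {n : ℕ}
    {I q : Ideal (MvPolynomial (Fin n) K)} (hq : q ∈ Ass I) : I ≤ q := by
  obtain ⟨hq1, m, rfl⟩ := hq
  intro r hr
  refine Ideal.le_radical ?_
  rw [Submodule.mem_colon]
  intro x _
  obtain ⟨s, rfl⟩ := Ideal.Quotient.mk_surjective x
  show Ideal.Quotient.mk I (r * s) ∈ ⊥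
  rw [Submodule.mem_bot, Ideal.Quotient.eq_zero_iff_mem]
  exact Ideal.mul_mem_right _ _ hr

/-- For a proper nonzero graded ideal `I`, `v(I) ≥ α(I) − c(I)`. -/
theorem stmt1 {K : Type*} [Field K] {n : ℕ}
    (I : Ideal (MvPolynomial (Fin n) K))
    (hhom : IsHomogeneousIdeal I) (hproper : I ≠ ⊤) (hne : I ≠ ⊥) :
    (alphaNum I : ℤ) - (cNum I : ℤ) ≤ (vNumber I : ℤ) := by
  classical
  obtain ⟨d0, f0, hf0, hp0⟩ := exists_homog_witness I hhom hproper
  have hvne : {d | ∃ f : MvPolynomial (Fin n) K, ∃ p ∈ Ass I, f.IsHomogeneous d ∧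
      I.colon (Ideal.span {f}) = p}.Nonempty := ⟨d0, f0, _, hp0, hf0, rfl⟩
  obtain ⟨f, p, hpAss, hf, hcolon⟩ := Nat.sInf_mem hvne
  have hprime : p.IsPrime := hpAss.1
  have hfne : f ≠ 0 := by
    rintro rfl
    apply hprime.ne_top
    rw [← hcolon]
    ext r
    simp [Ideal.mem_colon_span_singleton]
  have hIp : I ≤ p := le_of_mem_Ass hpAss
  obtain ⟨g, hgI, hgne⟩ : ∃ g ∈ I, g ≠ 0 := by
    by_contra h
    push_neg at h
    exact hne (le_bot_iff.1 fun x hx => (Submodule.mem_bot _).2 (h x hx))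
  have hsetI : {e | ∃ h ∈ I, h ≠ 0 ∧ MvPolynomial.totalDegree h = e}.Nonempty :=
    ⟨_, g, hgI, hgne, rfl⟩
  have hsetp : {e | ∃ h ∈ p, h ≠ 0 ∧ MvPolynomial.totalDegree h = e}.Nonempty :=
    ⟨_, g, hIp hgI, hgne, rfl⟩
  obtain ⟨g0, hg0p, hg0ne, hg0deg⟩ := Nat.sInf_mem hsetp
  have hmul : g0 * f ∈ I := by
    rw [← hcolon] at hg0p
    exact Ideal.mem_colon_span_singleton.1 hg0p
  have hmulne : g0 * f ≠ 0 := mul_ne_zero hg0ne hfne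
  have h1 : alphaNum I ≤ (g0 * f).totalDegree := Nat.sInf_le ⟨g0 * f, hmul, hmulne, rfl⟩
  have h2 : (g0 * f).totalDegree ≤ alphaNum p + vNumber I := by
    calc (g0 * f).totalDegree ≤ g0.totalDegree + f.totalDegree := totalDegree_mul _ _
      _ = alphaNum p + vNumber I := by rw [hg0deg, hf.totalDegree hfne]; rfl
  have h3 : alphaNum p ≤ cNum I := by
    apply le_csSup
    · refine ⟨alphaNum I, ?_⟩
      rintro e ⟨q, hq, rfl⟩
      obtain ⟨h0, hh0I, hh0ne, hh0deg⟩ := Nat.sInf_mem hsetI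
      calc alphaNum q ≤ h0.totalDegree := Nat.sInf_le ⟨h0, le_of_mem_Ass hq hh0I, hh0ne, rfl⟩
        _ = alphaNum I := hh0deg
    · exact ⟨p, hpAss, rfl⟩
  have : alphaNum I ≤ cNum I + vNumber I := by
    calc alphaNum I ≤ alphaNum p + vNumber I := le_trans h1 h2
      _ ≤ cNum I + vNumber I := Nat.add_le_add_right h3 _
  omega
end

section
/- Let S = K[x_1,…,x_n] be a standard graded polynomial ring over a field K and I ⊂ S a proper nonzero graded ideal having no embedded prime (every associated prime of I is a minimal prime of I) and which is normally torsion-free (Ass(I^k) ⊆ Ass(I) for all k ≥ 1). If v_p(I) = α(I) − α(p) for some p ∈ Ass(I), then v_p(I^k) = α(I)·k − α(p) for all k ≥ 1. -/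
open MvPolynomial

/-!
Let `f` be a homogeneous witness of `v_p(I)`, so `I : f = p` and `deg f = α(I) - α(p)`, and
let `h ∈ I` be homogeneous of degree `α(I)`. Then `p ⊆ I^k : f h^(k-1)`, and this colon ideal is
proper since all monomials of elements of `I^k` have degree `≥ k α(I) > deg (f h^(k-1))`.
An associated prime of `S ⧸ (I^k : f h^(k-1))` is associated to `I^k`, hence minimal over `I`,
hence equal to `p`; so `I^k : f h^(k-1) = p` and `v_p(I^k) ≤ k α(I) - α(p)`. Conversely, if
`I^k : g = p` with `g` homogeneous, then `u g ∈ I^k` for some `u ∈ p` of degree `α(p)`, so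
`deg g ≥ k α(I) - α(p)`.
-/

namespace Ideal

variable {R : Type*} [CommRing R]

theorem bot_colon_quotient_mk (I : Ideal R) (c : R) :
    (⊥ : Submodule R (R ⧸ I)).colon {Ideal.Quotient.mk I c} = I.colon (Ideal.span {c}) := by
  ext r
  rw [mem_colon_span_singleton, Submodule.mem_colon_singleton, Submodule.mem_bot,
    Algebra.smul_def, Quotient.algebraMap_eq, ← map_mul, Quotient.eq_zero_iff_mem]

theorem isAssociatedPrime_quotient_iff [IsNoetherianRing R] {I p : Ideal R} :
    IsAssociatedPrime p (R ⧸ I) ↔ p.IsPrime ∧ ∃ c : R, I.colon (Ideal.span {c}) = p := by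
  simp only [isAssociatedPrime_iff, Quotient.mk_surjective.exists, bot_colon_quotient_mk,
    eq_comm]

theorem colon_span_singleton_colon_span_singleton (I : Ideal R) (a b : R) :
    (I.colon (Ideal.span {a})).colon (Ideal.span {b}) = I.colon (Ideal.span {b * a}) := by
  ext r
  simp only [mem_colon_span_singleton, mul_assoc]

theorem ne_zero_of_colon_eq {I p : Ideal R} {f : R} (hf : I.colon (Ideal.span {f}) = p)
    (hp : p ≠ ⊤) : f ≠ 0 := by
  rintro rfl
  exact hp (hf ▸ by simp)

theorem colon_eq_of_associatedPrimes_subset_minimalPrimes [IsNoetherianRing R]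
    {I L p : Ideal R} {F : R} (hL : associatedPrimes R (R ⧸ L) ⊆ I.minimalPrimes)
    (hp : p.IsPrime) (hIp : I ≤ p) (hpF : p ≤ L.colon (Ideal.span {F}))
    (hF : L.colon (Ideal.span {F}) ≠ ⊤) : L.colon (Ideal.span {F}) = p := by
  have := Quotient.nontrivial_iff.mpr hF
  obtain ⟨q, hq⟩ := associatedPrimes.nonempty R (R ⧸ L.colon (Ideal.span {F}))
  obtain ⟨hqprime, c, rfl⟩ := isAssociatedPrime_quotient_iff.mp hq
  have hqL : (L.colon (Ideal.span {F})).colon (Ideal.span {c}) ∈ associatedPrimes R (R ⧸ L) :=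
    isAssociatedPrime_quotient_iff.mpr
      ⟨hqprime, c * F, (colon_span_singleton_colon_span_singleton L F c).symm⟩
  have hFq : L.colon (Ideal.span {F}) ≤ (L.colon (Ideal.span {F})).colon (Ideal.span {c}) :=
    le_colon
  have hqp := (hL hqL).2 ⟨hp, hIp⟩ (hpF.trans hFq)
  exact le_antisymm (hFq.trans hqp) hpF

theorem colon_pow_succ_mul_pow_eq [IsNoetherianRing R] {I p : Ideal R} {f h : R} {k : ℕ}
    (hass : associatedPrimes R (R ⧸ I ^ (k + 1)) ⊆ I.minimalPrimes)
    (hp : p ∈ I.minimalPrimes) (hf : I.colon (Ideal.span {f}) = p) (hh : h ∈ I)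
    (hne : (I ^ (k + 1)).colon (Ideal.span {f * h ^ k}) ≠ ⊤) :
    (I ^ (k + 1)).colon (Ideal.span {f * h ^ k}) = p := by
  refine colon_eq_of_associatedPrimes_subset_minimalPrimes hass hp.1.1 hp.1.2 ?_ hne
  intro x hx
  rw [← hf, mem_colon_span_singleton] at hx
  rw [mem_colon_span_singleton, pow_succ, show x * (f * h ^ k) = h ^ k * (x * f) by ring]
  exact mul_mem_mul (pow_mem_pow hh k) hx

end Ideal

namespace Ideal.IsHomogeneous

open DirectSum

variable {ι σ A : Type*} [CommRing A] [SetLike σ A] [AddSubmonoidClass σ A] {𝒜 : ι → σ}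

theorem of_mem_minimalPrimes [AddCommMonoid ι] [LinearOrder ι] [IsOrderedCancelAddMonoid ι]
    [GradedRing 𝒜] {I p : Ideal A} (hI : I.IsHomogeneous 𝒜) (hp : p ∈ I.minimalPrimes) :
    p.IsHomogeneous 𝒜 := by
  have hcore : I ≤ (p.homogeneousCore 𝒜).toIdeal := by
    rw [← hI.toIdeal_homogeneousCore_eq_self]
    exact Ideal.homogeneousCore_mono 𝒜 hp.1.2
  have hp_le := hp.2 ⟨hp.1.1.homogeneousCore, hcore⟩ (toIdeal_homogeneousCore_le 𝒜 p)
  rw [← le_antisymm (toIdeal_homogeneousCore_le 𝒜 p) hp_le]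
  exact (p.homogeneousCore 𝒜).isHomogeneous

/-- If `x * g ∈ L` with `x` homogeneous of degree `j`, then `x * gᵢ` is the degree `j + i`
component of `x * g`; prime avoidance then picks the component. -/
theorem exists_colon_decompose_eq [DecidableEq ι] [AddCancelCommMonoid ι] [GradedRing 𝒜]
    {L p : Ideal A} (hL : L.IsHomogeneous 𝒜) (hp : p.IsHomogeneous 𝒜) [p.IsPrime] {g : A}
    (hg : L.colon (Ideal.span {g}) = p) :
    ∃ i, L.colon (Ideal.span {(decompose 𝒜 g i : A)}) = p := by
  classical
  have hle : ∀ i, p ≤ L.colon (Ideal.span {(decompose 𝒜 g i : A)}) := by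
    intro i
    rw [← hp.toIdeal_homogeneousCore_eq_self]
    refine span_le.mpr ?_
    rintro _ ⟨⟨x, j, hxj⟩, hxp, rfl⟩
    have hxg : x * g ∈ L := mem_colon_span_singleton.mp (hg ▸ hxp)
    have := hL (j + i) hxg
    rwa [coe_decompose_mul_add_of_left_mem 𝒜 hxj, ← mem_colon_span_singleton] at this
  have hinf : (decompose 𝒜 g).support.inf
      (fun i => L.colon (Ideal.span {(decompose 𝒜 g i : A)})) ≤ p := by
    rw [← hg]
    intro x hx
    rw [mem_colon_span_singleton, ← sum_support_decompose 𝒜 g, Finset.mul_sum]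
    exact L.sum_mem fun i hi =>
      mem_colon_span_singleton.mp ((Submodule.mem_finsetInf.mp hx) i hi)
  obtain ⟨i, -, hi⟩ := (IsPrime.inf_le' ‹_›).mp hinf
  exact ⟨i, le_antisymm hi (hle i)⟩

end Ideal.IsHomogeneous

namespace MvPolynomial

theorem le_totalDegree_of_mem_pow_idealOfVars {σ R : Type*} [CommSemiring R] {D : ℕ}
    {x : MvPolynomial σ R} (hx : x ∈ idealOfVars σ R ^ D) (h0 : x ≠ 0) : D ≤ x.totalDegree := by
  obtain ⟨m, hm⟩ := support_nonempty.mpr h0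
  exact ((mem_pow_idealOfVars_iff D x).mp hx m hm).trans (le_totalDegree hm)

theorem IsHomogeneous.degree_eq {σ R : Type*} [CommSemiring R] {φ : MvPolynomial σ R} {d : ℕ}
    (hφ : φ.IsHomogeneous d) {m : σ →₀ ℕ} (hm : m ∈ φ.support) : m.degree = d := by
  rw [Finsupp.degree_eq_weight_one, ← Pi.one_def]
  exact hφ (mem_support_iff.mp hm)

end MvPolynomial

section PolynomialRing

variable {K : Type*} [Field K] {n : ℕ}

theorem alphaNum_le_totalDegree {J : Ideal (MvPolynomial (Fin n) K)}
    {f : MvPolynomial (Fin n) K} (hf : f ∈ J) (h0 : f ≠ 0) : alphaNum J ≤ f.totalDegree :=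
  Nat.sInf_le ⟨f, hf, h0, rfl⟩

theorem exists_totalDegree_eq_alphaNum {J : Ideal (MvPolynomial (Fin n) K)} (hJ : J ≠ ⊥) :
    ∃ f ∈ J, f ≠ 0 ∧ f.totalDegree = alphaNum J := by
  obtain ⟨f, hf, hf0⟩ := Submodule.exists_mem_ne_zero_of_ne_bot hJ
  exact Nat.sInf_mem (s := {d | ∃ f ∈ J, f ≠ 0 ∧ f.totalDegree = d}) ⟨_, f, hf, hf0, rfl⟩

theorem alphaNum_pos {J : Ideal (MvPolynomial (Fin n) K)} (hJ : J ≠ ⊤) (h0 : J ≠ ⊥) :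
    0 < alphaNum J := by
  obtain ⟨f, hf, hf0, hdeg⟩ := exists_totalDegree_eq_alphaNum h0
  refine Nat.pos_of_ne_zero fun hα => hJ (J.eq_top_of_isUnit_mem hf ?_)
  have hC := totalDegree_eq_zero_iff_eq_C.mp (hdeg.trans hα)
  rw [hC]
  exact (isUnit_iff_ne_zero.mpr fun hc => hf0 (by rw [hC, hc, map_zero])).map C

theorem vNumberAt_le {I p : Ideal (MvPolynomial (Fin n) K)} {f : MvPolynomial (Fin n) K}
    {d : ℕ} (hf : f.IsHomogeneous d) (hcol : I.colon (Ideal.span {f}) = p) : vNumberAt I p ≤ d :=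
  Nat.sInf_le ⟨f, hf, hcol⟩

theorem exists_isHomogeneous_vNumberAt {I p : Ideal (MvPolynomial (Fin n) K)}
    (h : ∃ d, ∃ f : MvPolynomial (Fin n) K, f.IsHomogeneous d ∧ I.colon (Ideal.span {f}) = p) :
    ∃ f : MvPolynomial (Fin n) K, f.IsHomogeneous (vNumberAt I p) ∧
      I.colon (Ideal.span {f}) = p :=
  Nat.sInf_mem h

end PolynomialRing

namespace IsHomogeneousIdeal

attribute [local instance] MvPolynomial.gradedAlgebra

variable {K : Type*} [Field K] {n : ℕ} {I : Ideal (MvPolynomial (Fin n) K)}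

theorem isHomogeneous (hI : IsHomogeneousIdeal I) :
    I.IsHomogeneous (homogeneousSubmodule (Fin n) K) := by
  obtain ⟨G, hG, rfl⟩ := hI
  refine Ideal.homogeneous_span _ G fun x hx => ?_
  obtain ⟨d, hd⟩ := hG x hx
  exact ⟨d, (mem_homogeneousSubmodule d x).mpr hd⟩

theorem exists_isHomogeneous_colon_eq (hI : IsHomogeneousIdeal I)
    {p : Ideal (MvPolynomial (Fin n) K)} (hp : p ∈ Ass I) (hmin : p ∈ I.minimalPrimes) :
    ∃ d, ∃ f : MvPolynomial (Fin n) K, f.IsHomogeneous d ∧ I.colon (Ideal.span {f}) = p := by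
  obtain ⟨hprime, g, hg⟩ := Ideal.isAssociatedPrime_quotient_iff.mp hp
  obtain ⟨d, hd⟩ := hI.isHomogeneous.exists_colon_decompose_eq
    (hI.isHomogeneous.of_mem_minimalPrimes hmin) hg
  exact ⟨d, _, homogeneousComponent_isHomogeneous d g,
    decomposition.decompose'_apply g d ▸ hd⟩

theorem le_pow_idealOfVars (hI : IsHomogeneousIdeal I) :
    I ≤ idealOfVars (Fin n) K ^ alphaNum I := by
  obtain ⟨G, hG, rfl⟩ := hI
  refine Ideal.span_le.mpr fun g hgG => ?_
  obtain ⟨d, hd⟩ := hG g hgG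
  by_cases hg0 : g = 0
  · simp [hg0]
  refine (mem_pow_idealOfVars_iff _ g).mpr fun m hm => ?_
  rw [hd.degree_eq hm, ← hd.totalDegree hg0]
  exact alphaNum_le_totalDegree (Ideal.subset_span hgG) hg0

theorem mul_alphaNum_le_totalDegree (hI : IsHomogeneousIdeal I) {k : ℕ}
    {x : MvPolynomial (Fin n) K} (hx : x ∈ I ^ k) (h0 : x ≠ 0) :
    k * alphaNum I ≤ x.totalDegree := by
  refine le_totalDegree_of_mem_pow_idealOfVars ?_ h0
  rw [mul_comm, pow_mul]
  exact Ideal.pow_right_mono hI.le_pow_idealOfVars k hx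

/-- The monomials of an element of `I` have degree at least `α(I)` (`le_pow_idealOfVars`), so
those of an element of total degree `α(I)` all have degree exactly `α(I)`. -/
theorem exists_isHomogeneous_alphaNum (hI : IsHomogeneousIdeal I) (h0 : I ≠ ⊥) :
    ∃ h ∈ I, h ≠ 0 ∧ h.IsHomogeneous (alphaNum I) := by
  obtain ⟨h, hhI, hh0, hdeg⟩ := exists_totalDegree_eq_alphaNum h0
  refine ⟨h, hhI, hh0, fun {m} hm => ?_⟩
  rw [Pi.one_def, ← Finsupp.degree_eq_weight_one]
  refine le_antisymm (hdeg ▸ le_totalDegree (mem_support_iff.mpr hm)) ?_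
  exact (mem_pow_idealOfVars_iff _ h).mp (hI.le_pow_idealOfVars hhI) m (mem_support_iff.mpr hm)

theorem colon_pow_ne_top (hI : IsHomogeneousIdeal I) {k d : ℕ} {F : MvPolynomial (Fin n) K}
    (hF : F.IsHomogeneous d) (hF0 : F ≠ 0) (hd : d < k * alphaNum I) :
    (I ^ k).colon (Ideal.span {F}) ≠ ⊤ := by
  intro htop
  have hFI : F ∈ I ^ k :=
    (Submodule.colon_eq_top_iff_subset _).mp htop (Ideal.mem_span_singleton_self F)
  have hdeg := hI.mul_alphaNum_le_totalDegree hFI hF0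
  rw [hF.totalDegree hF0] at hdeg
  omega

theorem mul_alphaNum_le_alphaNum_add (hI : IsHomogeneousIdeal I) {k d : ℕ}
    {p : Ideal (MvPolynomial (Fin n) K)} (hp : p ≠ ⊤) (hp0 : p ≠ ⊥)
    {f : MvPolynomial (Fin n) K} (hf : f.IsHomogeneous d)
    (hcol : (I ^ k).colon (Ideal.span {f}) = p) :
    k * alphaNum I ≤ alphaNum p + d := by
  obtain ⟨g, hgp, hg0, hgdeg⟩ := exists_totalDegree_eq_alphaNum hp0
  have hgf : g * f ∈ I ^ k := Ideal.mem_colon_span_singleton.mp (hcol ▸ hgp)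
  calc k * alphaNum I
      ≤ (g * f).totalDegree :=
        hI.mul_alphaNum_le_totalDegree hgf (mul_ne_zero hg0 (Ideal.ne_zero_of_colon_eq hcol hp))
    _ ≤ g.totalDegree + f.totalDegree := totalDegree_mul g f
    _ ≤ alphaNum p + d := add_le_add hgdeg.le hf.totalDegree_le

end IsHomogeneousIdeal

theorem stmt3_general {K : Type*} [Field K] {n : ℕ}
    (I : Ideal (MvPolynomial (Fin n) K))
    (hhom : IsHomogeneousIdeal I) (hne : I ≠ ⊥)
    (hnoemb : ∀ q ∈ Ass I, q ∈ I.minimalPrimes)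
    (hntf : ∀ k : ℕ, 1 ≤ k → Ass (I ^ k) ⊆ Ass I)
    (p : Ideal (MvPolynomial (Fin n) K)) (hp : p ∈ Ass I)
    (hv : (vNumberAt I p : ℤ) = (alphaNum I : ℤ) - (alphaNum p : ℤ)) :
    ∀ k : ℕ, 1 ≤ k →
      (vNumberAt (I ^ k) p : ℤ) = (alphaNum I : ℤ) * k - (alphaNum p : ℤ) := by
  intro k hk
  obtain ⟨k, rfl⟩ := Nat.exists_eq_add_of_le' hk
  have hmin := hnoemb p hp
  have hp0 : p ≠ ⊥ := ne_bot_of_le_ne_bot hne hmin.1.2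
  have hαp := alphaNum_pos hmin.1.1.ne_top hp0
  have hαk : (k + 1) * alphaNum I = alphaNum I * k + alphaNum I := by ring
  obtain ⟨f, hf, hfp⟩ :=
    exists_isHomogeneous_vNumberAt (hhom.exists_isHomogeneous_colon_eq hp hmin)
  obtain ⟨h, hhI, hh0, hh⟩ := hhom.exists_isHomogeneous_alphaNum hne
  have hf0 := Ideal.ne_zero_of_colon_eq hfp hmin.1.1.ne_top
  have hF := hf.mul (hh.pow k)
  have hFp : (I ^ (k + 1)).colon (Ideal.span {f * h ^ k}) = p :=
    Ideal.colon_pow_succ_mul_pow_eq (fun q hq => hnoemb q (hntf _ le_add_self hq)) hmin hfp hhI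
      (hhom.colon_pow_ne_top hF (mul_ne_zero hf0 (pow_ne_zero k hh0)) (by omega))
  obtain ⟨f', hf', hf'p⟩ := exists_isHomogeneous_vNumberAt ⟨_, _, hF, hFp⟩
  have hlow := hhom.mul_alphaNum_le_alphaNum_add hmin.1.1.ne_top hp0 hf' hf'p
  have hup := vNumberAt_le hF hFp
  have hvk : vNumberAt (I ^ (k + 1)) p + alphaNum p = (k + 1) * alphaNum I := by omega
  rw [eq_sub_iff_add_eq, mul_comm]
  exact_mod_cast hvk

/-- Let `I` be a proper nonzero graded ideal with no embedded prime which is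
normally torsion-free. If `v_p(I) = α(I) − α(p)` for some `p ∈ Ass(I)`, then
`v_p(I^k) = α(I)·k − α(p)` for all `k ≥ 1`. -/
theorem stmt3 {K : Type*} [Field K] {n : ℕ}
    (I : Ideal (MvPolynomial (Fin n) K))
    (hhom : IsHomogeneousIdeal I) (hproper : I ≠ ⊤) (hne : I ≠ ⊥)
    (hnoemb : ∀ q ∈ Ass I, q ∈ I.minimalPrimes)
    (hntf : ∀ k : ℕ, 1 ≤ k → Ass (I ^ k) ⊆ Ass I)
    (p : Ideal (MvPolynomial (Fin n) K)) (hp : p ∈ Ass I)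
    (hv : (vNumberAt I p : ℤ) = (alphaNum I : ℤ) - (alphaNum p : ℤ)) :
    ∀ k : ℕ, 1 ≤ k →
      (vNumberAt (I ^ k) p : ℤ) = (alphaNum I : ℤ) * k - (alphaNum p : ℤ) :=
  stmt3_general I hhom hne hnoemb hntf p hp hv
end

section
/- Let S = K[x_1,…,x_n] be a standard graded polynomial ring over a field K and I ⊂ S a proper nonzero graded ideal having no embedded prime (every associated prime of I is a minimal prime of I) and which is normally torsion-free (Ass(I^k) ⊆ Ass(I) for all k ≥ 1). If v(I) = α(I) − c(I), then v(I^k) = α(I)·k − c(I) for all k ≥ 1. -/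
open MvPolynomial

namespace VAux

attribute [local instance] MvPolynomial.gradedAlgebra

variable {K : Type*} [Field K] {n : ℕ}

local notation "S" => MvPolynomial (Fin n) K

lemma decompose_apply (f : S) (i : ℕ) :
    (DirectSum.decompose (homogeneousSubmodule (Fin n) K) f i : S) = homogeneousComponent i f := by
  rw [← DirectSum.Decomposition.decompose'_eq]
  exact decomposition.decompose'_apply f i

lemma colon_eq_ann (I : Ideal S) (f : S) :
    I.colon (Ideal.span {f})
      = (Submodule.span S {(Ideal.Quotient.mk I f : S ⧸ I)}).annihilator := by
  ext a
  rw [Ideal.mem_colon_span_singleton, Submodule.mem_annihilator_span_singleton]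
  have : a • (Ideal.Quotient.mk I f : S ⧸ I) = Ideal.Quotient.mk I (a * f) := rfl
  rw [this, Ideal.Quotient.eq_zero_iff_mem]

lemma colon_eq_bot_colon (I : Ideal S) (f : S) :
    I.colon (Ideal.span {f}) = (⊥ : Submodule S (S ⧸ I)).colon {Ideal.Quotient.mk I f} := by
  ext a
  rw [Ideal.mem_colon_span_singleton, Submodule.mem_colon_singleton, Submodule.mem_bot]
  show _ ↔ Ideal.Quotient.mk I (a * f) = 0
  rw [Ideal.Quotient.eq_zero_iff_mem]

lemma ass_le {I p : Ideal S} (hp : p ∈ Ass I) : I ≤ p := by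
  obtain ⟨hprime, x, rfl⟩ := hp
  obtain ⟨y, rfl⟩ := Ideal.Quotient.mk_surjective x
  intro a ha
  apply Ideal.le_radical
  rw [Submodule.mem_colon_singleton, Submodule.mem_bot]
  show Ideal.Quotient.mk I (a * y) = 0
  rw [Ideal.Quotient.eq_zero_iff_mem]
  exact I.mul_mem_right y ha

end VAux
namespace VAux

variable {K : Type*} [Field K] {n : ℕ}

local notation "S" => MvPolynomial (Fin n) K

/-- The ideal of polynomials all of whose monomials have degree at least `m`. -/
def lowIdeal (K : Type*) [Field K] (n m : ℕ) : Ideal (MvPolynomial (Fin n) K) where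
  carrier := {f | ∀ d ∈ f.support, m ≤ Finsupp.degree d}
  zero_mem' := by simp
  add_mem' := by
    intro a b ha hb d hd
    rcases Finset.mem_union.1 (MvPolynomial.support_add hd) with h | h
    · exact ha d h
    · exact hb d h
  smul_mem' := by
    intro c f hf d hd
    rw [smul_eq_mul] at hd
    obtain ⟨d1, hd1, d2, hd2, rfl⟩ := Finset.mem_add.1 (MvPolynomial.support_mul c f hd)
    have : Finsupp.degree d2 ≤ Finsupp.degree (d1 + d2) := by
      simp [Finsupp.degree_eq_weight_one, map_add]
    exact le_trans (hf d2 hd2) this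

lemma mem_lowIdeal_iff {m : ℕ} {f : S} :
    f ∈ lowIdeal K n m ↔ ∀ d ∈ f.support, m ≤ Finsupp.degree d := Iff.rfl

lemma mul_mem_lowIdeal {m l : ℕ} {f g : S} (hf : f ∈ lowIdeal K n m)
    (hg : g ∈ lowIdeal K n l) : f * g ∈ lowIdeal K n (m + l) := by
  intro d hd
  obtain ⟨d1, hd1, d2, hd2, rfl⟩ := Finset.mem_add.1 (MvPolynomial.support_mul f g hd)
  have : Finsupp.degree (d1 + d2) = Finsupp.degree d1 + Finsupp.degree d2 := by
    simp [Finsupp.degree_eq_weight_one, map_add]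
  rw [this]
  exact add_le_add (hf d1 hd1) (hg d2 hd2)

lemma isHomogeneous_mem_lowIdeal {m e : ℕ} {f : S} (hf : f.IsHomogeneous e) (hme : m ≤ e) :
    f ∈ lowIdeal K n m := by
  intro d hd
  have := hf (MvPolynomial.mem_support_iff.1 hd)
  rw [Finsupp.degree_eq_weight_one]
  have h' : (Finsupp.weight (fun _ => (1:ℕ))) d = e := this
  omega

lemma totalDegree_ge_of_mem_lowIdeal {m : ℕ} {f : S} (hf : f ∈ lowIdeal K n m) (h0 : f ≠ 0) :
    m ≤ f.totalDegree := by
  obtain ⟨d, hd⟩ := Finset.nonempty_iff_ne_empty.2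
    (fun h => h0 (MvPolynomial.support_eq_empty.1 h))
  refine le_trans (hf d hd) ?_
  have := MvPolynomial.le_totalDegree (p := f) (s := d) hd
  exact this

end VAux
namespace VAux

variable {K : Type*} [Field K] {n : ℕ}

local notation "S" => MvPolynomial (Fin n) K

lemma exists_alpha {J : Ideal S} (hJ : J ≠ ⊥) :
    ∃ f ∈ J, f ≠ 0 ∧ f.totalDegree = alphaNum J := by
  obtain ⟨f, hfJ, hf0⟩ := Submodule.exists_mem_ne_zero_of_ne_bot hJ
  have hne : {d | ∃ f ∈ J, f ≠ 0 ∧ f.totalDegree = d}.Nonempty :=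
    ⟨f.totalDegree, f, hfJ, hf0, rfl⟩
  obtain ⟨g, hg, hg0, hgd⟩ := Nat.sInf_mem hne
  exact ⟨g, hg, hg0, hgd⟩

lemma alphaNum_le {J : Ideal S} {f : S} (hfJ : f ∈ J) (hf0 : f ≠ 0) :
    alphaNum J ≤ f.totalDegree :=
  Nat.sInf_le ⟨f, hfJ, hf0, rfl⟩

lemma le_lowIdeal_of_span {G : Set S} (hG : ∀ f ∈ G, ∃ d, f.IsHomogeneous d)
    {m : ℕ} (hm : ∀ f ∈ G, f ≠ 0 → m ≤ f.totalDegree) :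
    Ideal.span G ≤ lowIdeal K n m := by
  rw [Ideal.span_le]
  intro f hf
  by_cases h0 : f = 0
  · subst h0; exact (lowIdeal K n m).zero_mem
  obtain ⟨d, hd⟩ := hG f hf
  exact isHomogeneous_mem_lowIdeal hd (by rw [← hd.totalDegree h0]; exact hm f hf h0)

lemma pow_le_lowIdeal {I : Ideal S} (hI : I ≤ lowIdeal K n m) (k : ℕ) :
    I ^ k ≤ lowIdeal K n (k * m) := by
  induction k with
  | zero =>
      intro f _ d _
      simp
  | succ k ih =>
      rw [pow_succ, Nat.succ_mul]
      exact Ideal.mul_le.2 fun r hr s hs => mul_mem_lowIdeal (ih hr) (hI hs)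

end VAux
namespace VAux

attribute [local instance] MvPolynomial.gradedAlgebra

variable {K : Type*} [Field K] {n : ℕ}

local notation "S" => MvPolynomial (Fin n) K

lemma colon_isHomogeneous {I : Ideal S}
    (hI : I.IsHomogeneous (homogeneousSubmodule (Fin n) K))
    {f : S} {e : ℕ} (hf : f.IsHomogeneous e) :
    (I.colon (Ideal.span {f})).IsHomogeneous (homogeneousSubmodule (Fin n) K) := by
  intro i r hr
  rw [Ideal.mem_colon_span_singleton] at hr
  rw [decompose_apply, Ideal.mem_colon_span_singleton]
  by_cases hc : homogeneousComponent i r = 0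
  · rw [hc, zero_mul]; exact I.zero_mem
  have key : homogeneousComponent i r * f = homogeneousComponent (i + e) (r * f) := by
    calc homogeneousComponent i r * f
        = ∑ j ∈ Finset.range (r.totalDegree + 1),
            homogeneousComponent (i + e) (homogeneousComponent j r * f) := by
          rw [Finset.sum_eq_single i]
          · have hmem : homogeneousComponent i r * f
                ∈ homogeneousSubmodule (Fin n) K (i + e) :=
              (mem_homogeneousSubmodule _ _).2
                ((homogeneousComponent_isHomogeneous i r).mul hf)
            rw [homogeneousComponent_of_mem hmem, if_pos rfl]
          · intro j _ hj
            have hmem : homogeneousComponent j r * f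
                ∈ homogeneousSubmodule (Fin n) K (j + e) :=
              (mem_homogeneousSubmodule _ _).2
                ((homogeneousComponent_isHomogeneous j r).mul hf)
            rw [homogeneousComponent_of_mem hmem, if_neg (by omega)]
          · intro hi
            exact absurd (homogeneousComponent_eq_zero i r (by
              simp only [Finset.mem_range, not_lt] at hi; omega)) hc
      _ = homogeneousComponent (i + e) (r * f) := by
          rw [← map_sum, ← Finset.sum_mul, sum_homogeneousComponent]
  rw [key]
  have := hI (i + e) hr
  rwa [decompose_apply] at this

end VAux
namespace VAux

attribute [local instance] MvPolynomial.gradedAlgebra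

variable {K : Type*} [Field K] {n : ℕ}

local notation "S" => MvPolynomial (Fin n) K

lemma isHomogeneousIdeal_homogeneous {I : Ideal S} (hhom : IsHomogeneousIdeal I) :
    I.IsHomogeneous (homogeneousSubmodule (Fin n) K) := by
  obtain ⟨G, hG, rfl⟩ := hhom
  exact Ideal.homogeneous_span _ _ fun x hx => (hG x hx).imp fun d hd =>
    (mem_homogeneousSubmodule _ _).2 hd

lemma vset_nonempty {I : Ideal S} (hhom : IsHomogeneousIdeal I) (hproper : I ≠ ⊤) :
    {d | ∃ f : S, ∃ p ∈ Ass I, f.IsHomogeneous d ∧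
      I.colon (Ideal.span {f}) = p}.Nonempty := by
  have hIhom := isHomogeneousIdeal_homogeneous hhom
  set C : Set (Ideal S) :=
    {J | ∃ f : S, (∃ e, f.IsHomogeneous e) ∧ f ∉ I ∧ J = I.colon (Ideal.span {f})} with hC
  have hCne : C.Nonempty :=
    ⟨I.colon (Ideal.span {(1 : S)}), 1, ⟨0, isHomogeneous_one _ _⟩,
      fun h => hproper ((Ideal.eq_top_iff_one I).2 h), rfl⟩
  obtain ⟨J, hJC, hJmax⟩ :=
    set_has_maximal_iff_noetherian.mpr (inferInstance : IsNoetherianRing S) C hCne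
  obtain ⟨f, ⟨e, hfe⟩, hfI, rfl⟩ := hJC
  have hJne : I.colon (Ideal.span {f}) ≠ ⊤ := by
    intro h
    apply hfI
    have h1 : (1 : S) ∈ I.colon (Ideal.span {f}) := h ▸ Submodule.mem_top
    simpa [Ideal.mem_colon_span_singleton] using h1
  have hprime : (I.colon (Ideal.span {f})).IsPrime := by
    refine (colon_isHomogeneous hIhom hfe).isPrime_of_homogeneous_mem_or_mem hJne ?_
    rintro x y ⟨i, hx⟩ ⟨j, hy⟩ hxy
    by_cases hyJ : y ∈ I.colon (Ideal.span {f})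
    · exact Or.inr hyJ
    refine Or.inl ?_
    have hyf : y * f ∉ I := by rwa [Ideal.mem_colon_span_singleton] at hyJ
    have hyfe : (y * f).IsHomogeneous (j + e) :=
      ((mem_homogeneousSubmodule _ _).1 hy).mul hfe
    have hmem : I.colon (Ideal.span {y * f}) ∈ C := ⟨y * f, ⟨j + e, hyfe⟩, hyf, rfl⟩
    have hle : I.colon (Ideal.span {f}) ≤ I.colon (Ideal.span {y * f}) := by
      intro a ha
      rw [Ideal.mem_colon_span_singleton] at ha ⊢
      have h2 : a * (y * f) = y * (a * f) := by ring
      rw [h2]; exact I.mul_mem_left y ha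
    have hxmem : x ∈ I.colon (Ideal.span {y * f}) := by
      rw [Ideal.mem_colon_span_singleton]
      have h2 : x * (y * f) = x * y * f := by ring
      rw [h2]
      exact Ideal.mem_colon_span_singleton.1 hxy
    by_contra hxJ
    exact hJmax _ hmem (lt_of_le_of_ne hle (fun h => hxJ (h ▸ hxmem)))
  refine ⟨e, f, I.colon (Ideal.span {f}), ?_, hfe, rfl⟩
  exact AssociatedPrimes.mem_iff.2 (isAssociatedPrime_iff.2 ⟨hprime, ⟨Ideal.Quotient.mk I f, colon_eq_bot_colon I f⟩⟩)

end VAux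
namespace VAux

attribute [local instance] MvPolynomial.gradedAlgebra

variable {K : Type*} [Field K] {n : ℕ}

local notation "S" => MvPolynomial (Fin n) K

lemma ne_zero_of_colon_prime {I p : Ideal S} {f : S} (hp : p.IsPrime)
    (h : I.colon (Ideal.span {f}) = p) : f ≠ 0 := by
  rintro rfl
  apply hp.ne_top
  rw [← h, Ideal.eq_top_iff_one, Ideal.mem_colon_span_singleton, mul_zero]
  exact I.zero_mem

lemma alpha_ass_le {I q : Ideal S} (hne : I ≠ ⊥) (hq : q ∈ Ass I) :
    alphaNum q ≤ alphaNum I := by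
  obtain ⟨g, hgI, hg0, hgd⟩ := exists_alpha hne
  exact hgd ▸ alphaNum_le (ass_le hq hgI) hg0

lemma alpha_le_cNum {I q : Ideal S} (hne : I ≠ ⊥) (hq : q ∈ Ass I) :
    alphaNum q ≤ cNum I :=
  le_csSup ⟨alphaNum I, by rintro _ ⟨r, hr, rfl⟩; exact alpha_ass_le hne hr⟩
    (Set.mem_image_of_mem _ hq)

lemma one_le_alphaNum_of_prime {p : Ideal S} (hp : p.IsPrime) (hpbot : p ≠ ⊥) :
    1 ≤ alphaNum p := by
  by_contra h
  push_neg at h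
  interval_cases hap : alphaNum p
  obtain ⟨g, hgp, hg0, hgd⟩ := exists_alpha hpbot
  rw [hap] at hgd
  have hhom : g.IsHomogeneous 0 := (totalDegree_zero_iff_isHomogeneous _).1 hgd
  have h1 := homogeneousComponent_of_mem ((mem_homogeneousSubmodule _ _).2 hhom)
    (m := 0)
  rw [if_pos rfl] at h1
  have hgC : g = MvPolynomial.C (MvPolynomial.coeff 0 g) :=
    h1.symm.trans (homogeneousComponent_zero g)
  have : IsUnit g := by
    rw [hgC]
    exact (isUnit_iff_ne_zero.2 (fun hc => hg0 (by rw [hgC, hc, map_zero]))).map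
      MvPolynomial.C
  exact hp.ne_top (p.eq_top_of_isUnit_mem hgp this)

lemma pow_ne_bot {I : Ideal S} (hne : I ≠ ⊥) (k : ℕ) : I ^ k ≠ ⊥ := by
  obtain ⟨x, hxI, hx0⟩ := Submodule.exists_mem_ne_zero_of_ne_bot hne
  rw [Submodule.ne_bot_iff]
  exact ⟨x ^ k, Ideal.pow_mem_pow hxI k, pow_ne_zero k hx0⟩

lemma le_lowIdeal_self {I : Ideal S} (hhom : IsHomogeneousIdeal I) :
    I ≤ lowIdeal K n (alphaNum I) := by
  obtain ⟨G, hG, hspan⟩ := hhom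
  rw [hspan]
  exact le_lowIdeal_of_span hG fun f hf h0 =>
    alphaNum_le (hspan ▸ Ideal.subset_span hf) h0

lemma exists_homog_alpha {I : Ideal S} (hhom : IsHomogeneousIdeal I) (hne : I ≠ ⊥) :
    ∃ g : S, g ∈ I ∧ g ≠ 0 ∧ g.IsHomogeneous (alphaNum I) := by
  obtain ⟨g, hgI, hg0, hgd⟩ := exists_alpha hne
  have hIhom := isHomogeneousIdeal_homogeneous hhom
  refine ⟨homogeneousComponent (alphaNum I) g, ?_, ?_, homogeneousComponent_isHomogeneous _ _⟩
  · have := hIhom (alphaNum I) hgI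
    rwa [decompose_apply] at this
  · obtain ⟨d, hd, hdeq⟩ := Finset.exists_mem_eq_sup g.support
      (Finset.nonempty_iff_ne_empty.2 (fun h => hg0 (MvPolynomial.support_eq_empty.1 h))) (fun s => s.sum fun _ e => e)
    intro hc
    have hcd : MvPolynomial.coeff d (homogeneousComponent (alphaNum I) g) =
        MvPolynomial.coeff d g := by
      rw [coeff_homogeneousComponent, if_pos]
      rw [← hgd, MvPolynomial.totalDegree, hdeq]
      rfl
    rw [hc] at hcd
    exact MvPolynomial.mem_support_iff.1 hd (by simpa using hcd.symm)

end VAux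


/-- Let `I` be a proper nonzero graded ideal with no embedded prime which is
normally torsion-free. If `v(I) = α(I) − c(I)`, then `v(I^k) = α(I)·k − c(I)` for all
`k ≥ 1`. -/
theorem stmt4 {K : Type*} [Field K] {n : ℕ}
    (I : Ideal (MvPolynomial (Fin n) K))
    (hhom : IsHomogeneousIdeal I) (hproper : I ≠ ⊤) (hne : I ≠ ⊥)
    (hnoemb : ∀ q ∈ Ass I, q ∈ I.minimalPrimes)
    (hntf : ∀ k : ℕ, 1 ≤ k → Ass (I ^ k) ⊆ Ass I)
    (hv : (vNumber I : ℤ) = (alphaNum I : ℤ) - (cNum I : ℤ)) :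
    ∀ k : ℕ, 1 ≤ k →
      (vNumber (I ^ k) : ℤ) = (alphaNum I : ℤ) * k - (cNum I : ℤ) := by
  classical
  intro k hk
  obtain ⟨m, rfl⟩ : ∃ m, k = m + 1 := ⟨k - 1, by omega⟩
  clear hk
  -- the optimal witness for I
  have hT1 := VAux.vset_nonempty hhom hproper
  obtain ⟨f, p, hpAss, hf, hfp⟩ :
      ∃ f : MvPolynomial (Fin n) K, ∃ p ∈ Ass I, f.IsHomogeneous (vNumber I) ∧
        I.colon (Ideal.span {f}) = p := Nat.sInf_mem hT1
  have hpprime : p.IsPrime := (AssociatedPrimes.mem_iff.1 hpAss).isPrime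
  have hf0 : f ≠ 0 := VAux.ne_zero_of_colon_prime hpprime hfp
  have hIp : I ≤ p := VAux.ass_le hpAss
  have hpbot : p ≠ ⊥ := fun h => hne (le_bot_iff.1 (h ▸ hIp))
  have hvc : vNumber I + cNum I = alphaNum I := by omega
  -- α(p) = c
  have hαp_le : alphaNum p ≤ cNum I := VAux.alpha_le_cNum hne hpAss
  obtain ⟨h, hhp, hh0, hhd⟩ := VAux.exists_alpha hpbot
  have hfh : h * f ∈ I := Ideal.mem_colon_span_singleton.1 (hfp ▸ hhp)
  have hlowI : I ≤ VAux.lowIdeal K n (alphaNum I) := VAux.le_lowIdeal_self hhom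
  have hαle : alphaNum I ≤ alphaNum p + vNumber I := by
    have h1 := VAux.totalDegree_ge_of_mem_lowIdeal (hlowI hfh) (mul_ne_zero hh0 hf0)
    have h2 := MvPolynomial.totalDegree_mul h f
    have h3 : f.totalDegree ≤ vNumber I := hf.totalDegree_le
    omega
  have hαpc : alphaNum p = cNum I := by omega
  have hc1 : 1 ≤ cNum I := hαpc ▸ VAux.one_le_alphaNum_of_prime hpprime hpbot
  -- homogeneous element of minimal degree
  obtain ⟨g, hgI, hg0, hgh⟩ := VAux.exists_homog_alpha hhom hne
  -- the witness for I^(m+1)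
  have hwhom : (f * g ^ m).IsHomogeneous (vNumber I + alphaNum I * m) :=
    hf.mul (hgh.pow m)
  have hw0 : f * g ^ m ≠ 0 := mul_ne_zero hf0 (pow_ne_zero m hg0)
  have hlowk : I ^ (m+1) ≤ VAux.lowIdeal K n ((m+1) * alphaNum I) :=
    VAux.pow_le_lowIdeal hlowI (m+1)
  have hmul : (m+1) * alphaNum I = alphaNum I * m + alphaNum I := by ring
  rw [hmul] at hlowk
  have hwnot : f * g ^ m ∉ I ^ (m+1) := by
    intro hmem
    have h1 := VAux.totalDegree_ge_of_mem_lowIdeal (hlowk hmem) hw0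
    have h2 : (f * g ^ m).totalDegree = vNumber I + alphaNum I * m :=
      hwhom.totalDegree hw0
    omega
  have hcolon : (I ^ (m+1)).colon (Ideal.span {f * g ^ m}) = p := by
    have hge : p ≤ (I ^ (m+1)).colon (Ideal.span {f * g ^ m}) := by
      intro a ha
      rw [Ideal.mem_colon_span_singleton]
      have haf : a * f ∈ I := Ideal.mem_colon_span_singleton.1 (hfp ▸ ha)
      have hgm : g ^ m ∈ I ^ m := Ideal.pow_mem_pow hgI m
      have hprod := Ideal.mul_mem_mul hgm haf
      rw [← pow_succ] at hprod
      have heq : a * (f * g ^ m) = g ^ m * (a * f) := by ring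
      rwa [heq]
    have hwq : Ideal.Quotient.mk (I ^ (m+1)) (f * g ^ m) ≠ 0 := by
      rw [Ne, Ideal.Quotient.eq_zero_iff_mem]; exact hwnot
    obtain ⟨q, hqass, hqle⟩ := exists_le_isAssociatedPrime_of_isNoetherianRing
      (MvPolynomial (Fin n) K) (Ideal.Quotient.mk (I ^ (m+1)) (f * g ^ m)) hwq
    have hqAssI : q ∈ Ass I := hntf (m+1) (by omega) hqass
    rw [← VAux.colon_eq_bot_colon] at hqle
    have hmin : Minimal (fun J : Ideal (MvPolynomial (Fin n) K) => J.IsPrime ∧ I ≤ J) q :=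
      hnoemb q hqAssI
    have hpq : p ≤ q := le_trans hge hqle
    have hqp : q ≤ p := hmin.2 ⟨hpprime, hIp⟩ hpq
    exact le_antisymm (le_trans hqle hqp) hge
  have hpAssk : p ∈ Ass (I ^ (m+1)) :=
    ⟨hpprime, Ideal.Quotient.mk (I ^ (m+1)) (f * g ^ m), by
      rw [← VAux.colon_eq_bot_colon, hcolon, hpprime.radical]⟩
  -- upper bound
  have hub : vNumber (I ^ (m+1)) ≤ vNumber I + alphaNum I * m :=
    Nat.sInf_le ⟨f * g ^ m, p, hpAssk, hwhom, hcolon⟩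
  -- lower bound
  obtain ⟨f', q, hqAss, hf', hf'q⟩ :
      ∃ f' : MvPolynomial (Fin n) K, ∃ q ∈ Ass (I ^ (m+1)),
        f'.IsHomogeneous (vNumber (I ^ (m+1))) ∧
        (I ^ (m+1)).colon (Ideal.span {f'}) = q :=
    Nat.sInf_mem (s := {d : ℕ | ∃ f' : MvPolynomial (Fin n) K, ∃ q ∈ Ass (I ^ (m+1)),
      f'.IsHomogeneous d ∧ (I ^ (m+1)).colon (Ideal.span {f'}) = q})
      ⟨vNumber I + alphaNum I * m, f * g ^ m, p, hpAssk, hwhom, hcolon⟩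
  have hqAssI : q ∈ Ass I := hntf (m+1) (by omega) hqAss
  have hqprime : q.IsPrime := (AssociatedPrimes.mem_iff.1 hqAss).isPrime
  have hf'0 : f' ≠ 0 := VAux.ne_zero_of_colon_prime hqprime hf'q
  have hqbot : q ≠ ⊥ := fun hq =>
    VAux.pow_ne_bot hne (m+1) (le_bot_iff.1 (hq ▸ VAux.ass_le hqAss))
  obtain ⟨h', hh'q, hh'0, hh'd⟩ := VAux.exists_alpha hqbot
  have hfh' : h' * f' ∈ I ^ (m+1) := Ideal.mem_colon_span_singleton.1 (hf'q ▸ hh'q)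
  have h1 := VAux.totalDegree_ge_of_mem_lowIdeal (hlowk hfh') (mul_ne_zero hh'0 hf'0)
  have h2 := MvPolynomial.totalDegree_mul h' f'
  have h3 : f'.totalDegree = vNumber (I ^ (m+1)) := hf'.totalDegree hf'0
  have hq_le_c : alphaNum q ≤ cNum I := VAux.alpha_le_cNum hne hqAssI
  -- final arithmetic
  obtain ⟨A, hA⟩ : ∃ A, alphaNum I * m = A := ⟨_, rfl⟩
  rw [hA] at h1 hub
  have hfin : (alphaNum I : ℤ) * ((m + 1 : ℕ) : ℤ) = (A : ℤ) + (alphaNum I : ℤ) := by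
    rw [← hA]; push_cast; ring
  rw [hfin]
  omega
end

section
/- Let S = K[x_1,…,x_n] be a standard graded polynomial ring over a field K and I ⊂ S a proper nonzero graded ideal generated by homogeneous polynomials all of the same degree, satisfying the strong persistence property (I^{k+1} : I) = I^k for all k ≥ 1. If v_p(I) = α(I) − α(p) for some p ∈ Ass(I), then v_p(I^k) = α(I)·k − α(p) for all k ≥ 1. -/
open MvPolynomial

section Aux

variable {K : Type*} [Field K] {n : ℕ}

local notation "S" => MvPolynomial (Fin n) K

lemma aux_degree_add (a b : Fin n →₀ ℕ) :
    (a + b).degree = a.degree + b.degree := by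
  simp only [Finsupp.degree_eq_weight_one]; exact map_add _ a b

lemma aux_mem_support_degree {φ : S} {e : ℕ} (hf : φ.IsHomogeneous e)
    {m : Fin n →₀ ℕ} (hm : m ∈ φ.support) : m.degree = e := by
  by_contra h
  exact (MvPolynomial.mem_support_iff.mp hm) (hf.coeff_eq_zero h)

lemma aux_span_deg_le {G : Set S} {d : ℕ} (hG : ∀ g ∈ G, g.IsHomogeneous d) :
    ∀ f ∈ Ideal.span G, ∀ m ∈ f.support, d ≤ m.degree := by
  intro f hf
  induction hf using Submodule.span_induction with
  | mem g hg =>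
    intro m hm
    exact (aux_mem_support_degree (hG g hg) hm).ge
  | zero => intro m hm; simp at hm
  | add x y hx hy ihx ihy =>
    intro m hm
    rcases Finset.mem_union.mp (MvPolynomial.support_add hm) with h | h
    · exact ihx m h
    · exact ihy m h
  | smul a x hx ihx =>
    intro m hm
    rw [smul_eq_mul] at hm
    obtain ⟨m₁, hm₁, m₂, hm₂, rfl⟩ := Finset.mem_add.mp (MvPolynomial.support_mul a x hm)
    rw [aux_degree_add]
    exact le_add_of_le_right (ihx m₂ hm₂)

lemma aux_pow_deg_le {I : Ideal S} {d : ℕ}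
    (h1 : ∀ f ∈ I, ∀ m ∈ f.support, d ≤ m.degree) :
    ∀ k : ℕ, 1 ≤ k → ∀ f ∈ I ^ k, ∀ m ∈ f.support, k * d ≤ m.degree := by
  intro k hk
  induction k with
  | zero => omega
  | succ k ih =>
    rcases Nat.eq_zero_or_pos k with rfl | hk1
    · intro f hf m hm
      rw [pow_one] at hf
      rw [Nat.zero_add, one_mul]
      exact h1 f hf m hm
    · intro f hf
      rw [pow_succ] at hf
      refine Submodule.mul_induction_on hf ?_ ?_
      · intro g hg h' hh m hm
        obtain ⟨m₁, hm₁, m₂, hm₂, rfl⟩ := Finset.mem_add.mp (MvPolynomial.support_mul g h' hm)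
        rw [aux_degree_add, Nat.succ_mul]
        exact add_le_add (ih hk1 g hg m₁ hm₁) (h1 h' hh m₂ hm₂)
      · intro x y ihx ihy m hm
        rcases Finset.mem_union.mp (MvPolynomial.support_add hm) with h | h
        · exact ihx m h
        · exact ihy m h


lemma aux_hc_mul_low {b : S} {t : ℕ} (hb : b.IsHomogeneous t) (x : S) {j : ℕ} (hj : j < t) :
    homogeneousComponent j (b * x) = 0 := by
  apply homogeneousComponent_eq_zero'
  intro m hm
  obtain ⟨m₁, hm₁, m₂, hm₂, rfl⟩ := Finset.mem_add.mp (MvPolynomial.support_mul b x hm)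
  rw [aux_degree_add, aux_mem_support_degree hb hm₁]
  omega

lemma aux_hc_mul {b : S} {t : ℕ} (hb : b.IsHomogeneous t) (x : S) (j : ℕ) :
    homogeneousComponent (t + j) (b * x) = b * homogeneousComponent j x := by
  conv_lhs => rw [← sum_homogeneousComponent x, Finset.mul_sum, map_sum]
  have hterm : ∀ i : ℕ, homogeneousComponent (t + j) (b * homogeneousComponent i x)
      = if i = j then b * homogeneousComponent i x else 0 := by
    intro i
    have hmem : b * homogeneousComponent i x ∈ homogeneousSubmodule (Fin n) K (t + i) :=
      (mem_homogeneousSubmodule _ _).mpr (hb.mul (homogeneousComponent_isHomogeneous i x))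
    rw [homogeneousComponent_of_mem hmem]
    by_cases h : i = j
    · subst h; simp
    · rw [if_neg (by omega), if_neg h]
  simp_rw [hterm]
  rw [Finset.sum_ite_eq' (Finset.range (x.totalDegree + 1)) j
    (fun i => b * homogeneousComponent i x)]
  by_cases hjx : j ∈ Finset.range (x.totalDegree + 1)
  · rw [if_pos hjx]
  · rw [if_neg hjx]
    rw [homogeneousComponent_eq_zero _ x (by simpa using hjx), mul_zero]

lemma aux_span_hc_mem {G : Set S} (hG : ∀ g ∈ G, ∃ e, g.IsHomogeneous e) :
    ∀ f ∈ Ideal.span G, ∀ j, homogeneousComponent j f ∈ Ideal.span G := by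
  intro f hf
  induction hf using Submodule.span_induction with
  | mem g hg =>
    intro j
    obtain ⟨e, he⟩ := hG g hg
    rw [homogeneousComponent_of_mem ((mem_homogeneousSubmodule _ _).mpr he)]
    by_cases h : j = e
    · rw [if_pos h]; exact Ideal.subset_span hg
    · rw [if_neg h]; exact zero_mem _
  | zero => intro j; rw [map_zero]; exact zero_mem _
  | add x y hx hy ihx ihy =>
    intro j
    rw [map_add]; exact add_mem (ihx j) (ihy j)
  | smul a x hx ihx =>
    intro j
    rw [smul_eq_mul]
    have hrw : homogeneousComponent j (a * x) = ∑ i ∈ Finset.range (a.totalDegree + 1),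
        homogeneousComponent j (homogeneousComponent i a * x) := by
      conv_lhs => rw [← sum_homogeneousComponent a, Finset.sum_mul, map_sum]
    rw [hrw]
    refine Ideal.sum_mem _ ?_
    intro i _
    by_cases h : i ≤ j
    · obtain ⟨j', rfl⟩ := Nat.exists_eq_add_of_le h
      rw [aux_hc_mul (homogeneousComponent_isHomogeneous i a) x j']
      exact Ideal.mul_mem_left _ _ (ihx j')
    · rw [aux_hc_mul_low (homogeneousComponent_isHomogeneous i a) x (by omega)]
      exact zero_mem _
lemma aux_sub_comp_mem {x : S} (s : ℕ) {m : Fin n →₀ ℕ}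
    (hm : m ∈ (x - homogeneousComponent s x).support) :
    m.degree ≠ s ∧ m ∈ x.support := by
  have hco : MvPolynomial.coeff m (x - homogeneousComponent s x)
      = if m.degree = s then 0 else MvPolynomial.coeff m x := by
    rw [MvPolynomial.coeff_sub, coeff_homogeneousComponent]
    split
    · ring
    · ring
  rw [MvPolynomial.mem_support_iff, hco] at hm
  by_cases h : m.degree = s
  · rw [if_pos h] at hm; exact absurd rfl hm
  · rw [if_neg h] at hm
    exact ⟨h, MvPolynomial.mem_support_iff.mpr hm⟩

lemma aux_sub_comp_card {x : S} {s : ℕ} (hs : s ∈ x.support.image Finsupp.degree) :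
    ((x - homogeneousComponent s x).support.image Finsupp.degree).card
      ≤ (x.support.image Finsupp.degree).card - 1 := by
  have hsub : (x - homogeneousComponent s x).support.image Finsupp.degree
      ⊆ (x.support.image Finsupp.degree).erase s := by
    intro e he
    obtain ⟨m, hm, rfl⟩ := Finset.mem_image.mp he
    obtain ⟨h1, h2⟩ := aux_sub_comp_mem s hm
    exact Finset.mem_erase.mpr ⟨h1, Finset.mem_image_of_mem _ h2⟩
  calc ((x - homogeneousComponent s x).support.image Finsupp.degree).card
      ≤ ((x.support.image Finsupp.degree).erase s).card := Finset.card_le_card hsub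
    _ = (x.support.image Finsupp.degree).card - 1 := Finset.card_erase_of_mem hs

lemma aux_engine {I : Ideal S}
    (hcomp : ∀ f ∈ I, ∀ j, homogeneousComponent j f ∈ I) :
    ∀ (r : ℕ) (x : S), (x.support.image Finsupp.degree).card ≤ r →
    ∀ (a b : S) (t : ℕ), b.IsHomogeneous t → (∀ m ∈ (a - b).support, t < m.degree) →
      a * x ∈ I → b ^ r * x ∈ I := by
  intro r
  induction r with
  | zero =>
    intro x hx a b t hb hab hax
    have hx0 : x = 0 := by
      by_contra h
      have h2 : (x.support.image Finsupp.degree).Nonempty :=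
        Finset.Nonempty.image (MvPolynomial.support_nonempty.mpr h) _
      have h3 := Finset.card_pos.mpr h2
      omega
    rw [hx0, mul_zero]
    exact zero_mem _
  | succ r ih =>
    intro x hx a b t hb hab hax
    by_cases hx0 : x = 0
    · rw [hx0, mul_zero]; exact zero_mem _
    have hsn : (x.support.image Finsupp.degree).Nonempty :=
      Finset.Nonempty.image (MvPolynomial.support_nonempty.mpr hx0) _
    set D := x.support.image Finsupp.degree with hD
    set s := D.min' hsn with hs
    set x₁ := homogeneousComponent s x with hx₁def
    set x' := x - x₁ with hx'def
    have hx₁hom : x₁.IsHomogeneous s := homogeneousComponent_isHomogeneous s x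
    have hx'mem : ∀ m ∈ x'.support, s < m.degree := by
      intro m hm
      obtain ⟨h1, h2⟩ := aux_sub_comp_mem s hm
      have : s ≤ m.degree := D.min'_le _ (Finset.mem_image_of_mem _ h2)
      omega
    have hxmem : ∀ m ∈ x.support, s ≤ m.degree := fun m hm =>
      D.min'_le _ (Finset.mem_image_of_mem _ hm)
    have hcard' : (x'.support.image Finsupp.degree).card ≤ r := by
      have h1 : (x'.support.image Finsupp.degree).card ≤ D.card - 1 := by
        rw [hx'def, hx₁def, hD]
        exact aux_sub_comp_card (Finset.min'_mem _ hsn)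
      have h2 : D.card ≤ r + 1 := hx
      have h3 := Finset.card_pos.mpr hsn
      omega
    -- the key component computation
    have hax2 : a * x = b * x₁ + (b * x' + (a - b) * x) := by ring
    have hbx'0 : homogeneousComponent (t + s) (b * x') = 0 := by
      apply homogeneousComponent_eq_zero'
      intro m hm
      obtain ⟨m₁, hm₁, m₂, hm₂, rfl⟩ := Finset.mem_add.mp (MvPolynomial.support_mul b x' hm)
      rw [aux_degree_add, aux_mem_support_degree hb hm₁]
      have := hx'mem m₂ hm₂
      omega
    have habx0 : homogeneousComponent (t + s) ((a - b) * x) = 0 := by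
      apply homogeneousComponent_eq_zero'
      intro m hm
      obtain ⟨m₁, hm₁, m₂, hm₂, rfl⟩ := Finset.mem_add.mp
        (MvPolynomial.support_mul (a - b) x hm)
      rw [aux_degree_add]
      have h1 := hab m₁ hm₁
      have h2 := hxmem m₂ hm₂
      omega
    have hbx₁ : homogeneousComponent (t + s) (b * x₁) = b * x₁ := by
      rw [homogeneousComponent_of_mem
        ((mem_homogeneousSubmodule _ _).mpr (hb.mul hx₁hom))]
      simp
    have hbx₁I : b * x₁ ∈ I := by
      have hcc := hcomp _ hax (t + s)
      rw [hax2, map_add, map_add, hbx'0, habx0, hbx₁, add_zero, add_zero] at hcc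
      exact hcc
    have hax'' : a * (b * x') ∈ I := by
      have h1 : a * (b * x') = b * (a * x) - a * (b * x₁) := by
        rw [hx'def]; ring
      rw [h1]
      exact sub_mem (Ideal.mul_mem_left _ _ hax) (Ideal.mul_mem_left _ _ hbx₁I)
    have hcard'' : ((b * x').support.image Finsupp.degree).card ≤ r := by
      have hsub : (b * x').support.image Finsupp.degree
          ⊆ (x'.support.image Finsupp.degree).image (t + ·) := by
        intro e he
        obtain ⟨m, hm, rfl⟩ := Finset.mem_image.mp he
        obtain ⟨m₁, hm₁, m₂, hm₂, rfl⟩ := Finset.mem_add.mp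
          (MvPolynomial.support_mul b x' hm)
        rw [aux_degree_add, aux_mem_support_degree hb hm₁]
        exact Finset.mem_image.mpr ⟨m₂.degree, Finset.mem_image_of_mem _ hm₂, rfl⟩
      calc ((b * x').support.image Finsupp.degree).card
          ≤ ((x'.support.image Finsupp.degree).image (t + ·)).card :=
            Finset.card_le_card hsub
        _ ≤ (x'.support.image Finsupp.degree).card := Finset.card_image_le
        _ ≤ r := hcard'
    have hbr : b ^ r * (b * x') ∈ I := ih (b * x') hcard'' a b t hb hab hax''
    have hfin1 : b ^ (r + 1) * x₁ ∈ I := by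
      rw [show b ^ (r + 1) * x₁ = b ^ r * (b * x₁) by ring]
      exact Ideal.mul_mem_left _ _ hbx₁I
    have hfin2 : b ^ (r + 1) * x' ∈ I := by
      rw [show b ^ (r + 1) * x' = b ^ r * (b * x') by ring]
      exact hbr
    have : b ^ (r + 1) * x = b ^ (r + 1) * x₁ + b ^ (r + 1) * x' := by
      rw [hx'def]; ring
    rw [this]
    exact add_mem hfin1 hfin2
lemma aux_prime_hc_mem {I p : Ideal S}
    (hcomp : ∀ f ∈ I, ∀ j, homogeneousComponent j f ∈ I)
    (hpp : p.IsPrime) (m₀ : S) (hpm : ∀ a : S, a ∈ p ↔ a * m₀ ∈ I) :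
    ∀ a ∈ p, ∀ j, homogeneousComponent j a ∈ p := by
  suffices h : ∀ c : ℕ, ∀ a : S, (a.support.image Finsupp.degree).card ≤ c → a ∈ p →
      ∀ j, homogeneousComponent j a ∈ p by
    intro a ha j; exact h _ a le_rfl ha j
  intro c
  induction c with
  | zero =>
    intro a hac hap j
    have ha0 : a = 0 := by
      by_contra h
      have h2 : (a.support.image Finsupp.degree).Nonempty :=
        Finset.Nonempty.image (MvPolynomial.support_nonempty.mpr h) _
      have h3 := Finset.card_pos.mpr h2
      omega
    rw [ha0, map_zero]
    exact zero_mem _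
  | succ c ih =>
    intro a hac hap j
    by_cases ha0 : a = 0
    · rw [ha0, map_zero]; exact zero_mem _
    have hsn : (a.support.image Finsupp.degree).Nonempty :=
      Finset.Nonempty.image (MvPolynomial.support_nonempty.mpr ha0) _
    set D := a.support.image Finsupp.degree with hD
    set t := D.min' hsn with ht
    set b := homogeneousComponent t a with hbdef
    have hb : b.IsHomogeneous t := homogeneousComponent_isHomogeneous t a
    have hab : ∀ m ∈ (a - b).support, t < m.degree := by
      intro m hm
      rw [hbdef] at hm
      obtain ⟨h1, h2⟩ := aux_sub_comp_mem t hm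
      have : t ≤ m.degree := D.min'_le _ (Finset.mem_image_of_mem _ h2)
      omega
    have hbr : b ^ (m₀.support.image Finsupp.degree).card * m₀ ∈ I :=
      aux_engine hcomp _ m₀ le_rfl a b t hb hab ((hpm a).mp hap)
    have hbp : b ∈ p := hpp.mem_of_pow_mem _ ((hpm _).mpr hbr)
    have habp : a - b ∈ p := sub_mem hap hbp
    have hcard' : ((a - b).support.image Finsupp.degree).card ≤ c := by
      have h1 : ((a - b).support.image Finsupp.degree).card ≤ D.card - 1 := by
        rw [hbdef, hD]
        exact aux_sub_comp_card (Finset.min'_mem _ hsn)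
      have h2 : D.card ≤ c + 1 := hac
      have h3 := Finset.card_pos.mpr hsn
      omega
    have hsplit : homogeneousComponent j a
        = homogeneousComponent j (a - b) + homogeneousComponent j b := by
      rw [← map_add]
      congr 1
      ring
    rw [hsplit]
    refine add_mem (ih (a - b) hcard' habp j) ?_
    rw [homogeneousComponent_of_mem ((mem_homogeneousSubmodule _ _).mpr hb)]
    split
    · exact hbp
    · exact zero_mem _

lemma aux_prime_select {p : Ideal S} (hpp : p.IsPrime) {ι : Type*} (s : Finset ι)
    (J : ι → Ideal S) (hsub : ∀ i ∈ s, p ≤ J i)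
    (hint : ∀ w : S, (∀ i ∈ s, w ∈ J i) → w ∈ p) :
    ∃ i ∈ s, J i = p := by
  by_contra hcon
  push_neg at hcon
  have hex : ∀ i ∈ s, ∃ w ∈ J i, w ∉ p := by
    intro i hi
    have hlt : p < J i := lt_of_le_of_ne (hsub i hi) (fun h => hcon i hi h.symm)
    exact SetLike.exists_of_lt hlt
  classical
  choose w hw1 hw2 using hex
  set W : S := ∏ i ∈ s.attach, w i.1 i.2 with hW
  have hWall : ∀ i ∈ s, W ∈ J i := by
    intro i hi
    rw [hW, ← Finset.mul_prod_erase s.attach _ (Finset.mem_attach s ⟨i, hi⟩)]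
    exact Ideal.mul_mem_right _ _ (hw1 i hi)
  have hWp : W ∈ p := hint W hWall
  rw [hW] at hWp
  obtain ⟨i, _, hip⟩ := Ideal.IsPrime.prod_mem_iff.mp hWp
  exact hw2 i.1 i.2 hip

lemma aux_finite_subspan {G : Set S} {I : Ideal S} (hI : I = Ideal.span G) :
    ∃ t : Finset S, ↑t ⊆ G ∧ I = Ideal.span (↑t : Set S) := by
  classical
  obtain ⟨T, hT⟩ := (IsNoetherian.noetherian I : I.FG)
  have hmem : ∀ x ∈ T, x ∈ Ideal.span G := by
    intro x hx
    rw [← hI]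
    rw [← hT]
    exact Submodule.subset_span hx
  choose! t ht1 ht2 using fun x hx => Submodule.mem_span_finite_of_mem_span (hmem x hx)
  refine ⟨T.biUnion t, ?_, ?_⟩
  · intro g hg
    obtain ⟨x, hx, hgx⟩ := Finset.mem_biUnion.mp hg
    exact ht1 x hx hgx
  · apply le_antisymm
    · rw [← hT]
      rw [Submodule.span_le]
      intro x hx
      have := ht2 x hx
      have hmono : (Ideal.span (↑(t x) : Set S) : Set S) ⊆ Ideal.span (↑(T.biUnion t) : Set S) := by
        apply Ideal.span_mono
        intro g hg
        exact Finset.mem_coe.mpr (Finset.mem_biUnion.mpr ⟨x, hx, hg⟩)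
      exact hmono this
    · rw [hI, Ideal.span_le]
      intro g hg
      obtain ⟨x, hx, hgx⟩ := Finset.mem_biUnion.mp hg
      exact Ideal.subset_span (ht1 x hx hgx)
lemma aux_ass_witness {G : Set S} {I p : Ideal S}
    (hG : ∀ g ∈ G, ∃ e, g.IsHomogeneous e) (hIG : I = Ideal.span G)
    (hp : IsAssociatedPrime p (MvPolynomial (Fin n) K ⧸ I)) :
    ∃ (e : ℕ) (f : S), f.IsHomogeneous e ∧ I.colon (Ideal.span {f}) = p := by
  classical
  obtain ⟨hpp, x, hx⟩ := isAssociatedPrime_iff.mp hp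
  obtain ⟨m, rfl⟩ := Ideal.Quotient.mkₐ_surjective (MvPolynomial (Fin n) K) _ x
  have hpm : ∀ a : S, a ∈ p ↔ a * m ∈ I := by
    intro a
    rw [hx, Submodule.mem_colon_singleton, Submodule.mem_bot, ← map_smul, smul_eq_mul,
      Ideal.Quotient.mkₐ_eq_mk, ← Ideal.Quotient.mk_eq_mk, Submodule.Quotient.mk_eq_zero]
  have hcomp : ∀ f ∈ I, ∀ j, homogeneousComponent j f ∈ I := by
    rw [hIG]; exact aux_span_hc_mem hG
  have hhc : ∀ a ∈ p, ∀ j, homogeneousComponent j a ∈ p :=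
    aux_prime_hc_mem hcomp hpp m hpm
  have hsub : ∀ e ∈ Finset.range (m.totalDegree + 1),
      p ≤ I.colon (Ideal.span {homogeneousComponent e m}) := by
    intro e _ a hap
    rw [Ideal.mem_colon_span_singleton]
    rw [show a * homogeneousComponent e m
        = ∑ j ∈ Finset.range (a.totalDegree + 1),
            homogeneousComponent j a * homogeneousComponent e m by
      rw [← Finset.sum_mul, sum_homogeneousComponent]]
    refine Ideal.sum_mem _ ?_
    intro j _
    have hja : homogeneousComponent j a * m ∈ I := (hpm _).mp (hhc a hap j)
    have h2 := hcomp _ hja (j + e)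
    rw [aux_hc_mul (homogeneousComponent_isHomogeneous j a) m e] at h2
    exact h2
  have hint : ∀ w : S, (∀ e ∈ Finset.range (m.totalDegree + 1),
      w ∈ I.colon (Ideal.span {homogeneousComponent e m})) → w ∈ p := by
    intro w hw
    rw [hpm]
    rw [show w * m = ∑ e ∈ Finset.range (m.totalDegree + 1),
        w * homogeneousComponent e m by rw [← Finset.mul_sum, sum_homogeneousComponent]]
    exact Ideal.sum_mem _ (fun e he => Ideal.mem_colon_span_singleton.mp (hw e he))
  obtain ⟨e, _, hecol⟩ := aux_prime_select hpp (Finset.range (m.totalDegree + 1)) _ hsub hint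
  exact ⟨e, homogeneousComponent e m, homogeneousComponent_isHomogeneous e m, hecol⟩
end Aux

/-- Let `I` be a proper nonzero equigenerated graded ideal with the strong
persistence property `(I^{k+1} : I) = I^k` for all `k ≥ 1`. If `v_p(I) = α(I) − α(p)`
for some `p ∈ Ass(I)`, then `v_p(I^k) = α(I)·k − α(p)` for all `k ≥ 1`. -/
theorem stmt5 {K : Type*} [Field K] {n : ℕ}
    (I : Ideal (MvPolynomial (Fin n) K))
    (hproper : I ≠ ⊤) (hne : I ≠ ⊥)
    (hequi : ∃ (d : ℕ) (G : Set (MvPolynomial (Fin n) K)),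
      (∀ f ∈ G, f.IsHomogeneous d) ∧ I = Ideal.span G)
    (hspp : ∀ k : ℕ, 1 ≤ k → (I ^ (k + 1)).colon I = I ^ k)
    (p : Ideal (MvPolynomial (Fin n) K)) (hp : p ∈ Ass I)
    (hv : (vNumberAt I p : ℤ) = (alphaNum I : ℤ) - (alphaNum p : ℤ)) :
    ∀ k : ℕ, 1 ≤ k →
      (vNumberAt (I ^ k) p : ℤ) = (alphaNum I : ℤ) * k - (alphaNum p : ℤ) := by
  classical
  obtain ⟨d, G, hG, hIG⟩ := hequi
  have hpp : p.IsPrime := hp.1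
  have hIdeg : ∀ f ∈ I, ∀ m ∈ f.support, d ≤ m.degree := by
    rw [hIG]; exact aux_span_deg_le hG
  have hIkdeg := aux_pow_deg_le hIdeg
  -- a nonzero generator
  have hgnz : ∃ g ∈ G, g ≠ 0 := by
    by_contra h
    push_neg at h
    apply hne
    rw [hIG, eq_bot_iff, Ideal.span_le]
    intro g hg
    simp [h g hg]
  obtain ⟨g₀, hg₀G, hg₀⟩ := hgnz
  -- alphaNum I = d
  have hdI : d ∈ {e | ∃ f ∈ I, f ≠ 0 ∧ f.totalDegree = e} :=
    ⟨g₀, by rw [hIG]; exact Ideal.subset_span hg₀G, hg₀, (hG g₀ hg₀G).totalDegree hg₀⟩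
  have hlbI : ∀ e ∈ {e | ∃ f ∈ I, f ≠ 0 ∧ f.totalDegree = e}, d ≤ e := by
    rintro e ⟨f, hfI, hf0, rfl⟩
    obtain ⟨m, hm⟩ := MvPolynomial.support_nonempty.mpr hf0
    calc d ≤ m.degree := hIdeg f hfI m hm
      _ ≤ f.totalDegree := le_totalDegree hm
  have halphaI : alphaNum I = d := by
    refine le_antisymm (Nat.sInf_le hdI) ?_
    exact hlbI _ (Nat.sInf_mem ⟨d, hdI⟩)
  -- homogeneous witness for p
  obtain ⟨e₀, f₀, hf₀h, hf₀c⟩ := aux_ass_witness (fun g hg => ⟨d, hG g hg⟩) hIG hp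
  have hWne : Set.Nonempty {e : ℕ | ∃ f : MvPolynomial (Fin n) K,
      f.IsHomogeneous e ∧ I.colon (Ideal.span {f}) = p} := ⟨e₀, f₀, hf₀h, hf₀c⟩
  set v := vNumberAt I p with hvdef
  have hvmem : v ∈ {e : ℕ | ∃ f : MvPolynomial (Fin n) K,
      f.IsHomogeneous e ∧ I.colon (Ideal.span {f}) = p} := by
    rw [hvdef]; unfold vNumberAt; exact Nat.sInf_mem hWne
  obtain ⟨f₁, hf₁h, hf₁c⟩ := hvmem
  -- I ≤ p
  have hIp : I ≤ p := by
    intro a ha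
    rw [← hf₁c, Ideal.mem_colon_span_singleton]
    exact I.mul_mem_right _ ha
  -- alphaNum p is attained
  obtain ⟨z, hzI, hz0⟩ := Submodule.exists_mem_ne_zero_of_ne_bot hne
  have hApne : {e | ∃ f ∈ p, f ≠ 0 ∧ f.totalDegree = e}.Nonempty :=
    ⟨z.totalDegree, z, hIp hzI, hz0, rfl⟩
  obtain ⟨u, hup, hu0, hudeg0⟩ := Nat.sInf_mem hApne
  have hudeg : u.totalDegree = alphaNum p := hudeg0
  -- numeric facts
  have hv' : (v : ℤ) = (d : ℤ) - (alphaNum p : ℤ) := by rw [hvdef, ← halphaI]; exact hv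
  have hvd : v + alphaNum p = d := by
    have h1 : (0 : ℤ) ≤ (v : ℤ) := Int.natCast_nonneg v
    have h2 : ((v + alphaNum p : ℕ) : ℤ) = (d : ℤ) := by push_cast; linarith
    exact_mod_cast h2
  -- finite generating subset of G
  obtain ⟨t, htG, hIt⟩ := aux_finite_subspan hIG
  -- witnesses for all powers
  have hwit : ∀ j : ℕ, ∃ f : MvPolynomial (Fin n) K,
      f.IsHomogeneous (v + j * d) ∧ (I ^ (j + 1)).colon (Ideal.span {f}) = p := by
    intro j
    induction j with
    | zero => exact ⟨f₁, by simpa using hf₁h, by rw [pow_one]; exact hf₁c⟩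
    | succ j ihj =>
      obtain ⟨f, hfh, hfc⟩ := ihj
      have hsub : ∀ g ∈ t, p ≤ (I ^ (j + 2)).colon (Ideal.span {f * g}) := by
        intro g hgt w hwp
        rw [Ideal.mem_colon_span_singleton]
        rw [← hfc] at hwp
        have h1 : w * f ∈ I ^ (j + 1) := Ideal.mem_colon_span_singleton.mp hwp
        have h2 : g ∈ I := by rw [hIG]; exact Ideal.subset_span (htG hgt)
        have h3 := Ideal.mul_mem_mul h1 h2
        rw [← pow_succ] at h3
        rw [show w * (f * g) = w * f * g by ring]
        exact h3
      have hint : ∀ w : MvPolynomial (Fin n) K,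
          (∀ g ∈ t, w ∈ (I ^ (j + 2)).colon (Ideal.span {f * g})) → w ∈ p := by
        intro w hw
        have hle : Ideal.span (↑t : Set (MvPolynomial (Fin n) K))
            ≤ (I ^ (j + 2)).colon (Ideal.span {w * f}) := by
          rw [Ideal.span_le]
          intro g hgt
          rw [SetLike.mem_coe, Ideal.mem_colon_span_singleton]
          have h4 := Ideal.mem_colon_span_singleton.mp (hw g hgt)
          rw [show g * (w * f) = w * (f * g) by ring]
          exact h4
        have hwf : w * f ∈ (I ^ (j + 2)).colon I := by
          rw [Submodule.mem_colon]
          intro y hy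
          have hyt : y ∈ Ideal.span (↑t : Set (MvPolynomial (Fin n) K)) := by
            rw [← hIt]; exact hy
          have h5 := Ideal.mem_colon_span_singleton.mp (hle hyt)
          rw [smul_eq_mul, mul_comm]
          exact h5
        rw [hspp (j + 1) (by omega)] at hwf
        have h6 : w ∈ (I ^ (j + 1)).colon (Ideal.span {f}) :=
          Ideal.mem_colon_span_singleton.mpr hwf
        rw [hfc] at h6
        exact h6
      obtain ⟨g, hgt, hgc⟩ := aux_prime_select hpp t
        (fun g => (I ^ (j + 2)).colon (Ideal.span {f * g})) hsub hint
      refine ⟨f * g, ?_, hgc⟩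
      rw [show v + (j + 1) * d = (v + j * d) + d by ring]
      exact hfh.mul (hG g (htG hgt))
  -- conclusion
  intro k hk
  obtain ⟨j, rfl⟩ : ∃ j, k = j + 1 := ⟨k - 1, by omega⟩
  obtain ⟨F, hFh, hFc⟩ := hwit j
  have hlow : ∀ E : ℕ, (∃ f : MvPolynomial (Fin n) K, f.IsHomogeneous E ∧
      (I ^ (j + 1)).colon (Ideal.span {f}) = p) → v + j * d ≤ E := by
    rintro E ⟨f, hfh, hfc⟩
    have hf0 : f ≠ 0 := by
      rintro rfl
      apply hpp.ne_top
      rw [← hfc, eq_top_iff]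
      intro w _
      rw [Ideal.mem_colon_span_singleton, mul_zero]
      exact zero_mem _
    have hup' : u * f ∈ I ^ (j + 1) := by
      have h7 : u ∈ (I ^ (j + 1)).colon (Ideal.span {f}) := by rw [hfc]; exact hup
      exact Ideal.mem_colon_span_singleton.mp h7
    have huf0 : u * f ≠ 0 := mul_ne_zero hu0 hf0
    obtain ⟨m, hm⟩ := MvPolynomial.support_nonempty.mpr huf0
    have h1 : (j + 1) * d ≤ m.degree := hIkdeg (j + 1) (by omega) _ hup' m hm
    have h2 : m.degree ≤ (u * f).totalDegree := le_totalDegree hm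
    have h3 : (u * f).totalDegree ≤ u.totalDegree + f.totalDegree :=
      MvPolynomial.totalDegree_mul u f
    have h4 : f.totalDegree = E := hfh.totalDegree hf0
    have h5 : (j + 1) * d ≤ alphaNum p + E := by rw [← hudeg, ← h4]; omega
    have h6 : (j + 1) * d = j * d + v + alphaNum p := by rw [← hvd]; ring
    omega
  have hmem2 : (v + j * d) ∈ {e : ℕ | ∃ f : MvPolynomial (Fin n) K, f.IsHomogeneous e ∧
      (I ^ (j + 1)).colon (Ideal.span {f}) = p} := ⟨F, hFh, hFc⟩
  have hvk : vNumberAt (I ^ (j + 1)) p = v + j * d := by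
    unfold vNumberAt
    refine le_antisymm (Nat.sInf_le hmem2) ?_
    exact hlow _ (Nat.sInf_mem ⟨v + j * d, hmem2⟩)
  rw [hvk, halphaI]
  have hcast : ((v + j * d : ℕ) : ℤ) = (v : ℤ) + (j : ℤ) * (d : ℤ) := by push_cast; ring
  rw [hcast, hv']
  push_cast
  ring
end

section
/- Let S = K[x_1,…,x_n] be a standard graded polynomial ring over a field K and I ⊂ S a proper nonzero graded ideal generated by homogeneous polynomials all of the same degree, satisfying the strong persistence property (I^{k+1} : I) = I^k for all k ≥ 1. If v(I) = α(I) − c(I), then v(I^k) = α(I)·k − c(I) for all k ≥ 1. -/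
open MvPolynomial

open MvPolynomial

section General
variable {R : Type*} [CommRing R]

lemma smul_mk_eq {I : Ideal R} (r f : R) :
    r • (Ideal.Quotient.mk I f) = Ideal.Quotient.mk I (r * f) := by
  simp [Algebra.smul_def, Ideal.Quotient.algebraMap_eq, ← map_mul]

/-- colon by a single element equals annihilator of its class in the quotient. -/
lemma colon_eq_annihilator (I : Ideal R) (f : R) :
    I.colon (Ideal.span {f}) = (Submodule.span R {(Ideal.Quotient.mk I f : R ⧸ I)}).annihilator := by
  ext r
  rw [Ideal.mem_colon_span_singleton, Submodule.mem_annihilator_span_singleton, smul_mk_eq,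
    Ideal.Quotient.eq_zero_iff_mem]

lemma colon_bot_eq (I : Ideal R) (f : R) :
    (⊥ : Submodule R (R ⧸ I)).colon {Ideal.Quotient.mk I f} = I.colon (Ideal.span {f}) := by
  ext r
  rw [Submodule.mem_colon_singleton, Submodule.mem_bot, Ideal.mem_colon_span_singleton, smul_mk_eq,
    Ideal.Quotient.eq_zero_iff_mem]

lemma colon_mem_associatedPrimes {I : Ideal R} {f : R}
    (h : (I.colon (Ideal.span {f})).IsPrime) :
    I.colon (Ideal.span {f}) ∈ associatedPrimes R (R ⧸ I) :=
  ⟨h, Ideal.Quotient.mk I f, by rw [colon_bot_eq, h.radical]⟩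

lemma le_of_mem_associatedPrimes {I p : Ideal R}
    (h : p ∈ associatedPrimes R (R ⧸ I)) : I ≤ p := by
  obtain ⟨-, x, rfl⟩ := h
  intro i hi
  refine Ideal.le_radical ?_
  rw [Submodule.mem_colon_singleton, Submodule.mem_bot]
  obtain ⟨y, rfl⟩ := Ideal.Quotient.mk_surjective x
  rw [smul_mk_eq, Ideal.Quotient.eq_zero_iff_mem]
  exact I.mul_mem_right _ hi

theorem minimalPrimes_mem_associatedPrimes [IsNoetherianRing R] {I Q : Ideal R}
    (hQ : Q ∈ I.minimalPrimes) : Q ∈ associatedPrimes R (R ⧸ I) := by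
  classical
  obtain ⟨⟨hQprime, hIQ⟩, hQmin⟩ := hQ
  have honeQ : (1 : R) ∉ Q := fun h => hQprime.ne_top ((Ideal.eq_top_iff_one Q).2 h)
  -- the saturation of I at Q
  set Isat : Ideal R :=
    { carrier := {s | ∃ w, w ∉ Q ∧ w * s ∈ I}
      zero_mem' := ⟨1, honeQ, by simp⟩
      add_mem' := by
        rintro a b ⟨w, hw, hwa⟩ ⟨u, hu, hub⟩
        refine ⟨w * u, fun hmem => ?_, ?_⟩
        · rcases hQprime.mem_or_mem hmem with h | h
          exacts [hw h, hu h]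
        · have h1 : (w * u) * (a + b) = u * (w * a) + w * (u * b) := by ring
          rw [h1]
          exact I.add_mem (I.mul_mem_left _ hwa) (I.mul_mem_left _ hub)
      smul_mem' := by
        rintro c x ⟨w, hw, hwx⟩
        refine ⟨w, hw, ?_⟩
        have h2 : w * (c • x) = c * (w * x) := by
          rw [smul_eq_mul]; ring
        rw [h2]
        exact I.mul_mem_left _ hwx } with hIsatdef
  have hI_le : I ≤ Isat := fun s hs => ⟨1, honeQ, by simpa using hs⟩
  have hsat_le : Isat ≤ Q := by
    rintro s ⟨w, hw, hws⟩
    rcases hQprime.mem_or_mem (hIQ hws) with h | h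
    · exact absurd h hw
    · exact h
  have hone : (1 : R) ∉ Isat := fun h => honeQ (hsat_le h)
  have hcolon_le : ∀ y : R, y ∉ Isat → Isat.colon (Ideal.span {y}) ≤ Q := by
    intro y hy r hr
    rw [Ideal.mem_colon_span_singleton] at hr
    by_contra hrQ
    obtain ⟨w, hw, hwr⟩ := hr
    exact hy ⟨w * r, fun hmem => (hQprime.mem_or_mem hmem).elim hw hrQ,
      by rwa [show (w * r) * y = w * (r * y) by ring]⟩
  obtain ⟨J, ⟨x, hx, rfl⟩, hJmax⟩ :=
    set_has_maximal_iff_noetherian.mpr inferInstance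
      {J | ∃ y, y ∉ Isat ∧ J = Isat.colon (Ideal.span {y})}
      ⟨Isat.colon (Ideal.span {(1 : R)}), 1, hone, by rfl⟩
  have hJprime : (Isat.colon (Ideal.span {x})).IsPrime := by
    constructor
    · intro htop
      have : (1 : R) ∈ Isat.colon (Ideal.span {x}) := htop ▸ trivial
      rw [Ideal.mem_colon_span_singleton, one_mul] at this
      exact hx this
    · intro a b hab
      rw [Ideal.mem_colon_span_singleton] at hab
      by_cases hb : b ∈ Isat.colon (Ideal.span {x})
      · exact Or.inr hb
      · left
        rw [Ideal.mem_colon_span_singleton] at hb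
        have hxb : x * b ∉ Isat := by rwa [mul_comm] at hb
        have hle : Isat.colon (Ideal.span {x}) ≤ Isat.colon (Ideal.span {x * b}) := by
          intro r hr
          rw [Ideal.mem_colon_span_singleton] at hr ⊢
          rw [show r * (x * b) = (r * x) * b by ring]
          exact Isat.mul_mem_right _ hr
        have heq : Isat.colon (Ideal.span {x * b}) = Isat.colon (Ideal.span {x}) := by
          by_contra hne
          exact hJmax _ ⟨x * b, hxb, rfl⟩ (lt_of_le_of_ne hle (Ne.symm hne))
        rw [← heq, Ideal.mem_colon_span_singleton, show a * (x * b) = (a * b) * x by ring]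
        exact hab
  have hIsat_le_colon : Isat ≤ Isat.colon (Ideal.span {x}) := fun s hs => by
    rw [Ideal.mem_colon_span_singleton]; exact Isat.mul_mem_right _ hs
  have hQeq : Isat.colon (Ideal.span {x}) = Q :=
    le_antisymm (hcolon_le x hx)
      (hQmin ⟨hJprime, le_trans hI_le hIsat_le_colon⟩ (hcolon_le x hx))
  -- transfer back to a colon of I itself
  obtain ⟨T, hTspan⟩ : Q.FG := IsNoetherian.noetherian Q
  have hTmem : ∀ t : R, t ∈ T → ∃ w, w ∉ Q ∧ w * (t * x) ∈ I := by
    intro t ht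
    have h3 : t ∈ Q := hTspan ▸ Ideal.subset_span ht
    rw [← hQeq, Ideal.mem_colon_span_singleton] at h3
    exact h3
  choose w' hw'1 hw'2 using hTmem
  set w : R := ∏ s ∈ T.attach, w' s s.2 with hwdef
  have hwQ : w ∉ Q := by
    refine Finset.prod_induction _ (· ∉ Q) (fun a b ha hb hab => ?_) honeQ
      (fun s _ => hw'1 s s.2)
    rcases hQprime.mem_or_mem hab with h | h
    exacts [ha h, hb h]
  have hQcolon : I.colon (Ideal.span {w * x}) = Q := by
    refine le_antisymm ?_ ?_
    · intro r hr
      rw [Ideal.mem_colon_span_singleton] at hr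
      have hrx : r * x ∈ Isat := ⟨w, hwQ, by rwa [show w * (r * x) = r * (w * x) by ring]⟩
      rw [← hQeq, Ideal.mem_colon_span_singleton]
      exact hrx
    · rw [← hTspan, Ideal.span_le]
      intro t ht
      rw [SetLike.mem_coe, Ideal.mem_colon_span_singleton]
      have hsplit : w = w' t ht * ∏ s ∈ T.attach.erase ⟨t, ht⟩, w' s s.2 :=
        (Finset.mul_prod_erase T.attach _ (Finset.mem_attach T ⟨t, ht⟩)).symm
      rw [show t * (w * x) = (w * (t * x)) by ring, hsplit,
        show (w' t ht * ∏ s ∈ T.attach.erase ⟨t, ht⟩, w' s s.2) * (t * x)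
          = (w' t ht * (t * x)) * ∏ s ∈ T.attach.erase ⟨t, ht⟩, w' s s.2 by ring]
      exact I.mul_mem_right _ (hw'2 t ht)
  exact ⟨hQprime, Ideal.Quotient.mk I (w * x), by rw [colon_bot_eq, hQcolon, hQprime.radical]⟩

/-- A finitely generated span admits a finite generating subset. -/
lemma exists_finset_span_eq [IsNoetherianRing R] (G : Set R) :
    ∃ F : Finset R, ↑F ⊆ G ∧ Ideal.span (F : Set R) = Ideal.span G := by
  classical
  obtain ⟨J, ⟨F, hFsub, rfl⟩, hmax⟩ :=
    set_has_maximal_iff_noetherian.mpr inferInstance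
      {J | ∃ F : Finset R, ↑F ⊆ G ∧ J = Ideal.span (F : Set R)}
      ⟨⊥, ∅, by simp, by simp⟩
  refine ⟨F, hFsub, le_antisymm (Ideal.span_mono hFsub) (Ideal.span_le.2 fun g hg => ?_)⟩
  have hle : Ideal.span (F : Set R) ≤ Ideal.span (↑(insert g F) : Set R) := by
    apply Ideal.span_mono; simp [Finset.coe_insert, Set.subset_insert]
  have hmem : ∃ F' : Finset R, ↑F' ⊆ G ∧
      Ideal.span (↑(insert g F) : Set R) = Ideal.span (↑F' : Set R) :=
    ⟨insert g F, by simp [Finset.coe_insert, Set.insert_subset_iff, hg, hFsub], rfl⟩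
  obtain ⟨F', hF', hF'eq⟩ := hmem
  have heq : Ideal.span (↑(insert g F) : Set R) = Ideal.span (F : Set R) := by
    by_contra hne
    exact hmax _ ⟨insert g F, by simp [Finset.coe_insert, Set.insert_subset_iff, hg, hFsub], rfl⟩
      (lt_of_le_of_ne hle (Ne.symm hne))
  have : g ∈ Ideal.span (↑(insert g F) : Set R) :=
    Ideal.subset_span (by simp)
  rwa [heq] at this

end General
open MvPolynomial DirectSum

attribute [local instance] MvPolynomial.gradedAlgebra

section Graded
variable {K : Type*} [Field K] {n : ℕ}

local notation "S" => MvPolynomial (Fin n) K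
local notation "𝒜" => homogeneousSubmodule (Fin n) K

lemma decompose_mul_hom_mem {I : Ideal S} (hI : I.IsHomogeneous 𝒜) {f : S} {d : ℕ}
    (hf : f ∈ 𝒜 d) {r : S} (hr : r * f ∈ I) (i : ℕ) :
    (DirectSum.decompose 𝒜 r i : S) * f ∈ I := by
  classical
  have key : (DirectSum.decompose 𝒜 r i : S) * f
      = (DirectSum.decompose 𝒜 (r * f) (i + d) : S) := by
    conv_rhs => rw [← DirectSum.sum_support_decompose 𝒜 r, Finset.sum_mul]
    rw [DirectSum.decompose_sum]
    rw [DFinsupp.finset_sum_apply]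
    push_cast
    rw [Finset.sum_eq_single i]
    · have hm : (DirectSum.decompose 𝒜 r i : S) * f ∈ 𝒜 (i + d) :=
        SetLike.mul_mem_graded (SetLike.coe_mem _) hf
      rw [DirectSum.decompose_of_mem 𝒜 hm, DirectSum.coe_of_apply, if_pos rfl]
    · intro k _ hk
      have hm : (DirectSum.decompose 𝒜 r k : S) * f ∈ 𝒜 (k + d) :=
        SetLike.mul_mem_graded (SetLike.coe_mem _) hf
      rw [DirectSum.decompose_of_mem 𝒜 hm, DirectSum.coe_of_apply, if_neg (by omega)]
      rfl
    · intro hi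
      rw [DFinsupp.notMem_support_iff.mp hi]
      simp
  rw [key]
  exact hI _ hr

lemma colon_isHomogeneous {I : Ideal S} (hI : I.IsHomogeneous 𝒜) {f : S} {d : ℕ}
    (hf : f.IsHomogeneous d) : (I.colon (Ideal.span {f})).IsHomogeneous 𝒜 := by
  intro i r hr
  rw [Ideal.mem_colon_span_singleton] at hr ⊢
  exact decompose_mul_hom_mem hI ((mem_homogeneousSubmodule _ _).2 hf) hr i

/-- For a proper homogeneous ideal there is a homogeneous `f` with `(I : f)` prime. -/
lemma exists_colon_prime {I : Ideal S} (hI : I.IsHomogeneous 𝒜) (hproper : I ≠ ⊤) :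
    ∃ (f : S) (d : ℕ), f.IsHomogeneous d ∧ (I.colon (Ideal.span {f})).IsPrime := by
  classical
  obtain ⟨J, ⟨f, ⟨d, hfd⟩, hfI, rfl⟩, hJmax⟩ :=
    set_has_maximal_iff_noetherian.mpr inferInstance
      {J | ∃ f, SetLike.IsHomogeneousElem 𝒜 f ∧ f ∉ I ∧ J = I.colon (Ideal.span {f})}
      ⟨I.colon (Ideal.span {(1 : S)}), 1, ⟨0, (mem_homogeneousSubmodule _ _).2 (isHomogeneous_one _ _)⟩,
        fun h => hproper ((Ideal.eq_top_iff_one I).2 h), by rfl⟩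
  refine ⟨f, d, (mem_homogeneousSubmodule _ _).1 hfd, ?_⟩
  have hq : (I.colon (Ideal.span {f})).IsHomogeneous 𝒜 :=
    colon_isHomogeneous hI ((mem_homogeneousSubmodule _ _).1 hfd)
  refine hq.isPrime_of_homogeneous_mem_or_mem ?_ ?_
  · intro htop
    have : (1 : S) ∈ I.colon (Ideal.span {f}) := htop ▸ trivial
    rw [Ideal.mem_colon_span_singleton, one_mul] at this
    exact hfI this
  · intro x y hx hy hxy
    rw [Ideal.mem_colon_span_singleton] at hxy
    by_cases hymem : y ∈ I.colon (Ideal.span {f})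
    · exact Or.inr hymem
    · left
      rw [Ideal.mem_colon_span_singleton] at hymem
      have hfy : f * y ∉ I := by rwa [mul_comm] at hymem
      have hfyhom : SetLike.IsHomogeneousElem 𝒜 (f * y) := SetLike.IsHomogeneousElem.mul ⟨d, hfd⟩ hy
      have hle : I.colon (Ideal.span {f}) ≤ I.colon (Ideal.span {f * y}) := by
        intro r hr
        rw [Ideal.mem_colon_span_singleton] at hr ⊢
        rw [show r * (f * y) = (r * f) * y by ring]
        exact I.mul_mem_right _ hr
      have heq : I.colon (Ideal.span {f * y}) = I.colon (Ideal.span {f}) := by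
        by_contra hne
        exact hJmax _ ⟨f * y, hfyhom, hfy, rfl⟩ (lt_of_le_of_ne hle (Ne.symm hne))
      rw [← heq, Ideal.mem_colon_span_singleton, show x * (f * y) = (x * y) * f by ring]
      exact hxy

end Graded

section Degree
variable {K : Type*} [Field K] {n : ℕ}
local notation "S" => MvPolynomial (Fin n) K

/-- The ideal of polynomials all of whose monomials have degree at least `m`. -/
def lowIdeal (K : Type*) [Field K] (n m : ℕ) : Ideal (MvPolynomial (Fin n) K) where
  carrier := {h | ∀ b ∈ h.support, m ≤ b.sum fun _ e => e}
  zero_mem' := by simp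
  add_mem' := by
    intro a b ha hb c hc
    classical
    rcases Finset.mem_union.mp (MvPolynomial.support_add hc) with h | h
    exacts [ha c h, hb c h]
  smul_mem' := by
    intro c x hx b hb
    classical
    rw [smul_eq_mul] at hb
    obtain ⟨b₁, hb₁, b₂, hb₂, rfl⟩ := Finset.mem_add.mp (MvPolynomial.support_mul _ _ hb)
    have h2 : (b₁ + b₂).sum (fun _ e => e) = (b₁.sum fun _ e => e) + (b₂.sum fun _ e => e) :=
      Finsupp.sum_add_index' (fun _ => rfl) (fun _ _ _ => rfl)
    rw [h2]
    exact le_add_of_le_right (hx b₂ hb₂)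

lemma lowIdeal_mul (m₁ m₂ : ℕ) :
    lowIdeal K n m₁ * lowIdeal K n m₂ ≤ lowIdeal K n (m₁ + m₂) := by
  classical
  rw [Ideal.mul_le]
  intro x hx y hy b hb
  obtain ⟨b₁, hb₁, b₂, hb₂, rfl⟩ := Finset.mem_add.mp (MvPolynomial.support_mul _ _ hb)
  have h2 : (b₁ + b₂).sum (fun _ e => e) = (b₁.sum fun _ e => e) + (b₂.sum fun _ e => e) :=
    Finsupp.sum_add_index' (fun _ => rfl) (fun _ _ _ => rfl)
  rw [h2]
  exact add_le_add (hx b₁ hb₁) (hy b₂ hb₂)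

lemma hom_mem_lowIdeal {g : S} {d : ℕ} (hg : g.IsHomogeneous d) : g ∈ lowIdeal K n d := by
  intro b hb
  have := hg.coeff_eq_zero (d := b)
  by_contra hlt
  have hbd : b.degree ≠ d := by
    have : (b.sum fun _ e => e) = b.degree := rfl
    omega
  exact (MvPolynomial.mem_support_iff.mp hb) (hg.coeff_eq_zero hbd)

lemma totalDegree_ge_of_mem_lowIdeal {h : S} {m : ℕ} (hmem : h ∈ lowIdeal K n m)
    (h0 : h ≠ 0) : m ≤ h.totalDegree := by
  obtain ⟨b, hb⟩ := Finset.nonempty_of_ne_empty (fun he => h0 (support_eq_empty.mp he))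
  exact le_trans (hmem b hb) (MvPolynomial.le_totalDegree hb)

lemma pow_le_lowIdeal {I : Ideal S} {G : Set S} {d : ℕ}
    (hG : ∀ f ∈ G, f.IsHomogeneous d) (hspan : I = Ideal.span G) (k : ℕ) :
    I ^ k ≤ lowIdeal K n (k * d) := by
  induction k with
  | zero =>
      intro x _ b _
      simp
  | succ k ih =>
      have hI : I ≤ lowIdeal K n d := by
        rw [hspan, Ideal.span_le]
        exact fun g hg => hom_mem_lowIdeal (hG g hg)
      calc I ^ (k + 1) = I ^ k * I := pow_succ I k
        _ ≤ lowIdeal K n (k * d) * lowIdeal K n d := Ideal.mul_mono ih hI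
        _ ≤ lowIdeal K n (k * d + d) := lowIdeal_mul _ _
        _ = lowIdeal K n ((k + 1) * d) := by ring_nf

end Degree
/-- Let `I` be a proper nonzero equigenerated graded ideal with the strong
persistence property. If `v(I) = α(I) − c(I)`, then `v(I^k) = α(I)·k − c(I)` for all
`k ≥ 1`. -/
theorem stmt6 {K : Type*} [Field K] {n : ℕ}
    (I : Ideal (MvPolynomial (Fin n) K))
    (hproper : I ≠ ⊤) (hne : I ≠ ⊥)
    (hequi : ∃ (d : ℕ) (G : Set (MvPolynomial (Fin n) K)),
      (∀ f ∈ G, f.IsHomogeneous d) ∧ I = Ideal.span G)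
    (hspp : ∀ k : ℕ, 1 ≤ k → (I ^ (k + 1)).colon I = I ^ k)
    (hv : (vNumber I : ℤ) = (alphaNum I : ℤ) - (cNum I : ℤ)) :
    ∀ k : ℕ, 1 ≤ k →
      (vNumber (I ^ k) : ℤ) = (alphaNum I : ℤ) * k - (cNum I : ℤ) := by
  classical
  obtain ⟨d₀, G, hG, hspan⟩ := hequi
  -- a nonzero generator
  have hg₀ : ∃ g ∈ G, g ≠ (0 : MvPolynomial (Fin n) K) := by
    by_contra hcon
    push_neg at hcon
    apply hne
    rw [hspan, eq_bot_iff, Ideal.span_le]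
    intro g hg
    simp [hcon g hg]
  obtain ⟨g₀, hg₀G, hg₀ne⟩ := hg₀
  have hg₀I : g₀ ∈ I := hspan ▸ Ideal.subset_span hg₀G
  have hg₀deg : g₀.totalDegree = d₀ := (hG g₀ hg₀G).totalDegree hg₀ne
  -- I is a homogeneous ideal
  have hIhom : I.IsHomogeneous (homogeneousSubmodule (Fin n) K) := by
    rw [hspan]
    exact Ideal.homogeneous_span _ G
      (fun g hg => ⟨d₀, (mem_homogeneousSubmodule _ _).2 (hG g hg)⟩)
  -- α(I) = d₀
  have hdegI : ∀ k : ℕ, ∀ h ∈ I ^ k, h ≠ 0 → k * d₀ ≤ h.totalDegree := fun k h hh h0 =>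
    totalDegree_ge_of_mem_lowIdeal (pow_le_lowIdeal hG hspan k hh) h0
  have halpha : alphaNum I = d₀ := by
    refine le_antisymm (Nat.sInf_le ⟨g₀, hg₀I, hg₀ne, hg₀deg⟩)
      (le_csInf ⟨d₀, g₀, hg₀I, hg₀ne, hg₀deg⟩ ?_)
    rintro d ⟨f, hf, hf0, rfl⟩
    have := hdegI 1 f (by rwa [pow_one]) hf0
    omega
  -- bound α(Q) for associated primes
  have hc_le : ∀ Q ∈ Ass I, alphaNum Q ≤ cNum I := by
    intro Q hQ
    have hbdd : BddAbove (alphaNum '' Ass I) := by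
      refine ⟨d₀, ?_⟩
      rintro x ⟨Q', hQ', rfl⟩
      exact Nat.sInf_le ⟨g₀, le_of_mem_associatedPrimes hQ' hg₀I, hg₀ne, hg₀deg⟩
    exact le_csSup hbdd (Set.mem_image_of_mem _ hQ)
  have halphaQ : ∀ Q ∈ Ass I, ∃ y ∈ Q, y ≠ 0 ∧ y.totalDegree = alphaNum Q := by
    intro Q hQ
    exact Nat.sInf_mem (⟨d₀, g₀, le_of_mem_associatedPrimes hQ hg₀I, hg₀ne, hg₀deg⟩ :
      {d | ∃ f ∈ Q, f ≠ 0 ∧ f.totalDegree = d}.Nonempty)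
  -- base witness for the v-number of I
  obtain ⟨f', d', hf'hom, hf'prime⟩ := exists_colon_prime hIhom hproper
  have hSvne : {d | ∃ f : MvPolynomial (Fin n) K, ∃ p ∈ Ass I, f.IsHomogeneous d ∧
      I.colon (Ideal.span {f}) = p}.Nonempty :=
    ⟨d', f', I.colon (Ideal.span {f'}), colon_mem_associatedPrimes hf'prime, hf'hom, rfl⟩
  have hv1 : ∃ f : MvPolynomial (Fin n) K, ∃ p ∈ Ass I, f.IsHomogeneous (vNumber I) ∧
      I.colon (Ideal.span {f}) = p := Nat.sInf_mem hSvne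
  obtain ⟨f₁, p₁, hp₁Ass, hf₁hom, hf₁colon⟩ := hv1
  have hp₁prime : p₁.IsPrime := hp₁Ass.1
  -- finite generating subset
  obtain ⟨G₀, hG₀sub, hG₀span⟩ := exists_finset_span_eq G
  have hG₀spanI : Ideal.span (↑G₀ : Set (MvPolynomial (Fin n) K)) = I := by rw [hG₀span, hspan]
  -- the chain of witnesses for powers
  have hchain : ∀ j : ℕ, ∃ f : MvPolynomial (Fin n) K,
      f.IsHomogeneous (vNumber I + j * d₀) ∧ (I ^ (j + 1)).colon (Ideal.span {f}) = p₁ := by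
    intro j
    induction j with
    | zero =>
        refine ⟨f₁, by simpa using hf₁hom, ?_⟩
        rw [pow_one]
        exact hf₁colon
    | succ j ih =>
        obtain ⟨f, hfhom, hfcolon⟩ := ih
        set q : MvPolynomial (Fin n) K → Ideal (MvPolynomial (Fin n) K) :=
          fun g => (I ^ (j + 2)).colon (Ideal.span {f * g}) with hqdef
        have hple : ∀ g ∈ G₀, p₁ ≤ q g := by
          intro g hgG₀ r hr
          rw [← hfcolon, Ideal.mem_colon_span_singleton] at hr
          rw [hqdef, Ideal.mem_colon_span_singleton, show r * (f * g) = (r * f) * g by ring]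
          have hgI : g ∈ I := hspan ▸ Ideal.subset_span (hG₀sub hgG₀)
          have : (r * f) * g ∈ I ^ (j + 1) * I := Ideal.mul_mem_mul hr hgI
          rwa [← pow_succ] at this
        have hinfle : G₀.inf q ≤ p₁ := by
          intro r hr
          rw [← hfcolon, Ideal.mem_colon_span_singleton]
          have hcol : r * f ∈ (I ^ (j + 2)).colon I := by
            rw [Submodule.mem_colon]
            intro x hx
            rw [smul_eq_mul]
            rw [← hG₀spanI] at hx
            induction hx using Submodule.span_induction with
            | mem g hg =>
                have : r ∈ q g := (Finset.inf_le hg : G₀.inf q ≤ q g) hr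
                rw [hqdef, Ideal.mem_colon_span_singleton] at this
                rwa [show r * f * g = r * (f * g) by ring]
            | zero => simp
            | add a b _ _ ha hb =>
                rw [mul_add]; exact Ideal.add_mem _ ha hb
            | smul c a _ ha =>
                rw [smul_eq_mul, show r * f * (c * a) = c * (r * f * a) by ring]
                exact Ideal.mul_mem_left _ _ ha
          have hspp' := hspp (j + 1) (by omega)
          rwa [show j + 1 + 1 = j + 2 from rfl, hspp'] at hcol
        obtain ⟨g₁, hg₁G₀, hqle⟩ := (hp₁prime.inf_le').1 hinfle
        have hg₁G : g₁ ∈ G := hG₀sub hg₁G₀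
        have heq : q g₁ = p₁ := le_antisymm hqle (hple g₁ hg₁G₀)
        refine ⟨f * g₁, ?_, heq⟩
        have := hfhom.mul (hG g₁ hg₁G)
        have harith : vNumber I + j * d₀ + d₀ = vNumber I + (j + 1) * d₀ := by ring
        rwa [harith] at this
  -- the numeric identity v(I) + c(I) = d₀
  have hvc : vNumber I + cNum I = d₀ := by
    rw [halpha] at hv
    omega
  -- main computation per k
  intro k hk
  obtain ⟨j, rfl⟩ : ∃ j, k = j + 1 := ⟨k - 1, (Nat.succ_pred_eq_of_pos hk).symm⟩
  obtain ⟨fj, hfjhom, hfjcolon⟩ := hchain j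
  have hp₁Assk : p₁ ∈ Ass (I ^ (j + 1)) := by
    rw [← hfjcolon]
    exact colon_mem_associatedPrimes (hfjcolon ▸ hp₁prime)
  have hSkmem : (vNumber I + j * d₀) ∈ {d | ∃ f : MvPolynomial (Fin n) K,
      ∃ p ∈ Ass (I ^ (j + 1)), f.IsHomogeneous d ∧ (I ^ (j + 1)).colon (Ideal.span {f}) = p} :=
    ⟨fj, p₁, hp₁Assk, hfjhom, hfjcolon⟩
  have hupper : vNumber (I ^ (j + 1)) ≤ vNumber I + j * d₀ := Nat.sInf_le hSkmem
  have hv2 : ∃ F : MvPolynomial (Fin n) K, ∃ P ∈ Ass (I ^ (j + 1)),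
      F.IsHomogeneous (vNumber (I ^ (j + 1))) ∧ (I ^ (j + 1)).colon (Ideal.span {F}) = P :=
    Nat.sInf_mem (⟨_, hSkmem⟩ : {d |
      ∃ f : MvPolynomial (Fin n) K, ∃ p ∈ Ass (I ^ (j + 1)), f.IsHomogeneous d ∧
      (I ^ (j + 1)).colon (Ideal.span {f}) = p}.Nonempty)
  obtain ⟨F, P, hPAss, hFhom, hFcolon⟩ := hv2
  have hPprime : P.IsPrime := hPAss.1
  have hF0 : F ≠ 0 := by
    intro h0
    apply hPprime.ne_top
    rw [Ideal.eq_top_iff_one, ← hFcolon, Ideal.mem_colon_span_singleton, h0, mul_zero]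
    exact Ideal.zero_mem _
  have hIP : I ≤ P := by
    intro r hr
    have h1 : r ^ (j + 1) ∈ I ^ (j + 1) := Ideal.pow_mem_pow hr _
    have h2 : I ^ (j + 1) ≤ P := le_of_mem_associatedPrimes hPAss
    exact hPprime.mem_of_pow_mem _ (h2 h1)
  haveI := hPprime
  obtain ⟨Q, hQmin, hQP⟩ := Ideal.exists_minimalPrimes_le hIP
  have hQAss : Q ∈ Ass I := minimalPrimes_mem_associatedPrimes hQmin
  obtain ⟨y, hyQ, hy0, hydeg⟩ := halphaQ Q hQAss
  have hFy : F * y ∈ I ^ (j + 1) := by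
    have : y ∈ P := hQP hyQ
    rw [← hFcolon, Ideal.mem_colon_span_singleton] at this
    rwa [mul_comm]
  have hFy0 : F * y ≠ 0 := mul_ne_zero hF0 hy0
  have hlow1 : (j + 1) * d₀ ≤ (F * y).totalDegree := hdegI _ _ hFy hFy0
  have hlow2 : (F * y).totalDegree ≤ vNumber (I ^ (j + 1)) + alphaNum Q := by
    have := MvPolynomial.totalDegree_mul F y
    rw [hFhom.totalDegree hF0, hydeg] at this
    exact this
  have hlow3 : alphaNum Q ≤ cNum I := hc_le Q hQAss
  -- conclude
  rw [halpha]
  have hmeq : vNumber (I ^ (j + 1)) = vNumber I + j * d₀ := by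
    have h1 : (j + 1) * d₀ = j * d₀ + d₀ := by ring
    omega
  have hcast : ((d₀ : ℤ)) * ((j + 1 : ℕ) : ℤ) = ((j * d₀ : ℕ) : ℤ) + (d₀ : ℤ) := by
    push_cast
    ring
  rw [hmeq]
  push_cast at hcast ⊢
  omega
end

section
/- Let S = K[x_1,…,x_n] be a standard graded polynomial ring over a field K and I = ⟨f⟩ a principal ideal generated by a nonzero homogeneous polynomial f of positive degree. Then for every k ≥ 1 and every p ∈ Ass(I^k) one has v_p(I^k) = α(I)·k − α(p); in particular v(I^k) = α(I)·k − c(I) for all k ≥ 1, where c(I) := max{α(p) : p ∈ Ass(I)}. -/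
/-!
`S` is a unique factorization domain, so an associated prime of `S/(F)`, being a prime colon
ideal `(F) : h`, is principal, generated by a prime factor `π` of `F`; conversely
`(π w) : w = (π)` whenever `F = π w`. Factors of homogeneous polynomials are homogeneous (compare
lowest and highest homogeneous components), so `α((π)) = deg π`, and a homogeneous `g` with
`(π w) : g = (π)` is a multiple of `w`; hence `v_(π)((F)) = deg w = deg F - α((π))`. For
`F = f^k` the prime factors are those of `f`, so `Ass(I^k) = Ass(I)`, and minimizing over them
gives `v(I^k) = α(I) k - c(I)`.
-/

open MvPolynomial

namespace MvPolynomial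

variable {σ R : Type*}

theorem isHomogeneous_of_forall_coeff_ne_zero [CommSemiring R] {φ : MvPolynomial σ R} {n : ℕ}
    (h : ∀ d, coeff d φ ≠ 0 → d.degree = n) : φ.IsHomogeneous n := fun d hd => by
  have := h d hd
  rwa [Finsupp.degree_eq_weight_one] at this

theorem homogeneousComponent_mul_of_forall_coeff_eq_zero [CommSemiring R]
    {x y : MvPolynomial σ R} {a b : ℕ} (hx : ∀ d : σ →₀ ℕ, d.degree < a → coeff d x = 0)
    (hy : ∀ d : σ →₀ ℕ, d.degree < b → coeff d y = 0) :
    homogeneousComponent (a + b) (x * y) =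
      homogeneousComponent a x * homogeneousComponent b y := by
  classical
  ext d
  rw [coeff_homogeneousComponent]
  split_ifs with hd
  · rw [coeff_mul, coeff_mul]
    refine Finset.sum_congr rfl fun e he => ?_
    rw [Finset.HasAntidiagonal.mem_antidiagonal] at he
    rw [← he, map_add] at hd
    simp only [coeff_homogeneousComponent]
    rcases trichotomy_of_add_eq_add hd with h | h | h
    · rw [if_pos h.1, if_pos h.2]
    · rw [if_neg h.ne, hx _ h, zero_mul, zero_mul]
    · rw [if_neg h.ne, hy _ h, mul_zero, mul_zero]
  · exact (((homogeneousComponent_isHomogeneous a x).mul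
      (homogeneousComponent_isHomogeneous b y)).coeff_eq_zero hd).symm

theorem exists_homogeneousComponent_ne_zero_of_forall_lt [CommSemiring R]
    {x : MvPolynomial σ R} (hx : x ≠ 0) :
    ∃ a, homogeneousComponent a x ≠ 0 ∧ ∀ d : σ →₀ ℕ, d.degree < a → coeff d x = 0 := by
  obtain ⟨μ, hμ, hmin⟩ := x.support.exists_min_image Finsupp.degree (support_nonempty.2 hx)
  refine ⟨μ.degree, fun h => mem_support_iff.1 hμ ?_, fun d hd => ?_⟩
  · simpa [coeff_homogeneousComponent] using congr_arg (coeff μ) h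
  · by_contra hd0
    exact (hmin d (mem_support_iff.2 hd0)).not_gt hd

theorem IsHomogeneous.of_mul_left [CommRing R] [IsDomain R] {x y : MvPolynomial σ R} {m : ℕ}
    (hxy : (x * y).IsHomogeneous m) (hx : x ≠ 0) (hy : y ≠ 0) :
    x.IsHomogeneous x.totalDegree := by
  obtain ⟨a, hxa, hxlow⟩ := exists_homogeneousComponent_ne_zero_of_forall_lt hx
  obtain ⟨b, hyb, hylow⟩ := exists_homogeneousComponent_ne_zero_of_forall_lt hy
  -- the products of the lowest and of the highest components of `x` and `y` survive in `x * y`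
  have hab : a + b = m := by
    have hlow := homogeneousComponent_mul_of_forall_coeff_eq_zero hxlow hylow
    rw [homogeneousComponent_of_mem hxy] at hlow
    by_contra h
    exact mul_ne_zero hxa hyb (by rw [← hlow, if_neg h])
  have htop : x.totalDegree + y.totalDegree = m := by
    rw [← totalDegree_mul_of_isDomain hx hy, hxy.totalDegree (mul_ne_zero hx hy)]
  have ha : a ≤ x.totalDegree := not_lt.1 fun h => hxa (homogeneousComponent_eq_zero _ _ h)
  have hb : b ≤ y.totalDegree := not_lt.1 fun h => hyb (homogeneousComponent_eq_zero _ _ h)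
  refine isHomogeneous_of_forall_coeff_ne_zero fun d hd => ?_
  have hda : a ≤ d.degree := not_lt.1 fun h => hd (hxlow d h)
  have hdx : d.degree ≤ x.totalDegree := le_totalDegree (mem_support_iff.2 hd)
  omega

theorem IsHomogeneous.of_mul_right [CommRing R] [IsDomain R] {x y : MvPolynomial σ R} {m : ℕ}
    (hxy : (x * y).IsHomogeneous m) (hx : x ≠ 0) (hy : y ≠ 0) :
    y.IsHomogeneous y.totalDegree :=
  (mul_comm x y ▸ hxy).of_mul_left hy hx

theorem IsHomogeneous.not_isUnit [CommRing R] [IsDomain R] {f : MvPolynomial σ R} {d : ℕ}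
    (hf : f.IsHomogeneous d) (hd : 0 < d) : ¬IsUnit f := by
  intro hu
  have hle := totalDegree_le_of_dvd_of_isDomain hu.dvd one_ne_zero
  rw [totalDegree_one, hf.totalDegree hu.ne_zero] at hle
  omega

end MvPolynomial

section AssociatedPrimes

variable {R : Type*} [CommRing R]

theorem Ideal.colon_bot_singleton_quotient_mk (I : Ideal R) (x : R) :
    (⊥ : Submodule R (R ⧸ I)).colon {Ideal.Quotient.mk I x} = I.colon (Ideal.span {x}) := by
  ext r
  rw [Submodule.mem_colon_singleton, Ideal.mem_colon_span_singleton, Submodule.mem_bot,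
    Algebra.smul_def, Ideal.Quotient.algebraMap_eq, ← map_mul, Ideal.Quotient.eq_zero_iff_mem]

theorem mem_associatedPrimes_quotient_iff [IsNoetherianRing R] {I p : Ideal R} :
    p ∈ associatedPrimes R (R ⧸ I) ↔ p.IsPrime ∧ ∃ x : R, I.colon (Ideal.span {x}) = p := by
  rw [AssociatedPrimes.mem_iff, isAssociatedPrime_iff, Ideal.Quotient.mk_surjective.exists]
  simp only [Ideal.colon_bot_singleton_quotient_mk, eq_comm]

theorem associatedPrimes_quotient_span_singleton_nonempty [IsNoetherianRing R] {F : R}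
    (hF : ¬IsUnit F) : (associatedPrimes R (R ⧸ Ideal.span {F})).Nonempty := by
  have : Nontrivial (R ⧸ Ideal.span {F}) :=
    Ideal.Quotient.nontrivial_iff.2 (by rwa [Ne, Ideal.span_singleton_eq_top])
  exact associatedPrimes.nonempty R _

theorem Ideal.span_singleton_mul_colon_span_singleton [IsDomain R] (a : R) {w : R} (hw : w ≠ 0) :
    (Ideal.span {a * w}).colon (Ideal.span {w}) = Ideal.span {a} := by
  ext x
  rw [Ideal.mem_colon_span_singleton, Ideal.mem_span_singleton, Ideal.mem_span_singleton,
    mul_dvd_mul_iff_right hw]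

theorem exists_prime_dvd_forall_dvd_mul {M : Type*} [CommMonoidWithZero M]
    [UniqueFactorizationMonoid M] {a : M} (ha : a ≠ 0) {h : M} (hah : ¬a ∣ h) :
    ∃ π, Prime π ∧ π ∣ a ∧ ∀ x, a ∣ x * h → π ∣ x := by
  induction a using UniqueFactorizationMonoid.induction_on_prime generalizing h with
  | h₁ => exact absurd rfl ha
  | h₂ u hu => exact absurd hu.dvd hah
  | h₃ b p hb hp ih =>
    by_cases hph : p ∣ h
    · obtain ⟨h', rfl⟩ := hph
      have hbh' : ¬b ∣ h' := fun hbh' => hah (mul_dvd_mul_left p hbh')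
      obtain ⟨π, hπ, hπb, hπall⟩ := ih (right_ne_zero_of_mul ha) hbh'
      refine ⟨π, hπ, hπb.mul_left p, fun x hx => hπall x ?_⟩
      rw [mul_left_comm] at hx
      exact (mul_dvd_mul_iff_left hp.ne_zero).1 hx
    · refine ⟨p, hp, dvd_mul_right p b, fun x hx => ?_⟩
      exact (hp.dvd_or_dvd ((dvd_mul_right p b).trans hx)).resolve_right hph

variable [IsDomain R] [IsNoetherianRing R] [UniqueFactorizationMonoid R]

theorem mem_associatedPrimes_quotient_span_singleton_iff {F : R} (hF : F ≠ 0) {p : Ideal R} :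
    p ∈ associatedPrimes R (R ⧸ Ideal.span {F}) ↔ ∃ π, Prime π ∧ π ∣ F ∧ p = Ideal.span {π} := by
  rw [mem_associatedPrimes_quotient_iff]
  constructor
  · rintro ⟨hp, h, rfl⟩
    have hmem : ∀ r, r ∈ (Ideal.span {F}).colon (Ideal.span {h}) ↔ F ∣ r * h := fun r => by
      rw [Ideal.mem_colon_span_singleton, Ideal.mem_span_singleton]
    have hFh : ¬F ∣ h := fun hFh => hp.ne_top <| (Ideal.eq_top_iff_one _).2 <|
      (hmem 1).2 (by rwa [one_mul])
    obtain ⟨π, hπ, hπF, hπall⟩ := exists_prime_dvd_forall_dvd_mul hF hFh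
    have hle : (Ideal.span {F}).colon (Ideal.span {h}) ≤ Ideal.span {π} := fun r hr =>
      Ideal.mem_span_singleton.2 (hπall r ((hmem r).1 hr))
    -- the colon is a nonzero prime, so it contains a prime `q`; then `π ∣ q` forces `q ~ π`
    have hne : (Ideal.span {F}).colon (Ideal.span {h}) ≠ ⊥ := fun hbot =>
      hF <| (Submodule.mem_bot R).1 <| hbot ▸ (hmem F).2 (dvd_mul_right F h)
    obtain ⟨q, hq, hqprime⟩ := hp.exists_mem_prime_of_ne_bot hne
    have hπq : π ∣ q := Ideal.mem_span_singleton.1 (hle hq)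
    have hπmem : π ∈ (Ideal.span {F}).colon (Ideal.span {h}) :=
      Ideal.mem_of_dvd _ (hπ.associated_of_dvd hqprime hπq).symm.dvd hq
    exact ⟨π, hπ, hπF, le_antisymm hle ((Ideal.span_singleton_le_iff_mem _).2 hπmem)⟩
  · rintro ⟨π, hπ, ⟨w, rfl⟩, rfl⟩
    exact ⟨(Ideal.span_singleton_prime hπ.ne_zero).2 hπ, w,
      Ideal.span_singleton_mul_colon_span_singleton π (right_ne_zero_of_mul hF)⟩

theorem associatedPrimes_quotient_span_singleton_pow {F : R} (hF : F ≠ 0) {k : ℕ} (hk : k ≠ 0) :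
    associatedPrimes R (R ⧸ Ideal.span {F ^ k}) = associatedPrimes R (R ⧸ Ideal.span {F}) := by
  ext p
  simp only [mem_associatedPrimes_quotient_span_singleton_iff (pow_ne_zero k hF),
    mem_associatedPrimes_quotient_span_singleton_iff hF]
  exact exists_congr fun π => and_congr_right fun hπ => and_congr_left' (hπ.dvd_pow_iff_dvd hk)

end AssociatedPrimes

section VNumber

variable {K : Type*} [Field K] {n : ℕ}

theorem alphaNum_span_singleton {g : MvPolynomial (Fin n) K} (hg : g ≠ 0) :
    alphaNum (Ideal.span {g}) = g.totalDegree := by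
  refine IsLeast.csInf_eq ⟨⟨g, Ideal.mem_span_singleton_self g, hg, rfl⟩, ?_⟩
  rintro _ ⟨h, hh, h0, rfl⟩
  exact totalDegree_le_of_dvd_of_isDomain (Ideal.mem_span_singleton.1 hh) h0

theorem vNumberAt_span_mul {π w : MvPolynomial (Fin n) K} {b : ℕ} (hπ : Prime π)
    (hw : w.IsHomogeneous b) (hw0 : w ≠ 0) :
    vNumberAt (Ideal.span {π * w}) (Ideal.span {π}) = b := by
  refine IsLeast.csInf_eq ⟨⟨w, hw, Ideal.span_singleton_mul_colon_span_singleton π hw0⟩, ?_⟩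
  rintro e ⟨g, hg, hcolon⟩
  have hg0 : g ≠ 0 := by
    rintro rfl
    have h1 : (1 : MvPolynomial (Fin n) K) ∈ Ideal.span {π} :=
      hcolon ▸ Ideal.mem_colon_span_singleton.2 (by simp)
    exact hπ.not_isUnit (isUnit_of_dvd_one (Ideal.mem_span_singleton.1 h1))
  have hπg : π * g ∈ Ideal.span {π * w} :=
    Ideal.mem_colon_span_singleton.1 (hcolon ▸ Ideal.mem_span_singleton_self π)
  have hwg : w ∣ g := (mul_dvd_mul_iff_left hπ.ne_zero).1 (Ideal.mem_span_singleton.1 hπg)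
  calc b = w.totalDegree := (hw.totalDegree hw0).symm
    _ ≤ g.totalDegree := totalDegree_le_of_dvd_of_isDomain hwg hg0
    _ = e := hg.totalDegree hg0

theorem vNumberAt_add_alphaNum_of_mem_Ass {F : MvPolynomial (Fin n) K} {m : ℕ}
    (hF : F.IsHomogeneous m) (hF0 : F ≠ 0) {p : Ideal (MvPolynomial (Fin n) K)}
    (hp : p ∈ Ass (Ideal.span {F})) :
    vNumberAt (Ideal.span {F}) p + alphaNum p = m := by
  obtain ⟨π, hπ, ⟨w, rfl⟩, rfl⟩ := (mem_associatedPrimes_quotient_span_singleton_iff hF0).1 hp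
  have hw0 : w ≠ 0 := right_ne_zero_of_mul hF0
  rw [vNumberAt_span_mul hπ (hF.of_mul_right hπ.ne_zero hw0) hw0,
    alphaNum_span_singleton hπ.ne_zero, add_comm, ← totalDegree_mul_of_isDomain hπ.ne_zero hw0,
    hF.totalDegree hF0]

theorem exists_isHomogeneous_colon_eq_of_mem_Ass {F : MvPolynomial (Fin n) K} {m : ℕ}
    (hF : F.IsHomogeneous m) (hF0 : F ≠ 0) {p : Ideal (MvPolynomial (Fin n) K)}
    (hp : p ∈ Ass (Ideal.span {F})) :
    ∃ g : MvPolynomial (Fin n) K, g.IsHomogeneous (vNumberAt (Ideal.span {F}) p) ∧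
      (Ideal.span {F}).colon (Ideal.span {g}) = p := by
  obtain ⟨π, hπ, ⟨w, rfl⟩, rfl⟩ := (mem_associatedPrimes_quotient_span_singleton_iff hF0).1 hp
  have hw0 : w ≠ 0 := right_ne_zero_of_mul hF0
  have hw := hF.of_mul_right hπ.ne_zero hw0
  exact ⟨w, by rwa [vNumberAt_span_mul hπ hw hw0],
    Ideal.span_singleton_mul_colon_span_singleton π hw0⟩

theorem vNumber_add_cNum_eq {I : Ideal (MvPolynomial (Fin n) K)} {m : ℕ}
    (hne : (Ass I).Nonempty) (hsum : ∀ p ∈ Ass I, vNumberAt I p + alphaNum p = m)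
    (hwit : ∀ p ∈ Ass I, ∃ g : MvPolynomial (Fin n) K,
      g.IsHomogeneous (vNumberAt I p) ∧ I.colon (Ideal.span {g}) = p) :
    vNumber I + cNum I = m := by
  have hbdd : BddAbove (alphaNum '' Ass I) := ((associatedPrimes.finite _ _).image _).bddAbove
  obtain ⟨p₀, hp₀, hc⟩ := Nat.sSup_mem (hne.image alphaNum) hbdd
  suffices vNumber I = vNumberAt I p₀ by rw [this, cNum, ← hc, hsum p₀ hp₀]
  obtain ⟨g₀, hg₀, hcolon₀⟩ := hwit p₀ hp₀
  refine IsLeast.csInf_eq ⟨⟨g₀, p₀, hp₀, hg₀, hcolon₀⟩, ?_⟩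
  rintro e ⟨g, p, hp, hg, hcolon⟩
  have hve : vNumberAt I p ≤ e := Nat.sInf_le ⟨g, hg, hcolon⟩
  have hα : alphaNum p ≤ alphaNum p₀ := hc ▸ le_csSup hbdd ⟨p, hp, rfl⟩
  have hp_sum := hsum p hp
  have hp₀_sum := hsum p₀ hp₀
  omega

end VNumber

/-- Let `I = ⟨f⟩` be a principal ideal generated by a nonzero homogeneous
polynomial of positive degree. Then for every `k ≥ 1` and every `p ∈ Ass(I^k)`,
`v_p(I^k) = α(I)·k − α(p)`; in particular `v(I^k) = α(I)·k − c(I)` for all `k ≥ 1`. -/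
theorem stmt7 {K : Type*} [Field K] {n : ℕ}
    (f : MvPolynomial (Fin n) K) (d : ℕ) (hd : 0 < d)
    (hf : f.IsHomogeneous d) (hf0 : f ≠ 0)
    (I : Ideal (MvPolynomial (Fin n) K)) (hI : I = Ideal.span {f}) :
    ∀ k : ℕ, 1 ≤ k →
      (∀ p ∈ Ass (I ^ k),
        (vNumberAt (I ^ k) p : ℤ) = (alphaNum I : ℤ) * k - (alphaNum p : ℤ)) ∧
      (vNumber (I ^ k) : ℤ) = (alphaNum I : ℤ) * k - (cNum I : ℤ) := by
  subst hI
  intro k hk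
  rw [Ideal.span_singleton_pow]
  have hfk : (f ^ k).IsHomogeneous (d * k) := hf.pow k
  have hfk0 : f ^ k ≠ 0 := pow_ne_zero k hf0
  have hαI : alphaNum (Ideal.span {f}) = d := by
    rw [alphaNum_span_singleton hf0, hf.totalDegree hf0]
  have hAss : Ass (Ideal.span {f ^ k}) = Ass (Ideal.span {f}) :=
    associatedPrimes_quotient_span_singleton_pow hf0 (by omega)
  have hsum : ∀ p ∈ Ass (Ideal.span {f ^ k}),
      vNumberAt (Ideal.span {f ^ k}) p + alphaNum p = d * k :=
    fun p hp => vNumberAt_add_alphaNum_of_mem_Ass hfk hfk0 hp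
  have hv : vNumber (Ideal.span {f ^ k}) + cNum (Ideal.span {f}) = d * k := by
    have hc : cNum (Ideal.span {f ^ k}) = cNum (Ideal.span {f}) := by rw [cNum, cNum, hAss]
    rw [← hc]
    exact vNumber_add_cNum_eq
      (hAss ▸ associatedPrimes_quotient_span_singleton_nonempty (hf.not_isUnit hd)) hsum
      fun p hp => exists_isHomogeneous_colon_eq_of_mem_Ass hfk hfk0 hp
  rw [hαI]
  refine ⟨fun p hp => ?_, ?_⟩
  · have hp_sum := hsum p hp
    zify at hp_sum
    linarith
  · zify at hv
    linarith
end

section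
/- Let S = K[x_1,…,x_n] be a polynomial ring over a field K and I ⊂ S a proper nonzero square-free monomial ideal with v(I) = α(I) − 1. Then v(I^k) = α(I)·k − 1 for all k ≥ 1. -/
open MvPolynomial Pointwise

namespace Stmt8Aux



variable {K : Type*} [Field K] {n : ℕ}

/-- The ideal of polynomials all of whose monomials are divisible by some member of `B`. -/
def monIdeal (K : Type*) [Field K] {n : ℕ} (B : Set (Fin n →₀ ℕ)) :
    Ideal (MvPolynomial (Fin n) K) where
  carrier := {f | ∀ d ∈ f.support, ∃ s ∈ B, s ≤ d}
  zero_mem' := by simp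
  add_mem' := by
    intro a b ha hb d hd
    rcases Finset.mem_union.mp (MvPolynomial.support_add hd) with h | h
    · exact ha d h
    · exact hb d h
  smul_mem' := by
    classical
    intro c f hf d hd
    rw [smul_eq_mul] at hd
    obtain ⟨d₁, hd₁, d₂, hd₂, rfl⟩ := Finset.mem_add.mp (MvPolynomial.support_mul _ _ hd)
    obtain ⟨s, hs, hle⟩ := hf d₂ hd₂
    exact ⟨s, hs, hle.trans le_add_self⟩

lemma mem_monIdeal {B : Set (Fin n →₀ ℕ)} {f : MvPolynomial (Fin n) K} :
    f ∈ monIdeal K B ↔ ∀ d ∈ f.support, ∃ s ∈ B, s ≤ d := Iff.rfl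

lemma monomial_mem_monIdeal {B : Set (Fin n →₀ ℕ)} {d : Fin n →₀ ℕ} :
    (monomial d (1:K)) ∈ monIdeal K B ↔ ∃ s ∈ B, s ≤ d := by
  classical
  rw [mem_monIdeal]
  constructor
  · intro h
    exact h d (by simp [MvPolynomial.support_monomial])
  · intro h e he
    rw [MvPolynomial.support_monomial, if_neg one_ne_zero, Finset.mem_singleton] at he
    exact he ▸ h

lemma span_eq_monIdeal (B : Set (Fin n →₀ ℕ)) :
    Ideal.span ((fun s => (monomial s (1 : K) : MvPolynomial (Fin n) K)) '' B)
      = monIdeal K B := by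
  apply le_antisymm
  · rw [Ideal.span_le]
    rintro x ⟨s, hs, rfl⟩
    exact monomial_mem_monIdeal.mpr ⟨s, hs, le_rfl⟩
  · intro f hf
    rw [mem_monIdeal] at hf
    rw [f.as_sum]
    refine Ideal.sum_mem _ ?_
    intro d hd
    obtain ⟨s, hs, hle⟩ := hf d hd
    have : (monomial d (coeff d f) : MvPolynomial (Fin n) K)
        = monomial (d - s) (coeff d f) * monomial s 1 := by
      rw [monomial_mul, mul_one, tsub_add_cancel_of_le hle]
    rw [this]
    exact Ideal.mul_mem_left _ _ (Ideal.subset_span ⟨s, hs, rfl⟩)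

lemma monIdeal_mul (B₁ B₂ : Set (Fin n →₀ ℕ)) :
    (monIdeal K B₁) * (monIdeal K B₂) = monIdeal K (B₁ + B₂) := by
  rw [← span_eq_monIdeal, ← span_eq_monIdeal, ← span_eq_monIdeal, Ideal.span_mul_span']
  congr 1
  ext x
  constructor
  · rintro ⟨a, ⟨s, hs, rfl⟩, b, ⟨t, ht, rfl⟩, rfl⟩
    exact ⟨s + t, Set.add_mem_add hs ht, by simp [monomial_mul]⟩
  · rintro ⟨u, ⟨s, hs, t, ht, rfl⟩, rfl⟩
    exact ⟨monomial s 1, ⟨s, hs, rfl⟩, monomial t 1, ⟨t, ht, rfl⟩,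
      by simp [monomial_mul]⟩




lemma degree_add (a b : Fin n →₀ ℕ) : (a + b).degree = a.degree + b.degree := by
  simp [Finsupp.degree_eq_weight_one]

lemma degree_single (i : Fin n) (c : ℕ) : (Finsupp.single i c).degree = c := by
  classical
  rw [Finsupp.degree_eq_weight_one, Finsupp.weight_apply, Finsupp.sum_single_index] <;> simp

lemma degree_mono {a b : Fin n →₀ ℕ} (h : a ≤ b) : a.degree ≤ b.degree := by
  obtain ⟨c, rfl⟩ := le_iff_exists_add.mp h
  rw [degree_add]; exact Nat.le_add_right _ _

lemma eq_of_le_of_degree_le {a b : Fin n →₀ ℕ} (h : a ≤ b) (h2 : b.degree ≤ a.degree) :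
    a = b := by
  obtain ⟨c, rfl⟩ := le_iff_exists_add.mp h
  rw [degree_add] at h2
  have : c.degree = 0 := by omega
  rw [Finsupp.degree_eq_zero_iff] at this
  simp [this]

lemma sum_id_eq_degree (d : Fin n →₀ ℕ) : (d.sum fun _ e => e) = d.degree := rfl

lemma smul_degree (k : ℕ) (a : Fin n →₀ ℕ) : (k • a).degree = k * a.degree := by
  induction k with
  | zero => simp
  | succ m ih => rw [succ_nsmul, degree_add, ih]; ring





/-- iterated sumset -/
def sumN (B : Set (Fin n →₀ ℕ)) : ℕ → Set (Fin n →₀ ℕ)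
  | 0 => {0}
  | (k+1) => sumN B k + B

lemma sumN_bound (B : Set (Fin n →₀ ℕ)) (F : (Fin n →₀ ℕ) → ℕ)
    (hF : ∀ a b, F (a + b) = F a + F b) (c : ℕ) (hB : ∀ w ∈ B, c ≤ F w) :
    ∀ k, ∀ s ∈ sumN B k, k * c ≤ F s := by
  have hF0 : F 0 = 0 := by have := hF 0 0; simpa using this.symm
  intro k
  induction k with
  | zero => intro s hs; rw [Set.mem_singleton_iff.mp hs]; simp
  | succ m ih =>
    rintro s ⟨t, ht, w, hw, rfl⟩
    rw [hF]
    have := ih t ht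
    have := hB w hw
    nlinarith

/-- the span of the variables indexed by a finset -/
noncomputable def varSpan (K : Type*) [Field K] {n : ℕ} (C : Finset (Fin n)) :
    Ideal (MvPolynomial (Fin n) K) :=
  Ideal.span ((fun i => (X i : MvPolynomial (Fin n) K)) '' (C : Set (Fin n)))

lemma varSpan_eq (C : Finset (Fin n)) :
    varSpan K C = monIdeal K ((fun i => Finsupp.single i 1) '' (C : Set (Fin n))) := by
  rw [← span_eq_monIdeal, varSpan, Set.image_image]
  rfl

noncomputable def killC (K : Type*) [Field K] {n : ℕ} (C : Finset (Fin n)) :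
    MvPolynomial (Fin n) K →ₐ[K] MvPolynomial (Fin n) K :=
  aeval (fun i => if i ∈ C then 0 else X i)

lemma killC_monomial (C : Finset (Fin n)) (d : Fin n →₀ ℕ) (c : K) :
    killC K C (monomial d c) = if ∀ i ∈ C, d i = 0 then monomial d c else 0 := by
  unfold killC
  rw [aeval_monomial, Finsupp.prod]
  split_ifs with h
  · have : ∀ i ∈ d.support, (if i ∈ C then 0 else (X i : MvPolynomial (Fin n) K)) ^ d i
        = X i ^ d i := by
      intro i hi
      have : i ∉ C := fun hic => (Finsupp.mem_support_iff.mp hi) (h i hic)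
      rw [if_neg this]
    rw [Finset.prod_congr rfl this, monomial_eq]
    rfl
  · push_neg at h
    obtain ⟨i, hiC, hdi⟩ := h
    have hi : i ∈ d.support := Finsupp.mem_support_iff.mpr hdi
    rw [Finset.prod_eq_zero hi]
    · rw [mul_zero]
    · rw [if_pos hiC, zero_pow hdi]

lemma monomial_mem_varSpan {C : Finset (Fin n)} {d : Fin n →₀ ℕ} :
    (monomial d (1:K)) ∈ varSpan K C ↔ ∃ i ∈ C, d i ≠ 0 := by
  rw [varSpan_eq, monomial_mem_monIdeal]
  constructor
  · rintro ⟨s, ⟨i, hi, rfl⟩, hle⟩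
    refine ⟨i, hi, ?_⟩
    have := Finsupp.single_le_iff.mp hle
    omega
  · rintro ⟨i, hi, hd⟩
    exact ⟨Finsupp.single i 1, ⟨i, hi, rfl⟩, Finsupp.single_le_iff.mpr (by omega)⟩

lemma mem_varSpan {C : Finset (Fin n)} {f : MvPolynomial (Fin n) K} :
    f ∈ varSpan K C ↔ ∀ d ∈ f.support, ∃ i ∈ C, d i ≠ 0 := by
  rw [varSpan_eq, mem_monIdeal]
  constructor
  · intro h d hd
    obtain ⟨s, ⟨i, hi, rfl⟩, hle⟩ := h d hd
    exact ⟨i, hi, by have := Finsupp.single_le_iff.mp hle; omega⟩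
  · intro h d hd
    obtain ⟨i, hi, hdi⟩ := h d hd
    exact ⟨Finsupp.single i 1, ⟨i, hi, rfl⟩, Finsupp.single_le_iff.mpr (by omega)⟩

lemma varSpan_eq_ker (C : Finset (Fin n)) :
    varSpan K C = RingHom.ker (killC K C) := by
  apply le_antisymm
  · rw [varSpan, Ideal.span_le]
    rintro x ⟨i, hi, rfl⟩
    rw [SetLike.mem_coe, RingHom.mem_ker]
    show killC K C (X i) = 0
    unfold killC
    rw [aeval_X, if_pos (by exact_mod_cast hi)]
  · intro x hx
    rw [RingHom.mem_ker] at hx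
    rw [mem_varSpan]
    intro d hd
    by_contra hcon
    push_neg at hcon
    have hall : ∀ i ∈ C, d i = 0 := fun i hi => hcon i hi
    have hco : coeff d (killC K C x) = coeff d x := by
      conv_lhs => rw [x.as_sum, map_sum]
      rw [MvPolynomial.coeff_sum]
      rw [Finset.sum_eq_single d]
      · rw [killC_monomial, if_pos hall, coeff_monomial, if_pos rfl]
      · intro b hb hbd
        rw [killC_monomial]
        split_ifs with h
        · rw [coeff_monomial, if_neg hbd]
        · exact coeff_zero d
      · intro hdd
        exact absurd hd hdd
    rw [hx] at hco
    simp only [coeff_zero] at hco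
    exact (Finsupp.mem_support_iff.mp hd) hco.symm

lemma varSpan_isPrime (C : Finset (Fin n)) : (varSpan K C).IsPrime := by
  rw [varSpan_eq_ker]
  exact RingHom.ker_isPrime _

lemma pow_monIdeal (B : Set (Fin n →₀ ℕ)) (k : ℕ) :
    (monIdeal K B) ^ k = monIdeal K (sumN B k) := by
  induction k with
  | zero =>
    rw [pow_zero]
    apply le_antisymm
    · intro f _
      rw [mem_monIdeal]
      intro d _
      exact ⟨0, rfl, zero_le⟩
    · rw [Ideal.one_eq_top]; exact le_top
  | succ m ih =>
    rw [pow_succ, ih, monIdeal_mul]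
    rfl
lemma monomial_mul_mem {B : Set (Fin n →₀ ℕ)} {u : Fin n →₀ ℕ} {f : MvPolynomial (Fin n) K}
    (h : (monomial u (1:K)) * f ∈ monIdeal K B)
    {d : Fin n →₀ ℕ} (hd : d ∈ f.support) : (monomial (u + d) (1:K)) ∈ monIdeal K B := by
  rw [mem_monIdeal] at h
  have hmem : u + d ∈ ((monomial u (1:K)) * f).support := by
    rw [MvPolynomial.mem_support_iff, coeff_monomial_mul', if_pos (le_add_right le_rfl),
      add_tsub_cancel_left, one_mul]
    exact Finsupp.mem_support_iff.mp hd
  exact monomial_mem_monIdeal.mpr (h _ hmem)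

lemma exists_X_mem_of_monomial_mem {p : Ideal (MvPolynomial (Fin n) K)} (hp : p.IsPrime)
    {w : Fin n →₀ ℕ} (hw : (monomial w (1:K)) ∈ p) : ∃ i, w i ≠ 0 ∧ X i ∈ p := by
  rw [monomial_eq, map_one, one_mul, Finsupp.prod] at hw
  haveI := hp
  obtain ⟨i, hi, hXi⟩ := Ideal.IsPrime.prod_mem_iff.mp hw
  exact ⟨i, Finsupp.mem_support_iff.mp hi, hp.mem_of_pow_mem _ hXi⟩

lemma colon_prime_isAssociated {J p : Ideal (MvPolynomial (Fin n) K)}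
    {h : MvPolynomial (Fin n) K}
    (hc : J.colon (Ideal.span {h}) = p) (hp : p.IsPrime) :
    p ∈ associatedPrimes (MvPolynomial (Fin n) K) (MvPolynomial (Fin n) K ⧸ J) := by
  refine ⟨hp, Ideal.Quotient.mk J h, ?_⟩
  have key : (⊥ : Submodule (MvPolynomial (Fin n) K) (MvPolynomial (Fin n) K ⧸ J)).colon
      {Ideal.Quotient.mk J h} = p := by
    ext r
    rw [Submodule.mem_colon_singleton, ← hc, Ideal.mem_colon_span_singleton, Submodule.mem_bot]
    rw [show r • Ideal.Quotient.mk J h = Ideal.Quotient.mk J (r * h) from rfl,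
      Ideal.Quotient.eq_zero_iff_mem]
  rw [key, hp.radical]

lemma exists_monomial_colon_prime (G : Finset (Fin n →₀ ℕ))
    (hproper : monIdeal K (↑G : Set (Fin n →₀ ℕ)) ≠ ⊤) :
    ∃ (t : Fin n →₀ ℕ) (C : Finset (Fin n)),
      (monIdeal K (↑G : Set (Fin n →₀ ℕ))).colon (Ideal.span {(monomial t (1:K))})
        = varSpan K C := by
  classical
  set I : Ideal (MvPolynomial (Fin n) K) := monIdeal K (↑G : Set (Fin n →₀ ℕ)) with hI
  set F : Set (Ideal (MvPolynomial (Fin n) K)) :=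
    {J | ∃ t : Fin n →₀ ℕ, (monomial t (1:K)) ∉ I ∧ J = I.colon (Ideal.span {monomial t (1:K)})}
    with hF
  have hFne : F.Nonempty := by
    refine ⟨I.colon ((Ideal.span {monomial 0 (1:K)} : Ideal (MvPolynomial (Fin n) K)) :
      Set (MvPolynomial (Fin n) K)), 0, ?_, rfl⟩
    intro h1
    apply hproper
    rw [Ideal.eq_top_iff_one]
    simpa using h1
  obtain ⟨q₀, hq₀F, hmax⟩ :=
    (set_has_maximal_iff_noetherian.mpr (inferInstance : IsNoetherian _ _)) F hFne
  obtain ⟨t₀, ht₀, rfl⟩ := hq₀F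
  set C : Finset (Fin n) :=
    Finset.univ.filter (fun i => X i * monomial t₀ (1:K) ∈ I) with hC
  refine ⟨t₀, C, ?_⟩
  -- key claim by induction on degree
  have claim : ∀ N : ℕ, ∀ d : Fin n →₀ ℕ, d.degree ≤ N →
      (monomial (t₀ + d) (1:K)) ∈ I → ∃ i ∈ C, d i ≠ 0 := by
    intro N
    induction N with
    | zero =>
      intro d hdeg hmem
      have : d = 0 := by
        rw [← Finsupp.degree_eq_zero_iff]; omega
      rw [this, add_zero] at hmem
      exact absurd hmem ht₀
    | succ N ih =>
      intro d hdeg hmem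
      have hdne : d ≠ 0 := by
        rintro rfl
        rw [add_zero] at hmem
        exact ht₀ hmem
      obtain ⟨i, hi⟩ : ∃ i, d i ≠ 0 := by
        by_contra hcon
        push_neg at hcon
        exact hdne (Finsupp.ext hcon)
      by_cases hXi : X i * monomial t₀ (1:K) ∈ I
      · exact ⟨i, by simp [hC, hXi], hi⟩
      · have hXmon : (X i : MvPolynomial (Fin n) K) * monomial t₀ 1
            = monomial (t₀ + Finsupp.single i 1) 1 := by
          rw [show (X i : MvPolynomial (Fin n) K) = monomial (Finsupp.single i 1) 1 from rfl,
            monomial_mul, one_mul, add_comm]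
        have hnotin : (monomial (t₀ + Finsupp.single i 1) (1:K)) ∉ I := by
          rw [← hXmon]; exact hXi
        have hle : I.colon (Ideal.span {monomial t₀ (1:K)})
            ≤ I.colon (Ideal.span {monomial (t₀ + Finsupp.single i 1) (1:K)}) := by
          intro r hr
          rw [Ideal.mem_colon_span_singleton] at hr ⊢
          have : r * monomial (t₀ + Finsupp.single i 1) 1
              = (r * monomial t₀ 1) * monomial (Finsupp.single i 1) 1 := by
            rw [mul_assoc, monomial_mul, one_mul]
          rw [this]
          exact Ideal.mul_mem_right _ _ hr
        have heq : I.colon (Ideal.span {monomial t₀ (1:K)})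
            = I.colon (Ideal.span {monomial (t₀ + Finsupp.single i 1) (1:K)}) := by
          by_contra hne
          exact hmax _ ⟨t₀ + Finsupp.single i 1, hnotin, rfl⟩ (lt_of_le_of_ne hle hne)
        have hsle : Finsupp.single i 1 ≤ d := Finsupp.single_le_iff.mpr (by omega)
        have hmem' : (monomial (d - Finsupp.single i 1) (1:K))
            ∈ I.colon (Ideal.span {monomial (t₀ + Finsupp.single i 1) (1:K)}) := by
          rw [Ideal.mem_colon_span_singleton, monomial_mul, one_mul]
          have : d - Finsupp.single i 1 + (t₀ + Finsupp.single i 1) = t₀ + d := by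
            rw [add_comm t₀, ← add_assoc, tsub_add_cancel_of_le hsle, add_comm]
          rw [this]
          exact hmem
        rw [← heq, Ideal.mem_colon_span_singleton, mul_comm] at hmem'
        have hdeg' : (d - Finsupp.single i 1).degree ≤ N := by
          have hdd : d = (d - Finsupp.single i 1) + Finsupp.single i 1 :=
            (tsub_add_cancel_of_le hsle).symm
          have : d.degree = (d - Finsupp.single i 1).degree + 1 := by
            conv_lhs => rw [hdd]
            rw [degree_add, degree_single]
          omega
        have hmem'' : (monomial (t₀ + (d - Finsupp.single i 1)) (1:K)) ∈ I := by
          rw [monomial_mul, one_mul] at hmem'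
          exact hmem'
        obtain ⟨j, hjC, hj⟩ := ih (d - Finsupp.single i 1) hdeg' hmem''
        refine ⟨j, hjC, fun hdj => hj ?_⟩
        have h1 := Finsupp.tsub_apply d (Finsupp.single i 1) j
        omega
  apply le_antisymm
  · intro f hf
    rw [Ideal.mem_colon_span_singleton] at hf
    rw [mem_varSpan]
    intro d hd
    have : (monomial (t₀ + d) (1:K)) ∈ I :=
      monomial_mul_mem (by rw [mul_comm] at hf; exact hf) hd
    exact claim d.degree d le_rfl this
  · rw [varSpan, Ideal.span_le]
    rintro x ⟨i, hiC, rfl⟩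
    rw [SetLike.mem_coe, Ideal.mem_colon_span_singleton]
    have : i ∈ C := by exact_mod_cast hiC
    rw [hC] at this
    simpa using (Finset.mem_filter.mp this).2
lemma X_mul_monomial (i : Fin n) (t : Fin n →₀ ℕ) :
    (X i : MvPolynomial (Fin n) K) * monomial t 1 = monomial (t + Finsupp.single i 1) 1 := by
  rw [show (X i : MvPolynomial (Fin n) K) = monomial (Finsupp.single i 1) 1 from rfl,
    monomial_mul, one_mul, add_comm]

lemma monIdeal_empty : monIdeal K (∅ : Set (Fin n →₀ ℕ)) = ⊥ := by
  apply le_antisymm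
  · intro f hf
    rw [mem_monIdeal] at hf
    rw [Ideal.mem_bot]
    by_contra h0
    obtain ⟨d, hd⟩ := (MvPolynomial.support_nonempty.mpr h0)
    obtain ⟨s, hs, -⟩ := hf d hd
    exact hs
  · exact bot_le

lemma le_of_pow_le_prime {p : Ideal (MvPolynomial (Fin n) K)} (hp : p.IsPrime)
    (I : Ideal (MvPolynomial (Fin n) K)) :
    ∀ m : ℕ, I ^ (m + 1) ≤ p → I ≤ p := by
  intro m
  induction m with
  | zero => rw [pow_one]; exact id
  | succ m ih =>
    intro h
    rw [pow_succ] at h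
    rcases hp.mul_le.mp h with h | h
    · exact ih h
    · exact h

lemma totalDegree_lb (G : Finset (Fin n →₀ ℕ)) (hGne : G.Nonempty) (k : ℕ)
    {f : MvPolynomial (Fin n) K}
    (hf : f ∈ (monIdeal K (↑G : Set (Fin n →₀ ℕ))) ^ k) (hf0 : f ≠ 0) :
    k * (G.inf' hGne Finsupp.degree) ≤ f.totalDegree := by
  rw [pow_monIdeal] at hf
  obtain ⟨d, hd⟩ := MvPolynomial.support_nonempty.mpr hf0
  obtain ⟨s, hs, hle⟩ := hf d hd
  have h1 : k * (G.inf' hGne Finsupp.degree) ≤ s.degree := by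
    refine sumN_bound _ Finsupp.degree degree_add _ ?_ k s hs
    intro w hw
    exact Finset.inf'_le _ hw
  have h2 : s.degree ≤ d.degree := degree_mono hle
  have h3 : d.degree ≤ f.totalDegree := by
    rw [← sum_id_eq_degree]
    exact MvPolynomial.le_totalDegree hd
  omega

end Stmt8Aux



open MvPolynomial

/-- For a proper nonzero square-free monomial ideal `I` with
`v(I) = α(I) − 1`, one has `v(I^k) = α(I)·k − 1` for all `k ≥ 1`. -/
theorem stmt8 {K : Type*} [Field K] {n : ℕ}
    (I : Ideal (MvPolynomial (Fin n) K))
    (hsqfree : ∃ G : Finset (Fin n →₀ ℕ), (∀ s ∈ G, ∀ i, s i ≤ 1) ∧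
      I = Ideal.span ((fun s => (monomial s (1 : K) : MvPolynomial (Fin n) K)) '' G))
    (hproper : I ≠ ⊤) (hne : I ≠ ⊥)
    (hv : (vNumber I : ℤ) = (alphaNum I : ℤ) - 1) :
    ∀ k : ℕ, 1 ≤ k → (vNumber (I ^ k) : ℤ) = (alphaNum I : ℤ) * k - 1 := by
  classical
  intro k hk
  obtain ⟨k', rfl⟩ : ∃ k'', k = k'' + 1 := ⟨k - 1, by omega⟩
  obtain ⟨G, hGsf, hIG⟩ := hsqfree
  have hIG' : I = Stmt8Aux.monIdeal K (↑G : Set (Fin n →₀ ℕ)) := by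
    rw [hIG, Stmt8Aux.span_eq_monIdeal]
  have hGne : G.Nonempty := by
    rcases Finset.eq_empty_or_nonempty G with h | h
    · exfalso
      apply hne
      rw [hIG', h]
      simpa using Stmt8Aux.monIdeal_empty (K := K) (n := n)
    · exact h
  set α : ℕ := G.inf' hGne Finsupp.degree with hαdef
  obtain ⟨s₁, hs₁G, hs₁deg⟩ := Finset.exists_mem_eq_inf' hGne Finsupp.degree
  have hmonIα : (monomial s₁ (1:K)) ∈ I := by
    rw [hIG']
    exact Stmt8Aux.monomial_mem_monIdeal.mpr ⟨s₁, by exact_mod_cast hs₁G, le_rfl⟩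
  have hαmem : α ∈ {d | ∃ f ∈ I, f ≠ 0 ∧ f.totalDegree = d} := by
    refine ⟨monomial s₁ 1, hmonIα, by simp [MvPolynomial.monomial_eq_zero], ?_⟩
    rw [totalDegree_monomial _ (one_ne_zero), Stmt8Aux.sum_id_eq_degree, ← hs₁deg]
  have hαI : alphaNum I = α := by
    unfold alphaNum
    apply le_antisymm (Nat.sInf_le hαmem)
    refine le_csInf ⟨α, hαmem⟩ ?_
    rintro x ⟨f, hfI, hf0, rfl⟩
    have := Stmt8Aux.totalDegree_lb G hGne 1 (by rw [pow_one, ← hIG']; exact hfI) hf0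
    omega
  have hα1 : 1 ≤ α := by
    by_contra hcon
    apply hproper
    rw [Ideal.eq_top_iff_one]
    have hs0 : s₁ = 0 := by
      rw [← Finsupp.degree_eq_zero_iff, ← hs₁deg]
      omega
    rw [hs0] at hmonIα
    simpa using hmonIα
  have hvIN : vNumber I = α - 1 := by
    have hcast : (vNumber I : ℤ) = ((α - 1 : ℕ) : ℤ) := by
      rw [hv, hαI, Nat.cast_sub hα1]
      simp
    exact_mod_cast hcast
  have hproper' : Stmt8Aux.monIdeal K (↑G : Set (Fin n →₀ ℕ)) ≠ ⊤ := hIG' ▸ hproper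
  obtain ⟨t, C', hcolon'⟩ := Stmt8Aux.exists_monomial_colon_prime G hproper'
  have hV1ne : {d | ∃ f : MvPolynomial (Fin n) K, ∃ p ∈ Ass I, f.IsHomogeneous d ∧
      I.colon (Ideal.span {f}) = p}.Nonempty := by
    refine ⟨t.degree, monomial t 1, Stmt8Aux.varSpan K C', ?_,
      isHomogeneous_monomial _ rfl, ?_⟩
    · exact Stmt8Aux.colon_prime_isAssociated (by rw [hIG']; exact hcolon')
        (Stmt8Aux.varSpan_isPrime C')
    · rw [hIG']; exact hcolon'
  have hwit : ∃ f : MvPolynomial (Fin n) K, ∃ p ∈ Ass I,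
      f.IsHomogeneous (vNumber I) ∧ I.colon (Ideal.span {f}) = p := Nat.sInf_mem hV1ne
  rw [hvIN] at hwit
  obtain ⟨f, p, hpAss, hfhom, hfcolon⟩ := hwit
  have hp : p.IsPrime := hpAss.1
  have hf0 : f ≠ 0 := by
    rintro rfl
    apply hp.ne_top
    rw [← hfcolon, Ideal.eq_top_iff_one, Ideal.mem_colon_span_singleton]
    simpa using I.zero_mem
  have claim1 : ∀ u : Fin n →₀ ℕ, monomial u (1:K) ∈ p →
      ∀ d ∈ f.support, monomial (u + d) (1:K) ∈ I := by
    intro u hu d hd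
    rw [← hfcolon, Ideal.mem_colon_span_singleton] at hu
    rw [hIG'] at hu ⊢
    exact Stmt8Aux.monomial_mul_mem hu hd
  have hinfle : f.support.inf (fun d => I.colon (Ideal.span {monomial d (1:K)})) ≤ p := by
    intro z hz
    rw [Submodule.mem_finsetInf] at hz
    rw [← hfcolon, Ideal.mem_colon_span_singleton]
    have hzf : z * f = ∑ d ∈ f.support, C (coeff d f) * (z * monomial d 1) := by
      conv_lhs => rw [f.as_sum, Finset.mul_sum]
      refine Finset.sum_congr rfl fun d hd => ?_
      rw [show (monomial d (coeff d f) : MvPolynomial (Fin n) K)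
          = C (coeff d f) * monomial d 1 by rw [C_mul_monomial, mul_one]]
      ring
    rw [hzf]
    exact Ideal.sum_mem _ fun d hd =>
      Ideal.mul_mem_left _ _ (Ideal.mem_colon_span_singleton.mp (hz d hd))
  obtain ⟨dstar, hdstarsupp, hdstarle⟩ :=
    hp.prod_le.mp (le_trans Ideal.prod_le_inf hinfle)
  have hdstardeg : dstar.degree = α - 1 := by
    have hh := hfhom (Finsupp.mem_support_iff.mp hdstarsupp)
    rw [Finsupp.degree_eq_weight_one]
    exact hh
  set C : Finset (Fin n) := Finset.univ.filter (fun i => X i * monomial dstar (1:K) ∈ I)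
    with hCdef
  have hCmono : ∀ i ∈ C, monomial (dstar + Finsupp.single i 1) (1:K) ∈ I := by
    intro i hi
    rw [← Stmt8Aux.X_mul_monomial]
    exact (Finset.mem_filter.mp hi).2
  have hCzero : ∀ c ∈ C, dstar c = 0 := by
    intro c hc
    have hmem := hCmono c hc
    rw [hIG'] at hmem
    obtain ⟨s, hsG, hsle⟩ := Stmt8Aux.monomial_mem_monIdeal.mp hmem
    have hsG' : s ∈ G := by exact_mod_cast hsG
    have hdegs : (dstar + Finsupp.single c 1).degree ≤ s.degree := by
      rw [Stmt8Aux.degree_add, Stmt8Aux.degree_single, hdstardeg]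
      have hαle : α ≤ s.degree := Finset.inf'_le _ hsG'
      omega
    have hseq := Stmt8Aux.eq_of_le_of_degree_le hsle hdegs
    have h2 : s c = dstar c + 1 := by
      rw [hseq, Finsupp.add_apply, Finsupp.single_eq_same]
    have h3 := hGsf s hsG' c
    omega
  have hN2 : ∀ w ∈ G, ∃ c ∈ C, w c ≠ 0 := by
    intro w hw
    have hwp : monomial w (1:K) ∈ p := by
      apply hdstarle
      rw [Ideal.mem_colon_span_singleton, monomial_mul, mul_one, hIG']
      exact Stmt8Aux.monomial_mem_monIdeal.mpr
        ⟨w, by exact_mod_cast hw, le_add_right le_rfl⟩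
    obtain ⟨i, hwi, hXip⟩ := Stmt8Aux.exists_X_mem_of_monomial_mem hp hwp
    have hiC : i ∈ C := by
      rw [hCdef, Finset.mem_filter]
      refine ⟨Finset.mem_univ _, ?_⟩
      rw [Stmt8Aux.X_mul_monomial]
      have hcl := claim1 (Finsupp.single i 1) hXip dstar hdstarsupp
      rw [add_comm] at hcl
      exact hcl
    exact ⟨i, hiC, hwi⟩
  obtain ⟨w₀, hw₀G⟩ := id hGne
  obtain ⟨c₀, hc₀C, -⟩ := hN2 w₀ hw₀G
  set E : Fin n →₀ ℕ := dstar + k' • (dstar + Finsupp.single c₀ 1) with hEdef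
  have hEdeg : E.degree = (k' + 1) * α - 1 := by
    rw [hEdef, Stmt8Aux.degree_add, Stmt8Aux.smul_degree, Stmt8Aux.degree_add,
      Stmt8Aux.degree_single, hdstardeg, Nat.sub_add_cancel hα1]
    have hexp : (k' + 1) * α = k' * α + α := by ring
    omega
  have hsup : Stmt8Aux.varSpan K C ≤ (I^(k'+1)).colon (Ideal.span {monomial E (1:K)}) := by
    rw [Stmt8Aux.varSpan, Ideal.span_le]
    rintro x ⟨i, hiC', rfl⟩
    have hiC : i ∈ C := by exact_mod_cast hiC'
    rw [SetLike.mem_coe, Ideal.mem_colon_span_singleton, Stmt8Aux.X_mul_monomial]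
    have hEeq : E + Finsupp.single i 1
        = (dstar + Finsupp.single i 1) + k' • (dstar + Finsupp.single c₀ 1) := by
      rw [hEdef]
      abel
    have hmon : (monomial (E + Finsupp.single i 1) (1:K))
        = monomial (dstar + Finsupp.single i 1) 1
          * (monomial (dstar + Finsupp.single c₀ 1) 1) ^ k' := by
      rw [monomial_pow, one_pow, monomial_mul, mul_one, hEeq]
    rw [hmon, pow_succ']
    exact Ideal.mul_mem_mul (hCmono i hiC) (Ideal.pow_mem_pow (hCmono c₀ hc₀C) k')
  have hsub : (I^(k'+1)).colon (Ideal.span {monomial E (1:K)}) ≤ Stmt8Aux.varSpan K C := by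
    intro g hg
    rw [Ideal.mem_colon_span_singleton, mul_comm, hIG', Stmt8Aux.pow_monIdeal] at hg
    rw [Stmt8Aux.mem_varSpan]
    intro d hd
    have hmemEd := Stmt8Aux.monomial_mul_mem hg hd
    obtain ⟨s, hs, hsle⟩ := Stmt8Aux.monomial_mem_monIdeal.mp hmemEd
    have hcount0 : (k' + 1) * 1 ≤ ∑ i ∈ C, s i := by
      refine Stmt8Aux.sumN_bound _ (fun t => ∑ i ∈ C, t i) (fun a b => ?_) 1 ?_ (k'+1) s hs
      · simp [Finsupp.add_apply, Finset.sum_add_distrib]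
      · intro w hw
        obtain ⟨c, hcC, hwc⟩ := hN2 w (by exact_mod_cast hw)
        calc 1 ≤ w c := by omega
          _ ≤ ∑ i ∈ C, w i := Finset.single_le_sum (fun i _ => Nat.zero_le _) hcC
    have hcount : (k' + 1) ≤ ∑ i ∈ C, s i := by omega
    have hle2 : ∑ i ∈ C, s i ≤ ∑ i ∈ C, (E + d) i :=
      Finset.sum_le_sum (fun i _ => Finsupp.le_def.mp hsle i)
    have hEC : ∑ i ∈ C, E i = k' := by
      have h1 : ∀ i ∈ C, E i = k' * (Finsupp.single c₀ 1) i := by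
        intro i hi
        rw [hEdef, Finsupp.add_apply, Finsupp.smul_apply, Finsupp.add_apply, hCzero i hi]
        simp [smul_eq_mul]
      rw [Finset.sum_congr rfl h1, ← Finset.mul_sum]
      have h2 : ∑ i ∈ C, (Finsupp.single c₀ 1) i = 1 := by
        have h3 : ∀ i ∈ C, (Finsupp.single c₀ 1) i = if c₀ = i then 1 else 0 := by
          intro i _
          rw [Finsupp.single_apply]
        rw [Finset.sum_congr rfl h3, Finset.sum_ite_eq, if_pos hc₀C]
      rw [h2, mul_one]
    have hEdsum : ∑ i ∈ C, (E + d) i = k' + ∑ i ∈ C, d i := by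
      simp [Finsupp.add_apply, Finset.sum_add_distrib, hEC]
    by_contra hcon
    push_neg at hcon
    have hz : ∑ i ∈ C, d i = 0 := Finset.sum_eq_zero (fun i hi => hcon i hi)
    omega
  have hqeq : (I^(k'+1)).colon (Ideal.span {monomial E (1:K)}) = Stmt8Aux.varSpan K C :=
    le_antisymm hsub hsup
  have hassk : Stmt8Aux.varSpan K C ∈ Ass (I^(k'+1)) :=
    Stmt8Aux.colon_prime_isAssociated hqeq (Stmt8Aux.varSpan_isPrime C)
  have hmemVk : ((k'+1)*α - 1) ∈ {d | ∃ f : MvPolynomial (Fin n) K, ∃ p ∈ Ass (I^(k'+1)),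
      f.IsHomogeneous d ∧ (I^(k'+1)).colon (Ideal.span {f}) = p} :=
    ⟨monomial E 1, Stmt8Aux.varSpan K C, hassk, isHomogeneous_monomial _ hEdeg, hqeq⟩
  have hlb : ∀ x ∈ {d | ∃ f : MvPolynomial (Fin n) K, ∃ p ∈ Ass (I^(k'+1)),
      f.IsHomogeneous d ∧ (I^(k'+1)).colon (Ideal.span {f}) = p}, (k'+1)*α - 1 ≤ x := by
    rintro x ⟨f', p', hp'Ass, hf'hom, hf'colon⟩
    have hp' : p'.IsPrime := hp'Ass.1
    have hf'0 : f' ≠ 0 := by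
      rintro rfl
      apply hp'.ne_top
      rw [← hf'colon, Ideal.eq_top_iff_one, Ideal.mem_colon_span_singleton]
      simpa using (I^(k'+1)).zero_mem
    have hIple : I ≤ p' := by
      apply Stmt8Aux.le_of_pow_le_prime hp' I k'
      intro z hz
      rw [← hf'colon, Ideal.mem_colon_span_singleton]
      exact Ideal.mul_mem_right _ _ hz
    have hw₀p : monomial w₀ (1:K) ∈ p' := hIple (by
      rw [hIG']
      exact Stmt8Aux.monomial_mem_monIdeal.mpr ⟨w₀, by exact_mod_cast hw₀G, le_rfl⟩)
    obtain ⟨i, -, hXi⟩ := Stmt8Aux.exists_X_mem_of_monomial_mem hp' hw₀p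
    rw [← hf'colon] at hXi
    have hXf' : X i * f' ∈ I^(k'+1) := Ideal.mem_colon_span_singleton.mp hXi
    have hne' : X i * f' ≠ 0 := mul_ne_zero (X_ne_zero i) hf'0
    have hhom' : (X i * f').IsHomogeneous (1 + x) := (isHomogeneous_X _ _).mul hf'hom
    have htd : (X i * f').totalDegree = 1 + x := hhom'.totalDegree hne'
    have hbig := Stmt8Aux.totalDegree_lb G hGne (k'+1) (by rw [← hIG']; exact hXf') hne'
    rw [htd] at hbig
    rw [← hαdef] at hbig
    omega
  have hvk : vNumber (I^(k'+1)) = (k'+1)*α - 1 :=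
    le_antisymm (Nat.sInf_le hmemVk) (le_csInf ⟨_, hmemVk⟩ hlb)
  rw [hvk, hαI]
  have h1 : 1 ≤ (k'+1)*α := by
    calc 1 ≤ α := hα1
      _ ≤ (k'+1)*α := Nat.le_mul_of_pos_left α (by omega)
  rw [Nat.cast_sub h1]
  push_cast
  ring
end

section
/- Let t ≥ 2 and n be integers with t ≤ n ≤ 2t, and let I = I_t(P_n) = ⟨x_i x_{i+1} ⋯ x_{i+t−1} : 1 ≤ i ≤ n − t + 1⟩ ⊂ K[x_1,…,x_n] be the t-path ideal of the path P_n over a field K. Then v(I^k) = t·k − 1 for all k ≥ 1. -/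
/-!
Index the variables from `0` and put `s = n - t`, so that the generators of `I` are
`g_i = x_i ⋯ x_{i+t-1}` for `i ≤ s`, and `s ≤ t`.

The monomial `f = g_s^{k-1} · x_s ⋯ x_{s+t-2}` has degree `tk - 1`, and `(I^k : f)` is the prime
`(x_{n-1}, x_{s-1})` (only `(x_{n-1})` when `s = 0`): `x_{n-1} f = g_s^k` and
`x_{s-1} f = g_{s-1} g_s^{k-1}`, while a product of `k` generators dividing `x^μ f` is either
`g_s^k`, which forces `x_{n-1} ∣ x^μ`, or has a factor `g_c` with `c < s`, which covers `x_{s-1}`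
since `s ≤ t` and so forces `x_{s-1} ∣ x^μ`. Conversely, every associated prime `(I^k : f)`
contains some generator of `I`, hence a variable `x_j`; then `x_j f` is a nonzero element of `I^k`,
whose monomials all have degree at least `tk`, so `deg f ≥ tk - 1`.
-/

open MvPolynomial

open scoped Pointwise

namespace MvPolynomial

variable {σ R : Type*}

theorem span_monomial_image_pow_le [CommSemiring R] (S : Set (σ →₀ ℕ)) (k : ℕ) :
    Ideal.span ((monomial · (1 : R)) '' S) ^ k ≤ Ideal.span ((monomial · (1 : R)) '' (k • S)) := by
  induction k with
  | zero => simp [Ideal.one_eq_top]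
  | succ k ih =>
    rw [pow_succ, succ_nsmul]
    refine (Ideal.mul_mono_left ih).trans ?_
    rw [Ideal.span_mul_span']
    refine Ideal.span_mono (Set.mul_subset_iff.mpr ?_)
    rintro _ ⟨a, ha, rfl⟩ _ ⟨b, hb, rfl⟩
    exact ⟨a + b, Set.add_mem_add ha hb, by simp [monomial_mul]⟩

theorem isPrime_span_X_image [CommRing R] [IsDomain R] (A : Set σ) :
    (Ideal.span (X '' A : Set (MvPolynomial σ R))).IsPrime := by
  classical
  let φ : MvPolynomial σ R →ₐ[R] MvPolynomial σ R := aeval fun j => if j ∈ A then 0 else X j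
  have hsub : ∀ g, g - φ g ∈ Ideal.span (X '' A : Set (MvPolynomial σ R)) := by
    intro g
    induction g using MvPolynomial.induction_on with
    | C a => simp
    | add p q hp hq => simpa only [map_add, add_sub_add_comm] using Ideal.add_mem _ hp hq
    | mul_X p j hp =>
      by_cases hj : j ∈ A
      · simpa [φ, hj] using Ideal.mul_mem_left _ p (Ideal.subset_span (Set.mem_image_of_mem X hj))
      · simpa [φ, hj, sub_mul] using Ideal.mul_mem_right (X j) _ hp
  have hker : Ideal.span (X '' A : Set (MvPolynomial σ R)) = RingHom.ker φ := by
    refine le_antisymm ?_ fun g hg => by simpa [RingHom.mem_ker.mp hg] using hsub g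
    rw [Ideal.span_le]
    rintro _ ⟨j, hj, rfl⟩
    simp [φ, hj]
  rw [hker]
  exact RingHom.ker_isPrime φ

theorem le_add_one_of_X_mem_colon [CommRing R] [IsDomain R] {J : Ideal (MvPolynomial σ R)}
    {a d : ℕ} (hJ : J ≤ idealOfVars σ R ^ a) {f : MvPolynomial σ R} (hf : f.IsHomogeneous d)
    (hne : J.colon (Ideal.span {f}) ≠ ⊤) {j : σ} (hX : X j ∈ J.colon (Ideal.span {f})) :
    a ≤ d + 1 := by
  have hf0 : f ≠ 0 := by
    rintro rfl
    exact hne (by rw [Ideal.colon_span, Submodule.colon_singleton_zero])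
  obtain ⟨μ, hμ⟩ := support_nonempty.mpr (mul_ne_zero (X_ne_zero j) hf0)
  have hdeg : μ.degree = d + 1 := by
    rw [Finsupp.degree_eq_weight_one, add_comm]
    exact ((isHomogeneous_X R j).mul hf) (mem_support_iff.mp hμ)
  exact hdeg ▸ (mem_pow_idealOfVars_iff a _).mp (hJ (Ideal.mem_colon_span_singleton.mp hX)) μ hμ

end MvPolynomial

theorem mem_Ass_of_colon_eq {K : Type*} [Field K] {n : ℕ} {I p : Ideal (MvPolynomial (Fin n) K)}
    {f : MvPolynomial (Fin n) K} (hp : p.IsPrime) (h : I.colon (Ideal.span {f}) = p) :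
    p ∈ Ass I := by
  refine isAssociatedPrime_iff.mpr ⟨hp, Submodule.Quotient.mk f, ?_⟩
  rw [← h]
  ext r
  rw [Ideal.mem_colon_span_singleton, Submodule.mem_colon_singleton, Submodule.mem_bot,
    ← Submodule.Quotient.mk_smul, Submodule.Quotient.mk_eq_zero, smul_eq_mul]

section PathIdeal

variable {R : Type*} {n t : ℕ}

def pathSupport (n t i : ℕ) : Finset (Fin n) :=
  Finset.univ.filter fun j : Fin n => i ≤ (j : ℕ) ∧ (j : ℕ) < i + t

noncomputable def pathExponent (n t i : ℕ) : Fin n →₀ ℕ :=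
  ∑ j ∈ pathSupport n t i, Finsupp.single j 1

def pathExponents (n t : ℕ) : Set (Fin n →₀ ℕ) :=
  pathExponent n t '' {i | i + t ≤ n}

noncomputable def pathIdeal (R : Type*) [CommSemiring R] (n t : ℕ) :
    Ideal (MvPolynomial (Fin n) R) :=
  Ideal.span ((monomial · 1) '' pathExponents n t)

theorem pathExponent_apply (i : ℕ) (j : Fin n) :
    pathExponent n t i j = if i ≤ (j : ℕ) ∧ (j : ℕ) < i + t then 1 else 0 := by
  classical
  simp [pathExponent, Finsupp.finsetSum_apply, Finsupp.single_apply, pathSupport]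

theorem card_pathSupport {i : ℕ} (h : i + t ≤ n) : (pathSupport n t i).card = t := by
  have : (pathSupport n t i).map Fin.valEmbedding = Finset.Ico i (i + t) := by
    ext m
    simp only [pathSupport, Finset.mem_map, Finset.mem_filter, Finset.mem_univ, true_and,
      Fin.valEmbedding_apply, Finset.mem_Ico]
    exact ⟨fun ⟨j, hj, hjm⟩ => hjm ▸ hj, fun hm => ⟨⟨m, by omega⟩, hm, rfl⟩⟩
  rw [← Finset.card_map, this, Nat.card_Ico, Nat.add_sub_cancel_left]

theorem degree_pathExponent {i : ℕ} (h : i + t ≤ n) : (pathExponent n t i).degree = t := by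
  simp [pathExponent, map_sum, Finsupp.degree_single, card_pathSupport h]

theorem pathIdeal_eq_span_prod_X [CommSemiring R] :
    pathIdeal R n t = Ideal.span {g | ∃ i : ℕ, i + t ≤ n ∧
      g = ∏ j ∈ Finset.univ.filter (fun j : Fin n => i ≤ (j : ℕ) ∧ (j : ℕ) < i + t), X j} := by
  simp only [pathIdeal, pathExponents, Set.image_image, pathExponent, monomial_sum_one]
  congr 1
  ext g
  simp [pathSupport, eq_comm, X]

theorem monomial_pathExponent_mem [CommSemiring R] {i : ℕ} (h : i + t ≤ n) :
    monomial (pathExponent n t i) (1 : R) ∈ pathIdeal R n t :=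
  Ideal.subset_span ⟨_, ⟨i, h, rfl⟩, rfl⟩

theorem pathIdeal_le_idealOfVars_pow [CommSemiring R] [Nontrivial R] :
    pathIdeal R n t ≤ idealOfVars (Fin n) R ^ t := by
  rw [pathIdeal, Ideal.span_le]
  rintro _ ⟨_, ⟨i, hi, rfl⟩, rfl⟩
  exact (monomial_mem_pow_idealOfVars_iff _ _ one_ne_zero).mpr (degree_pathExponent hi).ge

theorem exists_X_mem_of_pathIdeal_le [CommSemiring R] (htn : t ≤ n)
    {q : Ideal (MvPolynomial (Fin n) R)} [q.IsPrime] (h : pathIdeal R n t ≤ q) : ∃ j, X j ∈ q := by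
  have hmem := h (monomial_pathExponent_mem (R := R) (i := 0) (by omega))
  rw [pathExponent, monomial_sum_one] at hmem
  obtain ⟨j, -, hj⟩ := Ideal.IsPrime.prod_mem_iff.mp hmem
  exact ⟨j, hj⟩

theorem eq_nsmul_or_exists_of_mem_nsmul_pathExponents (hn : n ≤ 2 * t) {k : ℕ}
    {d : Fin n →₀ ℕ} (hd : d ∈ k • pathExponents n t) :
    d = k • pathExponent n t (n - t) ∨ ∃ j : Fin n, (j : ℕ) + 1 = n - t ∧ d j ≠ 0 := by
  induction k generalizing d with
  | zero => exact Or.inl (by simpa using hd)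
  | succ k ih =>
    rw [succ_nsmul] at hd
    obtain ⟨d', hd', _, ⟨c, hc, rfl⟩, rfl⟩ := hd
    rcases ih hd' with rfl | ⟨j, hj, hd'j⟩
    · rcases (show c = n - t ∨ c < n - t by have : c + t ≤ n := hc; omega) with rfl | hcs
      · exact Or.inl (succ_nsmul _ _).symm
      · refine Or.inr ⟨⟨n - t - 1, by omega⟩, show n - t - 1 + 1 = n - t by omega, ?_⟩
        rw [Finsupp.add_apply, pathExponent_apply c, if_pos (by dsimp only; omega)]
        omega
    · exact Or.inr ⟨j, hj, by simp [hd'j]⟩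

noncomputable def pathWitness (n t m : ℕ) : Fin n →₀ ℕ :=
  m • pathExponent n t (n - t) + pathExponent n (t - 1) (n - t)

def witnessVars (n t : ℕ) : Set (Fin n) :=
  {j | (j : ℕ) + 1 = n ∨ (j : ℕ) + 1 = n - t}

theorem degree_pathWitness (ht : 1 ≤ t) (htn : t ≤ n) (m : ℕ) :
    (pathWitness n t m).degree = t * (m + 1) - 1 := by
  rw [pathWitness, map_add, map_nsmul, degree_pathExponent (by omega),
    degree_pathExponent (by omega), smul_eq_mul]
  rw [mul_comm m t, Nat.mul_succ]
  omega

theorem pathWitness_apply (m : ℕ) (j : Fin n) :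
    pathWitness n t m j = m * (if n - t ≤ (j : ℕ) ∧ (j : ℕ) < n - t + t then 1 else 0) +
      if n - t ≤ (j : ℕ) ∧ (j : ℕ) < n - t + (t - 1) then 1 else 0 := by
  simp [pathWitness, pathExponent_apply]

theorem X_mul_monomial_pathWitness_mem [CommSemiring R] (ht : 1 ≤ t) (htn : t ≤ n) (m : ℕ)
    {j : Fin n} (hj : j ∈ witnessVars n t) :
    X j * monomial (pathWitness n t m) (1 : R) ∈ pathIdeal R n t ^ (m + 1) := by
  rw [X, monomial_mul, one_mul]
  rcases hj with hj | hj
  · have hexp : Finsupp.single j 1 + pathWitness n t m = (m + 1) • pathExponent n t (n - t) := by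
      ext i
      simp only [Finsupp.add_apply, Finsupp.smul_apply, smul_eq_mul, Finsupp.single_apply,
        Fin.ext_iff, pathWitness_apply, pathExponent_apply]
      split_ifs <;> omega
    rw [hexp, show (1 : R) = 1 ^ (m + 1) from (one_pow _).symm, ← monomial_pow]
    exact Ideal.pow_mem_pow (monomial_pathExponent_mem (by omega)) _
  · have hexp : Finsupp.single j 1 + pathWitness n t m =
        pathExponent n t (n - t - 1) + m • pathExponent n t (n - t) := by
      ext i
      simp only [Finsupp.add_apply, Finsupp.smul_apply, smul_eq_mul, Finsupp.single_apply,
        Fin.ext_iff, pathWitness_apply, pathExponent_apply]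
      split_ifs <;> omega
    rw [hexp, show (1 : R) = 1 * 1 ^ m by simp, ← monomial_mul, ← monomial_pow, pow_succ']
    exact Ideal.mul_mem_mul (monomial_pathExponent_mem (by omega))
      (Ideal.pow_mem_pow (monomial_pathExponent_mem (by omega)) _)

theorem exists_mem_witnessVars_ne_zero (ht : 1 ≤ t) (htn : t ≤ n) (hn : n ≤ 2 * t) {m : ℕ}
    {d μ : Fin n →₀ ℕ} (hd : d ∈ (m + 1) • pathExponents n t) (hle : d ≤ μ + pathWitness n t m) :
    ∃ j ∈ witnessVars n t, μ j ≠ 0 := by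
  rcases eq_nsmul_or_exists_of_mem_nsmul_pathExponents hn hd with rfl | ⟨j, hj, hdj⟩
  · refine ⟨⟨n - 1, by omega⟩, Or.inl (show n - 1 + 1 = n by omega), ?_⟩
    have := hle ⟨n - 1, by omega⟩
    simp only [Finsupp.add_apply, Finsupp.smul_apply, smul_eq_mul, pathWitness_apply,
      pathExponent_apply] at this
    split_ifs at this <;> omega
  · refine ⟨j, Or.inr hj, ?_⟩
    have := hle j
    rw [Finsupp.add_apply, pathWitness_apply] at this
    split_ifs at this <;> omega

theorem colon_pathIdeal_pow [CommSemiring R] (ht : 1 ≤ t) (htn : t ≤ n)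
    (hn : n ≤ 2 * t) (m : ℕ) :
    (pathIdeal R n t ^ (m + 1)).colon (Ideal.span {monomial (pathWitness n t m) (1 : R)}) =
      Ideal.span (X '' witnessVars n t) := by
  apply le_antisymm
  · intro r hr
    have hmem := span_monomial_image_pow_le _ _ (Ideal.mem_colon_span_singleton.mp hr)
    rw [mem_ideal_span_monomial_image] at hmem
    rw [mem_ideal_span_X_image]
    intro μ hμ
    have hsupp : μ + pathWitness n t m ∈ (r * monomial (pathWitness n t m) 1).support := by
      rwa [mem_support_iff, coeff_mul_monomial, mul_one, ← mem_support_iff]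
    obtain ⟨d, hd, hle⟩ := hmem _ hsupp
    exact exists_mem_witnessVars_ne_zero ht htn hn hd hle
  · rw [Ideal.span_le]
    rintro _ ⟨j, hj, rfl⟩
    exact Ideal.mem_colon_span_singleton.mpr (X_mul_monomial_pathWitness_mem ht htn m hj)

end PathIdeal

theorem vNumber_pathIdeal_pow {K : Type*} [Field K] {n t : ℕ} (ht : 1 ≤ t) (htn : t ≤ n)
    (hn : n ≤ 2 * t) (m : ℕ) :
    vNumber (pathIdeal K n t ^ (m + 1)) = t * (m + 1) - 1 := by
  have hwitness := colon_pathIdeal_pow (R := K) ht htn hn m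
  refine IsLeast.csInf_eq ⟨⟨_, _, mem_Ass_of_colon_eq (isPrime_span_X_image _) hwitness,
    isHomogeneous_monomial _ (degree_pathWitness ht htn m), hwitness⟩, ?_⟩
  rintro d ⟨f, q, hq, hf, hcolon⟩
  have hqprime := hq.isPrime
  have hle : pathIdeal K n t ^ (m + 1) ≤ q := hcolon ▸ Ideal.le_colon
  obtain ⟨j, hj⟩ := exists_X_mem_of_pathIdeal_le htn (hqprime.le_of_pow_le hle)
  have hdeg : pathIdeal K n t ^ (m + 1) ≤ idealOfVars (Fin n) K ^ (t * (m + 1)) := by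
    rw [pow_mul]
    exact Ideal.pow_right_mono pathIdeal_le_idealOfVars_pow _
  have hbound := le_add_one_of_X_mem_colon hdeg hf (hcolon ▸ hqprime.ne_top) (hcolon ▸ hj)
  omega

/-- For integers `2 ≤ t ≤ n ≤ 2t`, the `t`-path ideal
`I = I_t(P_n) = ⟨x_i⋯x_{i+t−1}⟩` of the path `P_n` satisfies `v(I^k) = t·k − 1`
for all `k ≥ 1`. -/
theorem stmt9 {K : Type*} [Field K] {n t : ℕ}
    (ht : 2 ≤ t) (htn : t ≤ n) (hn2t : n ≤ 2 * t)
    (I : Ideal (MvPolynomial (Fin n) K))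
    (hI : I = Ideal.span {g | ∃ i : ℕ, i + t ≤ n ∧
      g = ∏ j ∈ Finset.univ.filter (fun j : Fin n => i ≤ (j : ℕ) ∧ (j : ℕ) < i + t),
        X j}) :
    ∀ k : ℕ, 1 ≤ k → (vNumber (I ^ k) : ℤ) = (t : ℤ) * k - 1 := by
  intro k hk
  obtain ⟨m, rfl⟩ : ∃ m, k = m + 1 := ⟨k - 1, by omega⟩
  rw [hI, ← pathIdeal_eq_span_prod_X, vNumber_pathIdeal_pow (by omega) htn hn2t m,
    Nat.cast_sub (Nat.one_le_iff_ne_zero.mpr (by positivity))]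
  push_cast
  ring
end

section
/- Let S = K[x_1,…,x_n] be a polynomial ring over a field K and I ⊂ S a proper nonzero monomial ideal with v(I) = α(I) − 1. Suppose there exist an associated prime p of I, generated by a set of variables, and a monomial f ∈ S with (I : f) = p, deg(f) = v(I), and such that no variable x_i ∈ p divides f. Then for every k ≥ 1, p ∈ Ass(I^k) and v(I^k) = v_p(I^k) = α(I)·k − 1. -/
open MvPolynomial Pointwise

noncomputable section StmtAux
variable {K : Type*} [Field K] {n : ℕ}

open Classical in
/-- masked degree: sum of exponents over variables in `A` -/
def ADeg (A : Set (Fin n)) (d : Fin n →₀ ℕ) : ℕ :=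
  ∑ i, if i ∈ A then d i else 0

/-- total degree of an exponent vector -/
def Dg (d : Fin n →₀ ℕ) : ℕ := ∑ i, d i

lemma ADeg_add (A : Set (Fin n)) (a b : Fin n →₀ ℕ) :
    ADeg A (a + b) = ADeg A a + ADeg A b := by
  classical
  simp only [ADeg, Finsupp.coe_add, Pi.add_apply]
  rw [← Finset.sum_add_distrib]
  exact Finset.sum_congr rfl fun i _ => by split <;> simp

lemma Dg_add (a b : Fin n →₀ ℕ) : Dg (a + b) = Dg a + Dg b := by
  simp [Dg, Finset.sum_add_distrib]

lemma ADeg_smul (A : Set (Fin n)) (c : ℕ) (a : Fin n →₀ ℕ) :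
    ADeg A (c • a) = c * ADeg A a := by
  classical
  simp only [ADeg, Finsupp.coe_smul, Pi.smul_apply, smul_eq_mul, Finset.mul_sum]
  exact Finset.sum_congr rfl fun i _ => by split <;> simp

lemma Dg_smul (c : ℕ) (a : Fin n →₀ ℕ) : Dg (c • a) = c * Dg a := by
  simp [Dg, Finset.mul_sum]

lemma ADeg_single {A : Set (Fin n)} {i : Fin n} (hi : i ∈ A) :
    ADeg A (Finsupp.single i 1) = 1 := by
  classical
  have : ∀ j : Fin n, (if j ∈ A then (Finsupp.single i 1) j else 0)
      = if i = j then (if j ∈ A then 1 else 0) else 0 := by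
    intro j
    rcases eq_or_ne i j with rfl | hij
    · simp [Finsupp.single_apply]
    · simp [Finsupp.single_apply, hij]
  rw [ADeg]
  rw [Finset.sum_congr rfl fun j _ => this j, Finset.sum_ite_eq]
  simp [hi]

lemma Dg_single (i : Fin n) : Dg (Finsupp.single i 1) = 1 := by
  classical
  simp [Dg, Finsupp.single_apply]

lemma sum_eq_Dg (d : Fin n →₀ ℕ) : (d.sum fun _ e => e) = Dg d := by
  classical
  rw [Finsupp.sum, Dg]
  exact Finset.sum_subset (Finset.subset_univ _)
    (fun i _ h => Finsupp.notMem_support_iff.mp h)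

lemma degree_eq_Dg (d : Fin n →₀ ℕ) : d.degree = Dg d := by
  classical
  rw [Finsupp.degree, Dg]
  exact Finset.sum_subset (Finset.subset_univ _)
    (fun i _ h => Finsupp.notMem_support_iff.mp h)

lemma pos_of_ADeg_pos {A : Set (Fin n)} {d : Fin n →₀ ℕ} (h : 1 ≤ ADeg A d) :
    ∃ i ∈ A, d i ≠ 0 := by
  classical
  rw [ADeg] at h
  have h0 : (∑ i, if i ∈ A then d i else 0) ≠ 0 := by omega
  obtain ⟨i, _, hi⟩ := Finset.exists_ne_zero_of_sum_ne_zero h0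
  by_cases hiA : i ∈ A
  · exact ⟨i, hiA, by simpa [hiA] using hi⟩
  · simp [hiA] at hi

/-- key support lemma for monomial ideals -/
lemma supp_span {G' : Set (Fin n →₀ ℕ)} {u : MvPolynomial (Fin n) K}
    (hu : u ∈ Ideal.span ((fun a => (monomial a (1 : K) : MvPolynomial (Fin n) K)) '' G')) :
    ∀ d ∈ u.support, ∃ a ∈ G', ∃ b, d = a + b := by
  classical
  refine Submodule.span_induction
    (p := fun x _ => ∀ d ∈ x.support, ∃ a ∈ G', ∃ b, d = a + b) ?_ ?_ ?_ ?_ hu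
  · rintro x ⟨a, ha, rfl⟩ d hd
    rw [support_monomial, if_neg one_ne_zero, Finset.mem_singleton] at hd
    exact ⟨a, ha, 0, by simp [hd]⟩
  · simp
  · intro x y _ _ hx hy d hd
    rcases Finset.mem_union.mp (Finsupp.support_add hd) with h | h
    · exact hx d h
    · exact hy d h
  · intro r x _ hx d hd
    rw [smul_eq_mul] at hd
    obtain ⟨c, hc, e, he, rfl⟩ := Finset.mem_add.mp (support_mul r x hd)
    obtain ⟨a, ha, b, hb⟩ := hx e he
    exact ⟨a, ha, b + c, by rw [hb]; abel⟩

lemma mem_span_X {A : Set (Fin n)} {u : MvPolynomial (Fin n) K}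
    (h : ∀ d ∈ u.support, ∃ i ∈ A, d i ≠ 0) :
    u ∈ Ideal.span ((fun i => (X i : MvPolynomial (Fin n) K)) '' A) := by
  classical
  rw [← u.support_sum_monomial_coeff]
  refine Ideal.sum_mem _ fun d hd => ?_
  obtain ⟨i, hiA, hdi⟩ := h d hd
  have hle : Finsupp.single i 1 ≤ d :=
    Finsupp.single_le_iff.mpr (Nat.one_le_iff_ne_zero.mpr hdi)
  have hmono : (monomial d (coeff d u) : MvPolynomial (Fin n) K)
      = monomial (d - Finsupp.single i 1) (coeff d u) * X i := by
    have hX : (X i : MvPolynomial (Fin n) K) = monomial (Finsupp.single i 1) 1 := rfl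
    rw [hX, monomial_mul, mul_one, tsub_add_cancel_of_le hle]
  rw [hmono]
  exact Ideal.mul_mem_left _ _ (Ideal.subset_span ⟨i, hiA, rfl⟩)

lemma X_image_eq (A : Set (Fin n)) :
    ((fun a => (monomial a (1 : K) : MvPolynomial (Fin n) K)) ''
      ((fun i => Finsupp.single i 1) '' A))
    = ((fun i => (X i : MvPolynomial (Fin n) K)) '' A) := by
  rw [Set.image_image]
  exact Set.image_congr fun i _ => rfl

end StmtAux



open MvPolynomial

/-- Let `I` be a proper nonzero monomial ideal with `v(I) = α(I) − 1`.
Suppose there are an associated prime `p` of `I` generated by variables, and a monomial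
`f` with `(I : f) = p`, `deg f = v(I)`, and no variable of `p` divides `f`. Then for all
`k ≥ 1`, `p ∈ Ass(I^k)` and `v(I^k) = v_p(I^k) = α(I)·k − 1`. -/
theorem stmt10 {K : Type*} [Field K] {n : ℕ}
    (I : Ideal (MvPolynomial (Fin n) K))
    (hmon : ∃ G : Finset (Fin n →₀ ℕ),
      I = Ideal.span ((fun s => (monomial s (1 : K) : MvPolynomial (Fin n) K)) '' G))
    (hproper : I ≠ ⊤) (hne : I ≠ ⊥)
    (hv : (vNumber I : ℤ) = (alphaNum I : ℤ) - 1)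
    (p : Ideal (MvPolynomial (Fin n) K)) (hp : p ∈ Ass I)
    (A : Set (Fin n)) (hpA : p = Ideal.span ((fun i => (X i : MvPolynomial (Fin n) K)) '' A))
    (s : Fin n →₀ ℕ)
    (hcolon : I.colon (Ideal.span {(monomial s (1 : K) : MvPolynomial (Fin n) K)}) = p)
    (hdeg : (monomial s (1 : K) : MvPolynomial (Fin n) K).totalDegree = vNumber I)
    (hnotdvd : ∀ i ∈ A, s i = 0) :
    ∀ k : ℕ, 1 ≤ k → p ∈ Ass (I ^ k) ∧
      (vNumber (I ^ k) : ℤ) = (alphaNum I : ℤ) * k - 1 ∧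
      vNumberAt (I ^ k) p = vNumber (I ^ k) := by
  classical
  obtain ⟨G, hG⟩ := hmon
  set α := alphaNum I with hαdef
  have hαle : ∀ h ∈ I, h ≠ (0 : MvPolynomial (Fin n) K) → α ≤ h.totalDegree :=
    fun h hh h0 => Nat.sInf_le ⟨h, hh, h0, rfl⟩
  have hδ : α = vNumber I + 1 := by omega
  have hα1 : 1 ≤ α := by omega
  have hsdeg : Dg s = vNumber I := by
    rwa [totalDegree_monomial _ one_ne_zero, sum_eq_Dg] at hdeg
  have hsA : ADeg A s = 0 := by
    rw [ADeg]
    exact Finset.sum_eq_zero fun i _ => by split <;> simp_all [hnotdvd]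
  have hIp : I ≤ p := by
    rw [← hcolon]
    intro r hr
    exact Ideal.mem_colon_span_singleton.mpr (Ideal.mul_mem_right _ _ hr)
  have hXp : ∀ i ∈ A, (X i : MvPolynomial (Fin n) K) ∈ p :=
    fun i hi => hpA ▸ Ideal.subset_span ⟨i, hi, rfl⟩
  have hXf : ∀ i ∈ A, (X i : MvPolynomial (Fin n) K) * monomial s (1 : K) ∈ I := by
    intro i hi
    have : (X i : MvPolynomial (Fin n) K) ∈ I.colon (Ideal.span {monomial s (1 : K)}) := by
      rw [hcolon]; exact hXp i hi
    exact Ideal.mem_colon_span_singleton.mp this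
  have hGenI : ∀ a ∈ G, (monomial a (1 : K) : MvPolynomial (Fin n) K) ∈ I :=
    fun a ha => hG ▸ Ideal.subset_span ⟨a, by simpa using ha, rfl⟩
  have hGenDg : ∀ a ∈ G, α ≤ Dg a := by
    intro a ha
    have := hαle _ (hGenI a ha) (by simp [monomial_eq_zero])
    rwa [totalDegree_monomial _ one_ne_zero, sum_eq_Dg] at this
  have hGenA : ∀ a ∈ G, 1 ≤ ADeg A a := by
    intro a ha
    have hap : (monomial a (1 : K) : MvPolynomial (Fin n) K) ∈
        Ideal.span ((fun a => (monomial a (1 : K) : MvPolynomial (Fin n) K)) ''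
          ((fun i => Finsupp.single i 1) '' A)) := by
      rw [X_image_eq, ← hpA]; exact hIp (hGenI a ha)
    obtain ⟨e, he, b, hb⟩ := supp_span hap a (by simp [support_monomial])
    obtain ⟨i, hiA, rfl⟩ := he
    rw [hb, ADeg_add, ADeg_single hiA]
    omega
  have hGk : ∀ k, 1 ≤ k → ∃ Gk : Set (Fin n →₀ ℕ),
      I ^ k = Ideal.span ((fun a => (monomial a (1 : K) : MvPolynomial (Fin n) K)) '' Gk) ∧
      ∀ a ∈ Gk, k ≤ ADeg A a ∧ k * α ≤ Dg a := by
    intro k hk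
    induction k, hk using Nat.le_induction with
    | base =>
      exact ⟨↑G, by simpa using hG,
        fun a ha => ⟨hGenA a (by simpa using ha), by simpa using hGenDg a (by simpa using ha)⟩⟩
    | succ k hk ih =>
      obtain ⟨Gk, hspan, hbd⟩ := ih
      refine ⟨Gk + ↑G, ?_, ?_⟩
      · rw [pow_succ, hspan, hG, Ideal.span_mul_span']
        congr 1
        ext z
        simp only [Set.mem_mul, Set.mem_image, Set.mem_add]
        constructor
        · rintro ⟨x, ⟨a, ha, rfl⟩, y, ⟨b, hb, rfl⟩, rfl⟩
          exact ⟨a + b, ⟨a, ha, b, hb, rfl⟩, by rw [monomial_mul, one_mul]⟩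
        · rintro ⟨c, ⟨a, ha, b, hb, rfl⟩, rfl⟩
          exact ⟨monomial a 1, ⟨a, ha, rfl⟩, monomial b 1, ⟨b, hb, rfl⟩,
            by rw [monomial_mul, one_mul]⟩
      · rintro c hc
        obtain ⟨a, ha, b, hb, rfl⟩ := Set.mem_add.mp hc
        obtain ⟨h1, h2⟩ := hbd a ha
        have h3 := hGenA b (by simpa using hb)
        have h4 := hGenDg b (by simpa using hb)
        constructor
        · rw [ADeg_add]; omega
        · rw [Dg_add, add_mul, one_mul]; omega
  have hαlowk : ∀ k, 1 ≤ k → ∀ h ∈ I ^ k, h ≠ (0 : MvPolynomial (Fin n) K) →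
      k * α ≤ h.totalDegree := by
    intro k hk h hh h0
    obtain ⟨Gk, hspan, hbd⟩ := hGk k hk
    obtain ⟨d, hd⟩ := support_nonempty.mpr h0
    obtain ⟨a, ha, b, hab⟩ := supp_span (hspan ▸ hh) d hd
    have h1 : Dg d = Dg a + Dg b := by rw [hab, Dg_add]
    have h2 := (hbd a ha).2
    have h3 : Dg d ≤ h.totalDegree := by rw [← sum_eq_Dg]; exact le_totalDegree hd
    omega
  intro k hk
  obtain ⟨j, rfl⟩ : ∃ j, k = j + 1 := ⟨k - 1, by omega⟩
  have hAne : A.Nonempty := by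
    rcases Set.eq_empty_or_nonempty A with h | h
    · exfalso
      apply hne
      rw [eq_bot_iff]
      intro x hx
      have := hIp hx
      rw [hpA, h] at this
      simpa using this
    · exact h
  obtain ⟨i0, hi0⟩ := hAne
  set e : Fin n →₀ ℕ := (j + 1) • s + j • Finsupp.single i0 1 with he
  set m : MvPolynomial (Fin n) K := monomial e 1 with hm
  have hDge : Dg e = (j + 1) * α - 1 := by
    rw [he, Dg_add, Dg_smul, Dg_smul, Dg_single, hsdeg, hδ]
    have : (j + 1) * (vNumber I + 1) = ((j + 1) * vNumber I + j) + 1 := by ring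
    rw [this, Nat.add_sub_cancel, mul_one]
  have hADege : ADeg A e = j := by
    rw [he, ADeg_add, ADeg_smul, ADeg_smul, ADeg_single hi0, hsA]
    simp
  have hcolonk : (I ^ (j + 1)).colon (Ideal.span {m}) = p := by
    apply le_antisymm
    · intro u hu
      have hum : u * m ∈ I ^ (j + 1) := Ideal.mem_colon_span_singleton.mp hu
      obtain ⟨Gk, hspan, hbd⟩ := hGk (j + 1) (by omega)
      rw [hpA]
      apply mem_span_X
      intro d hd
      have hcoeff : d + e ∈ (u * m).support := by
        rw [mem_support_iff, hm, coeff_mul_monomial, mul_one]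
        exact mem_support_iff.mp hd
      obtain ⟨a, ha, b, hab⟩ := supp_span (hspan ▸ hum) _ hcoeff
      have h1 : j + 1 ≤ ADeg A a := (hbd a ha).1
      have h2 : ADeg A d + ADeg A e = ADeg A a + ADeg A b := by
        rw [← ADeg_add, ← ADeg_add, ← hab]
      apply pos_of_ADeg_pos
      omega
    · rw [hpA, Ideal.span_le]
      rintro x ⟨i, hiA, rfl⟩
      show (X i : MvPolynomial (Fin n) K) ∈ (I ^ (j + 1)).colon (Ideal.span {m})
      apply Ideal.mem_colon_span_singleton.mpr
      have hX : ∀ i' : Fin n, (X i' : MvPolynomial (Fin n) K)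
          = monomial (Finsupp.single i' 1) 1 := fun _ => rfl
      have hexp : Finsupp.single i 1 + e
          = (Finsupp.single i 1 + s) + j • (s + Finsupp.single i0 1) := by
        rw [he, smul_add, succ_nsmul]
        abel
      have key : (X i : MvPolynomial (Fin n) K) * m
          = ((X i : MvPolynomial (Fin n) K) * monomial s 1) *
            (monomial (s + Finsupp.single i0 1) (1 : K)) ^ j := by
        rw [hX i, hm, monomial_pow, one_pow, monomial_mul, monomial_mul, monomial_mul, hexp]
        norm_num
      have hgI : (monomial (s + Finsupp.single i0 1) (1 : K) : MvPolynomial (Fin n) K) ∈ I := by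
        have : (monomial (s + Finsupp.single i0 1) (1 : K) : MvPolynomial (Fin n) K)
            = X i0 * monomial s 1 := by
          rw [hX i0, monomial_mul, one_mul, add_comm]
        rw [this]
        exact hXf i0 hi0
      rw [key, pow_succ']
      exact Ideal.mul_mem_mul (hXf i hiA) (Ideal.pow_mem_pow hgI j)
  have hAssk : p ∈ Ass (I ^ (j + 1)) := by
    refine ⟨hp.1, ⟨Submodule.Quotient.mk m, ?_⟩⟩
    have hann : (⊥ : Submodule _ (MvPolynomial (Fin n) K ⧸ I ^ (j + 1))).colon
        {Submodule.Quotient.mk m} = p := by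
      rw [← hcolonk]
      ext r
      rw [Submodule.mem_colon_singleton, Submodule.mem_bot, ← Submodule.Quotient.mk_smul,
        Submodule.Quotient.mk_eq_zero, Ideal.mem_colon_span_singleton, smul_eq_mul]
    rw [hann, hp.1.radical]
  have hhomm : m.IsHomogeneous ((j + 1) * α - 1) :=
    isHomogeneous_monomial 1 (by rw [degree_eq_Dg, hDge])
  have hlow : ∀ (d : ℕ) (h : MvPolynomial (Fin n) K) (q : Ideal (MvPolynomial (Fin n) K)),
      q.IsPrime → h.IsHomogeneous d → (I ^ (j + 1)).colon (Ideal.span {h}) = q →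
      (j + 1) * α - 1 ≤ d := by
    intro d h q hqprime hhom hcol
    have hne0 : h ≠ 0 := by
      rintro rfl
      apply hqprime.ne_top
      rw [← hcol, eq_top_iff]
      intro r _
      rw [Ideal.mem_colon_span_singleton, mul_zero]
      exact Submodule.zero_mem _
    have hGne : G.Nonempty := by
      rcases G.eq_empty_or_nonempty with h' | h'
      · exfalso; apply hne; rw [hG, h']; simp
      · exact h'
    obtain ⟨a0, ha0⟩ := hGne
    have hma : (monomial a0 (1 : K) : MvPolynomial (Fin n) K) ^ (j + 1) ∈ q := by
      rw [← hcol]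
      exact Ideal.mem_colon_span_singleton.mpr
        (Ideal.mul_mem_right _ _ (Ideal.pow_mem_pow (hGenI a0 ha0) _))
    have hXq : ∃ i : Fin n, (X i : MvPolynomial (Fin n) K) ∈ q := by
      have h1 : (monomial a0 (1 : K) : MvPolynomial (Fin n) K) ∈ q :=
        hqprime.mem_of_pow_mem _ hma
      rw [monomial_eq, map_one, one_mul, Finsupp.prod] at h1
      haveI := hqprime
      obtain ⟨i, _, hi⟩ := Ideal.IsPrime.prod_mem_iff.mp h1
      exact ⟨i, hqprime.mem_of_pow_mem _ hi⟩
    obtain ⟨i, hi⟩ := hXq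
    have hXh : (X i : MvPolynomial (Fin n) K) * h ∈ I ^ (j + 1) := by
      rw [← hcol] at hi
      exact Ideal.mem_colon_span_singleton.mp hi
    have hXh0 : (X i : MvPolynomial (Fin n) K) * h ≠ 0 := mul_ne_zero (X_ne_zero i) hne0
    have hd1 := hαlowk (j + 1) (by omega) _ hXh hXh0
    have hd2 := ((isHomogeneous_X K i).mul hhom).totalDegree hXh0
    omega
  have hVk : vNumber (I ^ (j + 1)) = (j + 1) * α - 1 := by
    have hmemV : ((j + 1) * α - 1) ∈ {d | ∃ f' : MvPolynomial (Fin n) K,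
        ∃ p' ∈ Ass (I ^ (j + 1)), f'.IsHomogeneous d ∧
        (I ^ (j + 1)).colon (Ideal.span {f'}) = p'} := ⟨m, p, hAssk, hhomm, hcolonk⟩
    apply le_antisymm
    · exact Nat.sInf_le hmemV
    · obtain ⟨h, q, hq, hhom, hcol⟩ := Nat.sInf_mem (⟨_, hmemV⟩ : Set.Nonempty _)
      exact hlow _ h q hq.1 hhom hcol
  have hVAk : vNumberAt (I ^ (j + 1)) p = (j + 1) * α - 1 := by
    have hmemV : ((j + 1) * α - 1) ∈ {d | ∃ f' : MvPolynomial (Fin n) K,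
        f'.IsHomogeneous d ∧ (I ^ (j + 1)).colon (Ideal.span {f'}) = p} :=
      ⟨m, hhomm, hcolonk⟩
    apply le_antisymm
    · exact Nat.sInf_le hmemV
    · obtain ⟨h, hhom, hcol⟩ := Nat.sInf_mem (⟨_, hmemV⟩ : Set.Nonempty _)
      exact hlow _ h p hp.1 hhom hcol
  refine ⟨hAssk, ?_, by rw [hVAk, hVk]⟩
  rw [hVk]
  have h1 : 1 ≤ (j + 1) * α := Nat.one_le_iff_ne_zero.mpr (by positivity)
  rw [Nat.cast_sub h1]
  push_cast
  ring
end
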